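/- arXiv:1204.4875 — 12 statements merged into one kernel-verified Lean document; each statement's English description precedes it below -/
import Mathlib

section
/- Let h, g : I → ℝ be smooth on an open interval I with g nowhere zero, let H be an antiderivative of h on I, and let T be the antiderivative of e^{-H} with T(t₀)=0 for some t₀ ∈ I. Let u : I × ℝ → ℝ be a smooth solution of u_t + u u_x + g(t) u_{xxx} + h(t) u = 0. Define û on T(I) × ℝ by û(T(t), x) = e^{H(t)} u(t, x) and ĝ on T(I) by ĝ(T(t)) = e^{H(t)} g(t) (both well defined since T is a strictly increasing diffeomorphism onto its image). Then û is a smooth solution of û_{t̂} + û û_{x̂} + ĝ(t̂) û_{x̂x̂x̂} = 0 on T(I) × ℝ. -/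
open scoped Topology

set_option maxHeartbeats 1000000


/-- The gauge transformation t̂ = ∫ e^{-∫h dt} dt, x̂ = x, û = e^{∫h dt} u
maps any smooth solution of u_t + u u_x + g(t) u_{xxx} + h(t) u = 0 to a smooth solution
of û_t̂ + û û_x̂ + ĝ(t̂) û_x̂x̂x̂ = 0 with ĝ(T(t)) = e^{H(t)} g(t). -/
theorem stmt_0
    (I : Set ℝ) (hI : IsOpen I) (hIconv : Convex ℝ I)
    (h g : ℝ → ℝ)
    (hh : ContDiffOn ℝ (⊤ : ℕ∞) h I) (hg : ContDiffOn ℝ (⊤ : ℕ∞) g I)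
    (hg0 : ∀ t ∈ I, g t ≠ 0)
    (H : ℝ → ℝ) (hH : ∀ t ∈ I, HasDerivAt H (h t) t)
    (T : ℝ → ℝ) (hT : ∀ t ∈ I, HasDerivAt T (Real.exp (-H t)) t)
    (t₀ : ℝ) (ht₀ : t₀ ∈ I) (hT0 : T t₀ = 0)
    (u : ℝ → ℝ → ℝ)
    (hu : ContDiffOn ℝ (⊤ : ℕ∞) (fun p : ℝ × ℝ => u p.1 p.2) (I ×ˢ Set.univ))
    (hpde : ∀ t ∈ I, ∀ x : ℝ,
      deriv (fun τ => u τ x) t + u t x * deriv (fun y => u t y) x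
        + g t * iteratedDeriv 3 (fun y => u t y) x + h t * u t x = 0)
    (uh : ℝ → ℝ → ℝ)
    (huh : ∀ t ∈ I, ∀ x : ℝ, uh (T t) x = Real.exp (H t) * u t x)
    (gh : ℝ → ℝ)
    (hgh : ∀ t ∈ I, gh (T t) = Real.exp (H t) * g t) :
    ContDiffOn ℝ (⊤ : ℕ∞) (fun p : ℝ × ℝ => uh p.1 p.2) ((T '' I) ×ˢ Set.univ) ∧
    ∀ t ∈ I, ∀ x : ℝ,
      deriv (fun τ => uh τ x) (T t) + uh (T t) x * deriv (fun y => uh (T t) y) x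
        + gh (T t) * iteratedDeriv 3 (fun y => uh (T t) y) x = 0 := by
  -- H is smooth on I
  have hHs : ContDiffOn ℝ (⊤ : ℕ∞) H I := by
    rw [contDiffOn_infty_iff_deriv_of_isOpen hI]
    exact ⟨fun t ht => (hH t ht).differentiableAt.differentiableWithinAt,
      hh.congr fun t ht => (hH t ht).deriv⟩
  -- T is smooth on I
  have hTs : ContDiffOn ℝ (⊤ : ℕ∞) T I := by
    rw [contDiffOn_infty_iff_deriv_of_isOpen hI]
    refine ⟨fun t ht => (hT t ht).differentiableAt.differentiableWithinAt, ?_⟩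
    refine ContDiffOn.congr ?_ fun t ht => (hT t ht).deriv
    exact Real.contDiff_exp.comp_contDiffOn hHs.neg
  have hIopen : IsOpen (I ×ˢ (Set.univ : Set ℝ)) := hI.prod isOpen_univ
  -- Key: smoothness of uh at each point of (T '' I) ×ˢ univ
  have key : ∀ t ∈ I, ∀ x : ℝ,
      ContDiffAt ℝ (⊤ : ℕ∞) (fun p : ℝ × ℝ => uh p.1 p.2) (T t, x) := by
    intro t ht x
    have hTt : ContDiffAt ℝ (⊤ : ℕ∞) T t := hTs.contDiffAt (hI.mem_nhds ht)
    have hne : Real.exp (-H t) ≠ 0 := (Real.exp_pos _).ne'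
    have hf' : HasFDerivAt T
        ((ContinuousLinearEquiv.unitsEquivAut ℝ (Units.mk0 _ hne)) : ℝ →L[ℝ] ℝ) t :=
      (hT t ht).hasFDerivAt_equiv hne
    have hn : ((⊤ : ℕ∞) : WithTop ℕ∞) ≠ 0 := by simp
    obtain ⟨S, hSc, hSTt, hleft⟩ : ∃ S : ℝ → ℝ, ContDiffAt ℝ (⊤ : ℕ∞) S (T t) ∧
        S (T t) = t ∧ ∀ᶠ τ in 𝓝 t, S (T τ) = τ :=
      ⟨_, hTt.to_localInverse hf' hn, hTt.localInverse_apply_image hf' hn,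
        (hTt.hasStrictFDerivAt' hf' hn).eventually_left_inverse⟩
    have hmap : Filter.map T (𝓝 t) = 𝓝 (T t) :=
      (hTt.hasStrictFDerivAt' hf' hn).map_nhds_eq_of_equiv
    -- the smooth model function
    set F : ℝ × ℝ → ℝ := fun p => Real.exp (H (S p.1)) * u (S p.1) p.2 with hF
    have hq : ContDiffAt ℝ (⊤ : ℕ∞) (fun p : ℝ × ℝ => (S p.1, p.2)) (T t, x) := by
      apply ContDiffAt.prodMk
      · exact ContDiffAt.comp (g := S) (f := Prod.fst) (T t, x) hSc contDiffAt_fst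
      · exact contDiffAt_snd
    have hG : ContDiffAt ℝ (⊤ : ℕ∞)
        (fun q : ℝ × ℝ => Real.exp (H q.1) * u q.1 q.2) (t, x) := by
      have h1 : ContDiffAt ℝ (⊤ : ℕ∞) (fun q : ℝ × ℝ => Real.exp (H q.1)) (t, x) :=
        (Real.contDiff_exp.contDiffAt.comp _
          ((hHs.contDiffAt (hI.mem_nhds ht)).comp _ contDiffAt_fst))
      exact h1.mul (hu.contDiffAt (hIopen.mem_nhds ⟨ht, trivial⟩))
    have hFC : ContDiffAt ℝ (⊤ : ℕ∞) F (T t, x) := by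
      have h2 : ContDiffAt ℝ (⊤ : ℕ∞) (fun q : ℝ × ℝ => Real.exp (H q.1) * u q.1 q.2)
          ((fun p : ℝ × ℝ => (S p.1, p.2)) (T t, x)) := by
        simpa only [hSTt] using hG
      have h3 := h2.comp (T t, x) hq
      simpa [hF, Function.comp_def] using h3
    refine hFC.congr_of_eventuallyEq ?_
    -- uh = F eventually near (T t, x)
    have hV : {τ | S (T τ) = τ} ∩ I ∈ 𝓝 t :=
      Filter.inter_mem hleft (hI.mem_nhds ht)
    have hW : T '' ({τ | S (T τ) = τ} ∩ I) ∈ 𝓝 (T t) := by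
      rw [← hmap]
      exact Filter.mem_map.2 (Filter.mem_of_superset hV (Set.subset_preimage_image _ _))
    have hWx : (T '' ({τ | S (T τ) = τ} ∩ I)) ×ˢ (Set.univ : Set ℝ) ∈ 𝓝 ((T t, x) : ℝ × ℝ) :=
      prod_mem_nhds hW Filter.univ_mem
    refine Filter.eventuallyEq_of_mem hWx ?_
    rintro ⟨s, y⟩ ⟨⟨τ, ⟨hτfix, hτI⟩, rfl⟩, -⟩
    simp only [hF]
    rw [show S (T τ) = τ from hτfix, huh τ hτI]
  constructor
  · rintro ⟨s, x⟩ ⟨⟨t, ht, rfl⟩, -⟩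
    exact (key t ht x).contDiffWithinAt
  · intro t ht x
    have E := Real.exp (H t)
    have hEpos : (0:ℝ) < Real.exp (H t) := Real.exp_pos _
    -- x-direction
    have hux : ContDiff ℝ (⊤ : ℕ∞) (fun y => u t y) := by
      rw [contDiff_iff_contDiffAt]
      intro y
      exact (hu.contDiffAt (hIopen.mem_nhds ⟨ht, trivial⟩)).comp y
        (contDiffAt_const.prodMk contDiffAt_id)
    have heqx : (fun y => uh (T t) y) = fun y => Real.exp (H t) * u t y :=
      funext (huh t ht)
    have hderivx : deriv (fun y => uh (T t) y) x
        = Real.exp (H t) * deriv (fun y => u t y) x := by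
      rw [heqx]
      exact deriv_const_mul _ (hux.differentiable (by simp) |>.differentiableAt)
    have hiter : iteratedDeriv 3 (fun y => uh (T t) y) x
        = Real.exp (H t) * iteratedDeriv 3 (fun y => u t y) x := by
      rw [heqx, ← iteratedDerivWithin_univ, ← iteratedDerivWithin_univ]
      exact iteratedDerivWithin_const_mul (Set.mem_univ x) uniqueDiffOn_univ _
        ((hux.of_le (by norm_cast)).contDiffWithinAt)
    -- t-direction
    have hcuh : ContDiffAt ℝ (⊤ : ℕ∞) (fun p : ℝ × ℝ => uh p.1 p.2) (T t, x) := key t ht x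
    have hdiffuh : DifferentiableAt ℝ (fun τ => uh τ x) (T t) := by
      have : ContDiffAt ℝ (⊤ : ℕ∞) (fun τ => uh τ x) (T t) :=
        hcuh.comp (T t) (contDiffAt_id.prodMk contDiffAt_const)
      exact this.differentiableAt (by simp)
    have hD : HasDerivAt (fun τ => uh τ x) (deriv (fun τ => uh τ x) (T t)) (T t) :=
      hdiffuh.hasDerivAt
    have hut : HasDerivAt (fun τ => u τ x) (deriv (fun τ => u τ x) t) t := by
      have : ContDiffAt ℝ (⊤ : ℕ∞) (fun τ => u τ x) t :=
        (hu.contDiffAt (hIopen.mem_nhds ⟨ht, trivial⟩)).comp t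
          (contDiffAt_id.prodMk contDiffAt_const)
      exact (this.differentiableAt (by simp)).hasDerivAt
    have hk : HasDerivAt (fun τ => Real.exp (H τ) * u τ x)
        (Real.exp (H t) * h t * u t x + Real.exp (H t) * deriv (fun τ => u τ x) t) t :=
      ((hH t ht).exp).mul hut
    have hcomp : HasDerivAt (fun τ => uh (T τ) x)
        (deriv (fun τ => uh τ x) (T t) * Real.exp (-H t)) t :=
      HasDerivAt.comp t hD (hT t ht)
    have hkc : HasDerivAt (fun τ => Real.exp (H τ) * u τ x)
        (deriv (fun τ => uh τ x) (T t) * Real.exp (-H t)) t := by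
      refine hcomp.congr_of_eventuallyEq ?_
      filter_upwards [hI.mem_nhds ht] with τ hτ
      exact (huh τ hτ x).symm
    have hDeq : deriv (fun τ => uh τ x) (T t) * Real.exp (-H t)
        = Real.exp (H t) * h t * u t x + Real.exp (H t) * deriv (fun τ => u τ x) t :=
      hkc.unique hk
    have hexp : Real.exp (-H t) * Real.exp (H t) = 1 := by
      rw [← Real.exp_add]; simp
    have hDval : deriv (fun τ => uh τ x) (T t)
        = Real.exp (H t) * Real.exp (H t) * (h t * u t x + deriv (fun τ => u τ x) t) := by
      have := congrArg (· * Real.exp (H t)) hDeq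
      calc deriv (fun τ => uh τ x) (T t)
          = deriv (fun τ => uh τ x) (T t) * (Real.exp (-H t) * Real.exp (H t)) := by
            rw [hexp, mul_one]
        _ = (deriv (fun τ => uh τ x) (T t) * Real.exp (-H t)) * Real.exp (H t) := by ring
        _ = _ := by rw [hDeq]; ring
    rw [hDval, huh t ht x, hderivx, hgh t ht, hiter]
    have := hpde t ht x
    nlinarith [this, sq_nonneg (Real.exp (H t))]
end

section
/- Let I be an open interval, let h, g : I → ℝ be smooth with g nowhere zero, and let H be an antiderivative of h on I. Let δ₁, δ₂, δ₃, δ₄ be real constants with (δ₁, δ₂) ≠ (0, 0), and suppose the function δ₁ ∫ e^{-H} dt + δ₂ is nowhere zero on I; set β(t) = (δ₁ ∫ e^{-H} dt + δ₂)^{-1} and γ(t) = δ₃ ∫ β(s)² e^{-H(s)} ds + δ₄. Let α : I → ℝ be smooth with α' nowhere zero, and set λ = 1/α'. Let u : I × ℝ → ℝ be a smooth solution of u_t + u u_x + g(t) u_{xxx} + h(t) u = 0, and let ũ be the smooth function on α(I) × ℝ determined by ũ(α(t), β(t)x + γ(t)) = λ(t)(β(t) u(t,x) + β'(t) x + γ'(t)).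 Define g̃ and h̃ on α(I) by g̃(α(t)) = β(t)³ λ(t) g(t) and h̃(α(t)) = λ(t) h(t) − 2λ(t) β'(t)/β(t) − λ'(t). Then ũ is a smooth solution of ũ_{t̃} + ũ ũ_{x̃} + g̃(t̃) ũ_{x̃x̃x̃} + h̃(t̃) ũ = 0 on α(I) × ℝ. -/
open Filter Topology

/-- Local smooth inverse of a function with nonzero derivative. -/
lemma local_inv_aux (α : ℝ → ℝ) (t₀ : ℝ) (hα : ContDiffAt ℝ (⊤ : ℕ∞) α t₀)
    (ha : deriv α t₀ ≠ 0) :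
    ∃ ψ : ℝ → ℝ, ψ (α t₀) = t₀ ∧ ContDiffAt ℝ (⊤ : ℕ∞) ψ (α t₀) ∧
      HasDerivAt ψ (1 / deriv α t₀) (α t₀) ∧
      (∀ᶠ s in 𝓝 (α t₀), α (ψ s) = s) ∧ (∀ᶠ τ in 𝓝 t₀, ψ (α τ) = τ) := by
  have hle : ((⊤ : ℕ∞) : WithTop ℕ∞) ≠ 0 := by simp
  set a := deriv α t₀ with hadef
  set e : ℝ ≃L[ℝ] ℝ := ContinuousLinearEquiv.unitsEquivAut ℝ (Units.mk0 a ha) with hedef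
  have hda : HasDerivAt α a t₀ := (hα.differentiableAt hle).hasDerivAt
  have hfd : HasFDerivAt α (e : ℝ →L[ℝ] ℝ) t₀ := by
    have : (e : ℝ →L[ℝ] ℝ) = ContinuousLinearMap.smulRight (1 : ℝ →L[ℝ] ℝ) a := by
      ext
      simp [hedef, ContinuousLinearEquiv.unitsEquivAut, mul_comm]
    rw [this]
    exact hda.hasFDerivAt
  set ψ := hα.localInverse hfd hle with hψdef
  have h1 : ψ (α t₀) = t₀ := hα.localInverse_apply_image hfd hle
  have h2 : ContDiffAt ℝ (⊤ : ℕ∞) ψ (α t₀) := hα.to_localInverse hfd hle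
  have hlinv : ∀ᶠ τ in 𝓝 t₀, ψ (α τ) = τ :=
    (hα.hasStrictFDerivAt' hfd hle).eventually_left_inverse
  have hrinv : ∀ᶠ s in 𝓝 (α t₀), α (ψ s) = s :=
    (hα.hasStrictFDerivAt' hfd hle).eventually_right_inverse
  have hψd0 : HasDerivAt ψ (deriv ψ (α t₀)) (α t₀) := (h2.differentiableAt hle).hasDerivAt
  have hcomp : HasDerivAt (fun τ => ψ (α τ)) (deriv ψ (α t₀) * a) t₀ := by
    have := (hψd0.comp t₀ (by simpa using hda))
    exact this
  have hid : HasDerivAt (fun τ : ℝ => τ) (deriv ψ (α t₀) * a) t₀ :=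
    hcomp.congr_of_eventuallyEq (hlinv.mono fun τ hτ => hτ.symm)
  have hone : deriv ψ (α t₀) * a = 1 := by
    have := hid.deriv
    simpa using this.symm
  have : deriv ψ (α t₀) = 1 / a := by field_simp at hone ⊢; linarith
  exact ⟨ψ, h1, h2, this ▸ hψd0, hrinv, hlinv⟩

set_option maxHeartbeats 1000000 in
/-- Solution-mapping content of Theorem 1 (the generalized extended
equivalence group Ĝ∼₁ of the class u_t + u u_x + g(t) u_{xxx} + h(t) u = 0):
t̃ = α(t), x̃ = β(t)x + γ(t), ũ = λ(βu + β'x + γ') with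
h̃ = λh − 2λβ'/β − λ', g̃ = β³λg, where β = (δ₁∫e^{-H} + δ₂)⁻¹,
γ = δ₃∫β²e^{-H} + δ₄ and λ = 1/α'. -/
theorem stmt_1
    (I : Set ℝ) (hI : IsOpen I) (hIconv : Convex ℝ I)
    (h g : ℝ → ℝ)
    (hh : ContDiffOn ℝ (⊤ : ℕ∞) h I) (hg : ContDiffOn ℝ (⊤ : ℕ∞) g I)
    (hg0 : ∀ t ∈ I, g t ≠ 0)
    (H : ℝ → ℝ) (hH : ∀ t ∈ I, HasDerivAt H (h t) t)
    (δ₁ δ₂ δ₃ δ₄ : ℝ) (hδ : (δ₁, δ₂) ≠ (0, 0))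
    (E : ℝ → ℝ) (hE : ∀ t ∈ I, HasDerivAt E (Real.exp (-H t)) t)
    (hden : ∀ t ∈ I, δ₁ * E t + δ₂ ≠ 0)
    (β : ℝ → ℝ) (hβ : ∀ t ∈ I, β t = (δ₁ * E t + δ₂)⁻¹)
    (γ : ℝ → ℝ)
    (hγ : ∀ t ∈ I, HasDerivAt γ (δ₃ * (β t) ^ 2 * Real.exp (-H t)) t)
    (α : ℝ → ℝ) (hα : ContDiffOn ℝ (⊤ : ℕ∞) α I)
    (hα' : ∀ t ∈ I, deriv α t ≠ 0)
    (lam : ℝ → ℝ) (hlam : ∀ t ∈ I, lam t = 1 / deriv α t)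
    (u : ℝ → ℝ → ℝ)
    (hu : ContDiffOn ℝ (⊤ : ℕ∞) (fun p : ℝ × ℝ => u p.1 p.2) (I ×ˢ Set.univ))
    (hpde : ∀ t ∈ I, ∀ x : ℝ,
      deriv (fun τ => u τ x) t + u t x * deriv (fun y => u t y) x
        + g t * iteratedDeriv 3 (fun y => u t y) x + h t * u t x = 0)
    (ut : ℝ → ℝ → ℝ)
    (hut : ∀ t ∈ I, ∀ x : ℝ,
      ut (α t) (β t * x + γ t)
        = lam t * (β t * u t x + deriv β t * x + deriv γ t))
    (gt ht : ℝ → ℝ)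
    (hgt : ∀ t ∈ I, gt (α t) = (β t) ^ 3 * lam t * g t)
    (hht : ∀ t ∈ I,
      ht (α t) = lam t * h t - 2 * lam t * (deriv β t / β t) - deriv lam t) :
    ContDiffOn ℝ (⊤ : ℕ∞) (fun p : ℝ × ℝ => ut p.1 p.2) ((α '' I) ×ˢ Set.univ) ∧
    ∀ t ∈ I, ∀ x : ℝ,
      deriv (fun τ => ut τ (β t * x + γ t)) (α t)
        + ut (α t) (β t * x + γ t) * deriv (fun y => ut (α t) y) (β t * x + γ t)
        + gt (α t) * iteratedDeriv 3 (fun y => ut (α t) y) (β t * x + γ t)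
        + ht (α t) * ut (α t) (β t * x + γ t) = 0 := by
  have hle : ((⊤ : ℕ∞) : WithTop ℕ∞) ≠ 0 := by simp
  -- β is nonzero on I
  have hβ0 : ∀ t ∈ I, β t ≠ 0 := fun t ht => by
    rw [hβ t ht]; exact inv_ne_zero (hden t ht)
  -- H is smooth on I
  have hHsm : ContDiffOn ℝ (⊤ : ℕ∞) H I := by
    rw [contDiffOn_infty_iff_deriv_of_isOpen hI]
    refine ⟨fun t ht => ((hH t ht).differentiableAt).differentiableWithinAt, ?_⟩
    exact hh.congr fun t ht => (hH t ht).deriv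
  -- exp(-H) is smooth on I
  have hexpsm : ContDiffOn ℝ (⊤ : ℕ∞) (fun t => Real.exp (-H t)) I :=
    (Real.contDiff_exp.comp_contDiffOn hHsm.neg)
  -- E is smooth on I
  have hEsm : ContDiffOn ℝ (⊤ : ℕ∞) E I := by
    rw [contDiffOn_infty_iff_deriv_of_isOpen hI]
    refine ⟨fun t ht => ((hE t ht).differentiableAt).differentiableWithinAt, ?_⟩
    exact hexpsm.congr fun t ht => (hE t ht).deriv
  -- β is smooth on I
  have hβsm : ContDiffOn ℝ (⊤ : ℕ∞) β I := by
    refine ContDiffOn.congr ?_ hβ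
    exact ((hEsm.const_smul δ₁).add contDiffOn_const).inv hden
  -- derivative of β
  have hβd : ∀ t ∈ I, HasDerivAt β (-δ₁ * Real.exp (-H t) * β t ^ 2) t := by
    intro t ht
    have hev : β =ᶠ[𝓝 t] fun τ => (δ₁ * E τ + δ₂)⁻¹ :=
      Filter.eventuallyEq_of_mem (hI.mem_nhds ht) hβ
    have hdf : HasDerivAt (fun τ => (δ₁ * E τ + δ₂)⁻¹)
        (-(δ₁ * Real.exp (-H t)) / (δ₁ * E t + δ₂) ^ 2) t :=
      (((hE t ht).const_mul δ₁).add_const δ₂).inv (hden t ht)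
    have : HasDerivAt β (-(δ₁ * Real.exp (-H t)) / (δ₁ * E t + δ₂) ^ 2) t :=
      hdf.congr_of_eventuallyEq hev
    convert this using 1
    rw [hβ t ht]
    field_simp
  have hβd' : ∀ t ∈ I, deriv β t = -δ₁ * Real.exp (-H t) * β t ^ 2 :=
    fun t ht => (hβd t ht).deriv
  -- deriv β is smooth on I
  have hdβsm : ContDiffOn ℝ (⊤ : ℕ∞) (deriv β) I := by
    refine ContDiffOn.congr ?_ hβd'
    exact (contDiffOn_const.mul hexpsm).mul (hβsm.pow 2)
  -- second derivative of β
  have hβdd : ∀ t ∈ I, HasDerivAt (deriv β)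
      (-(h t) * deriv β t + 2 * (deriv β t) ^ 2 / β t) t := by
    intro t ht
    have hev : deriv β =ᶠ[𝓝 t] fun τ => -δ₁ * Real.exp (-H τ) * β τ ^ 2 :=
      Filter.eventuallyEq_of_mem (hI.mem_nhds ht) hβd'
    have hexpd : HasDerivAt (fun τ => Real.exp (-H τ)) (Real.exp (-H t) * (-h t)) t := by
      have := ((hH t ht).neg).exp
      simpa [mul_comm] using this
    have hdf : HasDerivAt (fun τ => -δ₁ * Real.exp (-H τ) * β τ ^ 2)
        ((-δ₁ * (Real.exp (-H t) * (-h t))) * β t ^ 2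
          + (-δ₁ * Real.exp (-H t)) * (2 * β t ^ 1 * (-δ₁ * Real.exp (-H t) * β t ^ 2))) t := by
      exact (hexpd.const_mul (-δ₁)).mul ((hβd t ht).pow 2)
    have h2 : HasDerivAt (deriv β)
        ((-δ₁ * (Real.exp (-H t) * (-h t))) * β t ^ 2
          + (-δ₁ * Real.exp (-H t)) * (2 * β t ^ 1 * (-δ₁ * Real.exp (-H t) * β t ^ 2))) t :=
      hdf.congr_of_eventuallyEq hev
    convert h2 using 1
    rw [hβd' t ht]
    field_simp [hβ0 t ht]
  -- derivative of γ
  have hγd' : ∀ t ∈ I, deriv γ t = δ₃ * β t ^ 2 * Real.exp (-H t) :=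
    fun t ht => (hγ t ht).deriv
  have hγsm : ContDiffOn ℝ (⊤ : ℕ∞) γ I := by
    rw [contDiffOn_infty_iff_deriv_of_isOpen hI]
    refine ⟨fun t ht => ((hγ t ht).differentiableAt).differentiableWithinAt, ?_⟩
    refine ContDiffOn.congr ?_ hγd'
    exact (contDiffOn_const.mul (hβsm.pow 2)).mul hexpsm
  have hdγsm : ContDiffOn ℝ (⊤ : ℕ∞) (deriv γ) I := by
    refine ContDiffOn.congr ?_ hγd'
    exact (contDiffOn_const.mul (hβsm.pow 2)).mul hexpsm
  -- second derivative of γ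
  have hγdd : ∀ t ∈ I, HasDerivAt (deriv γ)
      (-(h t) * deriv γ t + 2 * (deriv β t / β t) * deriv γ t) t := by
    intro t ht
    have hev : deriv γ =ᶠ[𝓝 t] fun τ => δ₃ * β τ ^ 2 * Real.exp (-H τ) :=
      Filter.eventuallyEq_of_mem (hI.mem_nhds ht) hγd'
    have hexpd : HasDerivAt (fun τ => Real.exp (-H τ)) (Real.exp (-H t) * (-h t)) t := by
      have := ((hH t ht).neg).exp
      simpa [mul_comm] using this
    have hdf : HasDerivAt (fun τ => δ₃ * β τ ^ 2 * Real.exp (-H τ))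
        ((δ₃ * (2 * β t ^ 1 * deriv β t)) * Real.exp (-H t)
          + (δ₃ * β t ^ 2) * (Real.exp (-H t) * (-h t))) t := by
      have hb : HasDerivAt β (deriv β t) t := (hβd' t ht) ▸ hβd t ht
      exact (((hb.pow 2).const_mul δ₃).mul hexpd)
    have h2 := hdf.congr_of_eventuallyEq hev
    refine h2.congr_deriv ?_
    rw [hγd' t ht, hβd' t ht]
    field_simp [hβ0 t ht]
    ring
  -- α facts
  have hαd : ∀ t ∈ I, HasDerivAt α (deriv α t) t := fun t ht =>
    ((hα.contDiffAt (hI.mem_nhds ht)).differentiableAt hle).hasDerivAt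
  have hdαsm : ContDiffOn ℝ (⊤ : ℕ∞) (deriv α) I :=
    ((contDiffOn_infty_iff_deriv_of_isOpen hI).mp hα).2
  -- lam facts
  have hlamsm : ContDiffOn ℝ (⊤ : ℕ∞) lam I := by
    refine ContDiffOn.congr ?_ hlam
    exact contDiffOn_const.div hdαsm hα'
  have hlamd : ∀ t ∈ I, HasDerivAt lam (deriv lam t) t := fun t ht =>
    ((hlamsm.contDiffAt (hI.mem_nhds ht)).differentiableAt hle).hasDerivAt
  have hlam0 : ∀ t ∈ I, lam t ≠ 0 := fun t ht => by
    rw [hlam t ht]; exact one_div_ne_zero (hα' t ht)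
  -- main pointwise statement
  have main : ∀ t₀ ∈ I,
      (∀ y₀ : ℝ, ContDiffAt ℝ (⊤ : ℕ∞) (fun p : ℝ × ℝ => ut p.1 p.2) (α t₀, y₀)) ∧
      (∀ x : ℝ,
        deriv (fun τ => ut τ (β t₀ * x + γ t₀)) (α t₀)
          + ut (α t₀) (β t₀ * x + γ t₀)
              * deriv (fun y => ut (α t₀) y) (β t₀ * x + γ t₀)
          + gt (α t₀) * iteratedDeriv 3 (fun y => ut (α t₀) y) (β t₀ * x + γ t₀)
          + ht (α t₀) * ut (α t₀) (β t₀ * x + γ t₀) = 0) := by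
    intro t₀ ht₀
    obtain ⟨ψ, hψ1, hψsm, hψd, hrinv, hlinv⟩ :=
      local_inv_aux α t₀ (hα.contDiffAt (hI.mem_nhds ht₀)) (hα' t₀ ht₀)
    set F : ℝ → ℝ → ℝ := fun s y =>
      lam (ψ s) * (β (ψ s) * u (ψ s) ((y - γ (ψ s)) / β (ψ s))
        + deriv β (ψ s) * ((y - γ (ψ s)) / β (ψ s)) + deriv γ (ψ s)) with hFdef
    have hIψ : ∀ᶠ s in 𝓝 (α t₀), ψ s ∈ I := by
      have : I ∈ 𝓝 (ψ (α t₀)) := hI.mem_nhds (by rw [hψ1]; exact ht₀)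
      exact hψsm.continuousAt.preimage_mem_nhds this
    have heq : ∀ᶠ s in 𝓝 (α t₀), ∀ y, ut s y = F s y := by
      filter_upwards [hIψ, hrinv] with s hsI hr y
      have hbne := hβ0 _ hsI
      have hx : β (ψ s) * ((y - γ (ψ s)) / β (ψ s)) + γ (ψ s) = y := by field_simp; ring
      have := hut (ψ s) hsI ((y - γ (ψ s)) / β (ψ s))
      rw [hx, hr] at this
      exact this
    constructor
    · -- smoothness at (α t₀, y₀)
      intro y₀
      have hψp : ContDiffAt ℝ (⊤ : ℕ∞) (fun p : ℝ × ℝ => ψ p.1) (α t₀, y₀) :=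
        ContDiffAt.comp (α t₀, y₀) hψsm contDiffAt_fst
      have hcompI : ∀ w : ℝ → ℝ, ContDiffOn ℝ (⊤ : ℕ∞) w I →
          ContDiffAt ℝ (⊤ : ℕ∞) (fun p : ℝ × ℝ => w (ψ p.1)) (α t₀, y₀) := by
        intro w hw
        have hw1 : ContDiffAt ℝ (⊤ : ℕ∞) w (ψ (α t₀)) := by
          rw [hψ1]; exact hw.contDiffAt (hI.mem_nhds ht₀)
        exact ContDiffAt.comp (α t₀, y₀) hw1 hψp
      have hβψ0 : β (ψ (α t₀, y₀).1) ≠ 0 := by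
        simp only [hψ1]; exact hβ0 t₀ ht₀
      have hq : ContDiffAt ℝ (⊤ : ℕ∞)
          (fun p : ℝ × ℝ => (p.2 - γ (ψ p.1)) / β (ψ p.1)) (α t₀, y₀) :=
        (contDiffAt_snd.sub (hcompI γ hγsm)).div (hcompI β hβsm) hβψ0
      have huc : ContDiffAt ℝ (⊤ : ℕ∞)
          (fun p : ℝ × ℝ => u (ψ p.1) ((p.2 - γ (ψ p.1)) / β (ψ p.1))) (α t₀, y₀) := by
        have hU : ContDiffAt ℝ (⊤ : ℕ∞) (fun p : ℝ × ℝ => u p.1 p.2)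
            (ψ (α t₀), (y₀ - γ (ψ (α t₀))) / β (ψ (α t₀))) := by
          rw [hψ1]
          exact hu.contDiffAt ((hI.prod isOpen_univ).mem_nhds ⟨ht₀, trivial⟩)
        exact hU.comp (α t₀, y₀) (hψp.prodMk hq)
      have hFsm : ContDiffAt ℝ (⊤ : ℕ∞) (fun p : ℝ × ℝ => F p.1 p.2) (α t₀, y₀) := by
        exact (hcompI lam hlamsm).mul
          ((((hcompI β hβsm).mul huc).add ((hcompI (deriv β) hdβsm).mul hq)).add
            (hcompI (deriv γ) hdγsm))
      have hev2 : ∀ᶠ p : ℝ × ℝ in 𝓝 (α t₀, y₀), ut p.1 p.2 = F p.1 p.2 := by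
        have h3 := heq.prod_inl (𝓝 y₀)
        rw [← nhds_prod_eq] at h3
        exact h3.mono fun p hp => hp p.2
      exact hFsm.congr_of_eventuallyEq hev2
    · -- the transformed PDE
      intro x
      have hb := hβ0 t₀ ht₀
      set X := β t₀ * x + γ t₀ with hXdef
      have hxX : (X - γ t₀) / β t₀ = x := by
        rw [hXdef]; field_simp; ring
      -- the slice function v and its derivatives
      set v : ℝ → ℝ := fun y => u t₀ y with hvdef
      have hv : ContDiff ℝ (⊤ : ℕ∞) v := by
        rw [contDiff_iff_contDiffAt]
        intro y
        have hU : ContDiffAt ℝ (⊤ : ℕ∞) (fun p : ℝ × ℝ => u p.1 p.2) (t₀, y) :=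
          hu.contDiffAt ((hI.prod isOpen_univ).mem_nhds ⟨ht₀, trivial⟩)
        exact hU.comp y (contDiffAt_const.prodMk contDiffAt_id)
      set d1 := deriv v with hd1def
      set d2 := deriv d1 with hd2def
      set d3 := deriv d2 with hd3def
      have hv1 : Differentiable ℝ v ∧ ContDiff ℝ (⊤ : ℕ∞) d1 := by
        rw [← contDiff_infty_iff_deriv]; exact hv
      have hv2 : Differentiable ℝ d1 ∧ ContDiff ℝ (⊤ : ℕ∞) d2 := by
        rw [← contDiff_infty_iff_deriv]; exact hv1.2
      have hv3 : Differentiable ℝ d2 ∧ ContDiff ℝ (⊤ : ℕ∞) d3 := by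
        rw [← contDiff_infty_iff_deriv]; exact hv2.2
      -- the function y ↦ ut (α t₀) y explicitly
      have hfun : (fun y => ut (α t₀) y) = fun y =>
          lam t₀ * (β t₀ * v ((y - γ t₀) / β t₀)
            + deriv β t₀ * ((y - γ t₀) / β t₀) + deriv γ t₀) := by
        funext y
        rw [heq.self_of_nhds y, hFdef]
        simp only [hψ1, hvdef]
      have hlin : ∀ y : ℝ, HasDerivAt (fun z : ℝ => (z - γ t₀) / β t₀) (1 / β t₀) y := by
        intro y
        simpa using ((hasDerivAt_id y).sub_const (γ t₀)).div_const (β t₀)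
      -- first y-derivative
      have hf0d : ∀ y, HasDerivAt (fun z =>
          lam t₀ * (β t₀ * v ((z - γ t₀) / β t₀)
            + deriv β t₀ * ((z - γ t₀) / β t₀) + deriv γ t₀))
          (lam t₀ * d1 ((y - γ t₀) / β t₀) + lam t₀ * deriv β t₀ / β t₀) y := by
        intro y
        have hvc : HasDerivAt (fun z => v ((z - γ t₀) / β t₀))
            (d1 ((y - γ t₀) / β t₀) * (1 / β t₀)) y :=
          HasDerivAt.comp y ((hv1.1 _).hasDerivAt) (hlin y)
        have := (((hvc.const_mul (β t₀)).add ((hlin y).const_mul (deriv β t₀))).add_const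
          (deriv γ t₀)).const_mul (lam t₀)
        refine this.congr_deriv ?_
        field_simp
      have hder0 : deriv (fun y => ut (α t₀) y) = fun y =>
          lam t₀ * d1 ((y - γ t₀) / β t₀) + lam t₀ * deriv β t₀ / β t₀ := by
        rw [hfun]; exact deriv_eq hf0d
      -- second y-derivative
      have hf1d : ∀ y, HasDerivAt (fun z =>
          lam t₀ * d1 ((z - γ t₀) / β t₀) + lam t₀ * deriv β t₀ / β t₀)
          (lam t₀ / β t₀ * d2 ((y - γ t₀) / β t₀)) y := by
        intro y
        have hvc : HasDerivAt (fun z => d1 ((z - γ t₀) / β t₀))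
            (d2 ((y - γ t₀) / β t₀) * (1 / β t₀)) y :=
          HasDerivAt.comp y ((hv2.1 _).hasDerivAt) (hlin y)
        have := (hvc.const_mul (lam t₀)).add_const (lam t₀ * deriv β t₀ / β t₀)
        refine this.congr_deriv ?_
        field_simp
      have hder1 : deriv (fun y =>
          lam t₀ * d1 ((y - γ t₀) / β t₀) + lam t₀ * deriv β t₀ / β t₀) = fun y =>
          lam t₀ / β t₀ * d2 ((y - γ t₀) / β t₀) := deriv_eq hf1d
      -- third y-derivative
      have hf2d : ∀ y, HasDerivAt (fun z => lam t₀ / β t₀ * d2 ((z - γ t₀) / β t₀))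
          (lam t₀ / β t₀ ^ 2 * d3 ((y - γ t₀) / β t₀)) y := by
        intro y
        have hvc : HasDerivAt (fun z => d2 ((z - γ t₀) / β t₀))
            (d3 ((y - γ t₀) / β t₀) * (1 / β t₀)) y :=
          HasDerivAt.comp y ((hv3.1 _).hasDerivAt) (hlin y)
        have := hvc.const_mul (lam t₀ / β t₀)
        refine this.congr_deriv ?_
        ring
      have hiter3 : ∀ f : ℝ → ℝ, iteratedDeriv 3 f = deriv (deriv (deriv f)) := by
        intro f
        rw [show (3 : ℕ) = 2 + 1 from rfl, iteratedDeriv_succ,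
          show (2 : ℕ) = 1 + 1 from rfl, iteratedDeriv_succ, iteratedDeriv_one]
      have hiter : iteratedDeriv 3 (fun y => ut (α t₀) y) X
          = lam t₀ / β t₀ ^ 2 * d3 x := by
        rw [hiter3, hder0, hder1, (hf2d X).deriv, hxX]
      -- values and first derivative at X
      have hval : ut (α t₀) X = lam t₀ * (β t₀ * u t₀ x + deriv β t₀ * x + deriv γ t₀) :=
        hut t₀ ht₀ x
      have hderx : deriv (fun y => ut (α t₀) y) X
          = lam t₀ * d1 x + lam t₀ * deriv β t₀ / β t₀ := by
        simp only [hder0]; rw [hxX]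
      -- two-variable derivative of u at (t₀, x)
      have hUsm : ContDiffAt ℝ (⊤ : ℕ∞) (fun p : ℝ × ℝ => u p.1 p.2) (t₀, x) :=
        hu.contDiffAt ((hI.prod isOpen_univ).mem_nhds ⟨ht₀, trivial⟩)
      set L := fderiv ℝ (fun p : ℝ × ℝ => u p.1 p.2) (t₀, x) with hLdef
      have hUd : HasFDerivAt (fun p : ℝ × ℝ => u p.1 p.2) L (t₀, x) :=
        (hUsm.differentiableAt hle).hasFDerivAt
      have hcurve1 : HasDerivAt (fun τ : ℝ => (τ, x)) ((1 : ℝ), (0 : ℝ)) t₀ :=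
        (hasDerivAt_id t₀).prodMk (hasDerivAt_const t₀ x)
      have hut1 : HasDerivAt (fun τ => u τ x) (L (1, 0)) t₀ :=
        by have := hUd.comp_hasDerivAt t₀ hcurve1; exact this
      have hUt : deriv (fun τ => u τ x) t₀ = L (1, 0) := hut1.deriv
      have hcurve2 : HasDerivAt (fun y : ℝ => (t₀, y)) ((0 : ℝ), (1 : ℝ)) x :=
        (hasDerivAt_const x t₀).prodMk (hasDerivAt_id x)
      have hux1 : HasDerivAt v (L (0, 1)) x := hUd.comp_hasDerivAt x hcurve2
      have hUx : d1 x = L (0, 1) := hux1.deriv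
      -- the curve r ↦ (X - γ r)/β r
      have hβd0 : HasDerivAt β (deriv β t₀) t₀ := (hβd' t₀ ht₀) ▸ hβd t₀ ht₀
      have hγd0 : HasDerivAt γ (deriv γ t₀) t₀ := by
        rw [hγd' t₀ ht₀]; exact hγ t₀ ht₀
      set xr : ℝ := ((0 - deriv γ t₀) * β t₀ - (X - γ t₀) * deriv β t₀) / β t₀ ^ 2
        with hxrdef
      have hxf : HasDerivAt (fun r => (X - γ r) / β r) xr t₀ :=
        ((hasDerivAt_const t₀ X).sub hγd0).div hβd0 hb
      have hcurve3 : HasDerivAt (fun r : ℝ => (r, (X - γ r) / β r)) ((1 : ℝ), xr) t₀ :=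
        (hasDerivAt_id t₀).prodMk hxf
      have hUd' : HasFDerivAt (fun p : ℝ × ℝ => u p.1 p.2) L (t₀, (X - γ t₀) / β t₀) := by
        rw [hxX]; exact hUd
      have hucurve : HasDerivAt (fun r => u r ((X - γ r) / β r)) (L (1, xr)) t₀ :=
        by have := hUd'.comp_hasDerivAt t₀ hcurve3; exact this
      have hsplit : L (1, xr) = L (1, 0) + xr * L (0, 1) := by
        have hp : ((1 : ℝ), xr) = (1, 0) + xr • ((0 : ℝ), (1 : ℝ)) := by
          simp [Prod.ext_iff]
        rw [hp, map_add, map_smul, smul_eq_mul]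
      -- derivative of the t-slice
      set Gd : ℝ := deriv lam t₀ * (β t₀ * u t₀ x + deriv β t₀ * x + deriv γ t₀)
          + lam t₀ * ((deriv β t₀ * u t₀ x + β t₀ * (L (1, 0) + xr * L (0, 1)))
            + ((-h t₀ * deriv β t₀ + 2 * deriv β t₀ ^ 2 / β t₀) * x + deriv β t₀ * xr)
            + (-h t₀ * deriv γ t₀ + 2 * (deriv β t₀ / β t₀) * deriv γ t₀)) with hGddef
      have hGd : HasDerivAt (fun r => lam r * (β r * u r ((X - γ r) / β r)
          + deriv β r * ((X - γ r) / β r) + deriv γ r)) Gd t₀ := by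
        have hraw := (hlamd t₀ ht₀).mul
          (((hβd0.mul hucurve).add ((hβdd t₀ ht₀).mul hxf)).add (hγdd t₀ ht₀))
        simp only [Pi.mul_apply, Pi.add_apply] at hraw
        rw [hxX, hsplit] at hraw
        exact hraw
      have hψlam : HasDerivAt ψ (lam t₀) (α t₀) := by
        rw [hlam t₀ ht₀]; exact hψd
      have hGdpoint : HasDerivAt (fun r => lam r * (β r * u r ((X - γ r) / β r)
          + deriv β r * ((X - γ r) / β r) + deriv γ r)) Gd (ψ (α t₀)) := by
        rw [hψ1]; exact hGd
      have hcompψ : HasDerivAt (fun s => F s X) (Gd * lam t₀) (α t₀) :=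
        HasDerivAt.comp (α t₀) hGdpoint hψlam
      have hdert : deriv (fun τ => ut τ X) (α t₀) = Gd * lam t₀ := by
        have hevX : (fun τ => ut τ X) =ᶠ[𝓝 (α t₀)] fun τ => F τ X :=
          heq.mono fun s hs => hs X
        rw [hevX.deriv_eq]
        exact hcompψ.deriv
      -- the original PDE in L-form
      have hpde0 := hpde t₀ ht₀ x
      rw [← hvdef, ← hd1def, hiter3, ← hd1def, ← hd2def, ← hd3def, hUt, hUx] at hpde0
      have hUtval : L (1, 0) = -(u t₀ x * L (0, 1) + g t₀ * d3 x + h t₀ * u t₀ x) := by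
        linarith
      -- final assembly
      rw [hdert, hval, hderx, hiter, hgt t₀ ht₀, hht t₀ ht₀, hGddef, hUtval, hxrdef,
        hXdef, ← hUx]
      field_simp
      ring
  constructor
  · rintro ⟨s, y₀⟩ ⟨⟨t₀, ht₀, rfl⟩, -⟩
    exact ((main t₀ ht₀).1 y₀).contDiffWithinAt
  · intro t htI x
    exact (main t htI).2 x
end

section
/- Let a, b, c, d, e₀, e₁, e₂ be real constants with ε := ad − bc ≠ 0 and e₂ ≠ 0. Let I be an open interval on which ct + d ≠ 0, let g : I → ℝ be smooth and nowhere zero, and let u : I × ℝ → ℝ be a smooth solution of u_t + u u_x + g(t) u_{xxx} = 0. Let ũ be the smooth function determined by ũ((at+b)/(ct+d), (e₂x + e₁t + e₀)/(ct+d)) = (e₂(ct+d)u(t,x) − e₂ c x − e₀ c + e₁ d)/ε, and define g̃ by g̃((at+b)/(ct+d)) = e₂³ g(t)/((ct+d) ε). Then ũ is a smooth solution of ũ_{t̃} + ũ ũ_{x̃} + g̃(t̃) ũ_{x̃x̃x̃} = 0 on the image region. -/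
lemma affine_hasDerivAt (α β y : ℝ) : HasDerivAt (fun z : ℝ => α * z + β) α y := by
  simpa using ((hasDerivAt_id y).const_mul α).add_const β

lemma deriv_affine_comp (w : ℝ → ℝ) (hw : Differentiable ℝ w) (A B C α β : ℝ) :
    deriv (fun y => A * w (α * y + β) + (B * y + C)) =
      fun y => A * α * deriv w (α * y + β) + (B * y * 0 + B) := by
  funext y
  have h1 : HasDerivAt (fun y => A * w (α * y + β) + (B * y + C))
      (A * (deriv w (α * y + β) * α) + B * 1) y :=
    (((hw (α*y+β)).hasDerivAt.comp y (affine_hasDerivAt α β y)).const_mul A).add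
      (((hasDerivAt_id y).const_mul B).add_const C)
  rw [h1.deriv]; ring

lemma iteratedDeriv_three (f : ℝ → ℝ) : iteratedDeriv 3 f = deriv (deriv (deriv f)) := by
  rw [show (3:ℕ) = 2+1 from rfl, iteratedDeriv_succ, show (2:ℕ) = 1+1 from rfl,
    iteratedDeriv_succ, iteratedDeriv_one]

lemma deriv3_affine_comp (w : ℝ → ℝ) (hw : ContDiff ℝ (⊤:ℕ∞) w) (A B C α β y : ℝ) :
    iteratedDeriv 3 (fun y => A * w (α * y + β) + (B * y + C)) y =
      A * α^3 * iteratedDeriv 3 w (α * y + β) := by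
  have hw1 : Differentiable ℝ w := hw.differentiable (by simp)
  have hwd : ContDiff ℝ (⊤:ℕ∞) (deriv w) := (contDiff_infty_iff_deriv.mp hw).2
  have hwd1 : Differentiable ℝ (deriv w) := hwd.differentiable (by simp)
  have hwdd : ContDiff ℝ (⊤:ℕ∞) (deriv (deriv w)) := (contDiff_infty_iff_deriv.mp hwd).2
  have hwdd1 : Differentiable ℝ (deriv (deriv w)) := hwdd.differentiable (by simp)
  rw [iteratedDeriv_three, iteratedDeriv_three]
  rw [deriv_affine_comp w hw1 A B C α β]
  have e2 : (fun y => A * α * deriv w (α*y+β) + (B*y*0 + B)) =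
      (fun y => (A*α) * deriv w (α*y+β) + ((0:ℝ)*y + B)) := by funext z; ring
  rw [e2, deriv_affine_comp (deriv w) hwd1 (A*α) 0 B α β]
  have e3 : (fun y => A * α * α * deriv (deriv w) (α*y+β) + ((0:ℝ)*y*0 + 0)) =
      (fun y => (A*α*α) * deriv (deriv w) (α*y+β) + ((0:ℝ)*y + 0)) := by funext z; ring
  rw [e3, deriv_affine_comp (deriv (deriv w)) hwdd1 (A*α*α) 0 0 α β]
  ring

set_option maxHeartbeats 1600000 in
/-- Solution-mapping content of Theorem 2 (the equivalence group G∼₀ of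
the class u_t + u u_x + g(t) u_{xxx} = 0): the fractional-linear transformations
t̃ = (at+b)/(ct+d), x̃ = (e₂x + e₁t + e₀)/(ct+d),
ũ = (e₂(ct+d)u − e₂cx − e₀c + e₁d)/ε, g̃ = (e₂³/((ct+d)ε)) g, with
ε = ad − bc ≠ 0 and e₂ ≠ 0, map smooth solutions to smooth solutions. -/
theorem stmt_2
    (a b c d e₀ e₁ e₂ ε : ℝ) (hε : ε = a * d - b * c) (hε0 : ε ≠ 0)
    (he₂ : e₂ ≠ 0)
    (I : Set ℝ) (hI : IsOpen I) (hIconv : Convex ℝ I)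
    (hcd : ∀ t ∈ I, c * t + d ≠ 0)
    (g : ℝ → ℝ) (hg : ContDiffOn ℝ (⊤ : ℕ∞) g I) (hg0 : ∀ t ∈ I, g t ≠ 0)
    (u : ℝ → ℝ → ℝ)
    (hu : ContDiffOn ℝ (⊤ : ℕ∞) (fun p : ℝ × ℝ => u p.1 p.2) (I ×ˢ Set.univ))
    (hpde : ∀ t ∈ I, ∀ x : ℝ,
      deriv (fun τ => u τ x) t + u t x * deriv (fun y => u t y) x
        + g t * iteratedDeriv 3 (fun y => u t y) x = 0)
    (ut : ℝ → ℝ → ℝ)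
    (hut : ∀ t ∈ I, ∀ x : ℝ,
      ut ((a * t + b) / (c * t + d)) ((e₂ * x + e₁ * t + e₀) / (c * t + d))
        = (e₂ * (c * t + d) * u t x - e₂ * c * x - e₀ * c + e₁ * d) / ε)
    (gt : ℝ → ℝ)
    (hgt : ∀ t ∈ I,
      gt ((a * t + b) / (c * t + d)) = e₂ ^ 3 * g t / ((c * t + d) * ε)) :
    ContDiffOn ℝ (⊤ : ℕ∞) (fun p : ℝ × ℝ => ut p.1 p.2)
      (((fun t => (a * t + b) / (c * t + d)) '' I) ×ˢ Set.univ) ∧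
    ∀ t ∈ I, ∀ x : ℝ,
      deriv (fun τ => ut τ ((e₂ * x + e₁ * t + e₀) / (c * t + d)))
          ((a * t + b) / (c * t + d))
        + ut ((a * t + b) / (c * t + d)) ((e₂ * x + e₁ * t + e₀) / (c * t + d))
          * deriv (fun y => ut ((a * t + b) / (c * t + d)) y)
            ((e₂ * x + e₁ * t + e₀) / (c * t + d))
        + gt ((a * t + b) / (c * t + d))
          * iteratedDeriv 3 (fun y => ut ((a * t + b) / (c * t + d)) y)
            ((e₂ * x + e₁ * t + e₀) / (c * t + d)) = 0 := by
  -- notation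
  set φ : ℝ → ℝ := fun t => (a * t + b) / (c * t + d) with hφdef
  set ψ : ℝ → ℝ := fun τ => (d * τ - b) / (a - c * τ) with hψdef
  set s : Set ℝ := {τ | a - c * τ ≠ 0} ∩ ψ ⁻¹' I with hsdef
  -- basic facts
  have hden : ∀ t ∈ I, a - c * φ t = ε / (c * t + d) := by
    intro t ht
    rw [hφdef]
    field_simp [hcd t ht]
    rw [hε]; ring
  have hnum : ∀ t ∈ I, d * φ t - b = ε * t / (c * t + d) := by
    intro t ht
    rw [hφdef]
    field_simp [hcd t ht]
    rw [eq_div_iff (by rw [mul_comm]; exact hcd t ht), sub_mul,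
      div_mul_cancel₀ _ (by rw [mul_comm]; exact hcd t ht), hε]; ring
  have hden0 : ∀ t ∈ I, a - c * φ t ≠ 0 := by
    intro t ht
    rw [hden t ht]
    exact div_ne_zero hε0 (hcd t ht)
  have hψφ : ∀ t ∈ I, ψ (φ t) = t := by
    intro t ht
    rw [hψdef]
    simp only
    rw [hnum t ht, hden t ht]
    rw [div_div_div_cancel_right₀ (hcd t ht) (ε * t) ε]
    exact mul_div_cancel_left₀ t hε0
  have hmem : ∀ t ∈ I, φ t ∈ s := by
    intro t ht
    exact ⟨hden0 t ht, by simp only [Set.mem_preimage, hψφ t ht]; exact ht⟩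
  have hφψ : ∀ τ ∈ s, φ (ψ τ) = τ := by
    intro τ hτ
    have h1 : a - c * τ ≠ 0 := hτ.1
    have h2 : c * ψ τ + d ≠ 0 := hcd _ hτ.2
    rw [hφdef]; simp only
    rw [hψdef] at h2 ⊢
    simp only at h2 ⊢
    field_simp at h2 ⊢
    have hd : c * (d * τ - b) + d * (a - c * τ) = ε := by rw [hε]; ring
    rw [div_eq_iff (by rw [hd]; exact hε0)]
    ring
  -- key pointwise formula
  have key : ∀ t ∈ I, ∀ y : ℝ, ut (φ t) y =
      (e₂ * (c*t+d) * u t (((c*t+d)*y - e₁*t - e₀)/e₂)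
        - e₂ * c * (((c*t+d)*y - e₁*t - e₀)/e₂) - e₀*c + e₁*d)/ε := by
    intro t ht y
    have hx := hut t ht (((c*t+d)*y - e₁*t - e₀)/e₂)
    have hYX : (e₂ * (((c*t+d)*y - e₁*t - e₀)/e₂) + e₁*t + e₀)/(c*t+d) = y := by
      rw [mul_div_cancel₀ _ he₂, show ((c*t+d)*y - e₁*t - e₀ + e₁*t + e₀) = (c*t+d)*y from by ring,
        mul_div_cancel_left₀ _ (hcd t ht)]
    rw [hYX] at hx
    exact hx
  -- smoothness of slices
  have hslice : ∀ t ∈ I, ContDiff ℝ (⊤:ℕ∞) (fun y => u t y) := by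
    intro t ht
    rw [contDiff_iff_contDiffAt]
    intro y
    have h1 : ContDiffAt ℝ (⊤:ℕ∞) (fun p : ℝ × ℝ => u p.1 p.2) (t, y) :=
      hu.contDiffAt ((hI.prod isOpen_univ).mem_nhds (by simp [ht]))
    exact h1.comp y (contDiffAt_const.prodMk contDiffAt_id)
  -- smoothness part
  have hsopen : IsOpen s := by
    have hso : IsOpen {τ : ℝ | a - c * τ ≠ 0} := by
      have : {τ : ℝ | a - c * τ ≠ 0} = (fun τ => a - c * τ) ⁻¹' {(0:ℝ)}ᶜ := rfl
      rw [this]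
      exact (isOpen_compl_singleton).preimage (by fun_prop)
    have hψc : ContinuousOn ψ {τ : ℝ | a - c * τ ≠ 0} := by
      apply ContinuousOn.div (by fun_prop) (by fun_prop)
      intro τ hτ; exact hτ
    exact hψc.isOpen_inter_preimage hso hI
  have hGsmooth : ContDiffOn ℝ (⊤:ℕ∞) (fun p : ℝ × ℝ =>
      (e₂ * (c * ψ p.1 + d) * u (ψ p.1) (((c * ψ p.1 + d) * p.2 - e₁ * ψ p.1 - e₀)/e₂)
        - e₂ * c * (((c * ψ p.1 + d) * p.2 - e₁ * ψ p.1 - e₀)/e₂) - e₀*c + e₁*d)/ε)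
      (s ×ˢ Set.univ) := by
    have hψs : ContDiffOn ℝ (⊤:ℕ∞) ψ {τ : ℝ | a - c * τ ≠ 0} := by
      rw [hψdef]
      exact ContDiffOn.div (ContDiff.contDiffOn (by fun_prop))
        (ContDiff.contDiffOn (by fun_prop)) (fun τ hτ => hτ)
    have hψp : ContDiffOn ℝ (⊤:ℕ∞) (fun p : ℝ × ℝ => ψ p.1) (s ×ˢ Set.univ) :=
      hψs.comp contDiff_fst.contDiffOn (fun p hp => hp.1.1)
    have h1 : ContDiffOn ℝ (⊤:ℕ∞) (fun p : ℝ × ℝ => c * ψ p.1 + d) (s ×ˢ Set.univ) :=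
      (contDiffOn_const.mul hψp).add contDiffOn_const
    have hXp : ContDiffOn ℝ (⊤:ℕ∞)
        (fun p : ℝ × ℝ => ((c * ψ p.1 + d) * p.2 - e₁ * ψ p.1 - e₀)/e₂) (s ×ˢ Set.univ) :=
      (((h1.mul contDiff_snd.contDiffOn).sub (contDiffOn_const.mul hψp)).sub
        contDiffOn_const).div_const e₂
    have hup : ContDiffOn ℝ (⊤:ℕ∞)
        (fun p : ℝ × ℝ => u (ψ p.1) (((c * ψ p.1 + d) * p.2 - e₁ * ψ p.1 - e₀)/e₂))
        (s ×ˢ Set.univ) :=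
      hu.comp (hψp.prodMk hXp) (fun p hp => ⟨hp.1.2, Set.mem_univ _⟩)
    exact (((((contDiffOn_const.mul h1).mul hup).sub (contDiffOn_const.mul hXp)).sub
      contDiffOn_const).add contDiffOn_const).div_const ε
  have hEq : Set.EqOn (fun p : ℝ × ℝ => ut p.1 p.2) (fun p : ℝ × ℝ =>
      (e₂ * (c * ψ p.1 + d) * u (ψ p.1) (((c * ψ p.1 + d) * p.2 - e₁ * ψ p.1 - e₀)/e₂)
        - e₂ * c * (((c * ψ p.1 + d) * p.2 - e₁ * ψ p.1 - e₀)/e₂) - e₀*c + e₁*d)/ε)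
      (s ×ˢ Set.univ) := by
    intro p hp
    have ht' : ψ p.1 ∈ I := hp.1.2
    have h := key (ψ p.1) ht' p.2
    rw [hφψ p.1 hp.1] at h
    exact h
  constructor
  · apply ((hGsmooth.congr hEq).mono)
    apply Set.prod_mono _ le_rfl
    rintro τ ⟨t, ht, rfl⟩
    exact hmem t ht
  · intro t ht x
    rw [show (a * t + b) / (c * t + d) = φ t from rfl]
    have hP : c * t + d ≠ 0 := hcd t ht
    set y₀ : ℝ := (e₂ * x + e₁ * t + e₀) / (c * t + d) with hy₀def
    have hw : ContDiff ℝ (⊤:ℕ∞) (fun y => u t y) := hslice t ht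
    have hw1 : Differentiable ℝ (fun y => u t y) := hw.differentiable (by simp)
    -- constants
    set A : ℝ := e₂ * (c*t+d) / ε with hAdef
    set α : ℝ := (c*t+d) / e₂ with hαdef
    set β : ℝ := (-(e₁*t) - e₀) / e₂ with hβdef
    set B : ℝ := -(c*(c*t+d)) / ε with hBdef
    set C : ℝ := e₁*(c*t+d) / ε with hCdef
    have harg : ∀ y : ℝ, ((c*t+d)*y - e₁*t - e₀)/e₂ = α * y + β := by
      intro y
      rw [hαdef, hβdef]
      field_simp
      ring
    have hfun : (fun y => ut (φ t) y) = fun y => A * u t (α * y + β) + (B * y + C) := by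
      funext y
      rw [key t ht y, harg y]
      generalize u t (α * y + β) = U
      rw [hAdef, hBdef, hCdef, hαdef, hβdef]
      field_simp
      ring
    have harg2 : α * y₀ + β = x := by
      rw [hαdef, hβdef, hy₀def]
      field_simp
      ring
    -- spatial derivatives
    have hderiv1 : deriv (fun y => ut (φ t) y) y₀
        = A * α * deriv (fun y => u t y) x + B := by
      rw [hfun, deriv_affine_comp _ hw1 A B C α β]
      simp only
      rw [harg2]
      ring
    have hderiv3 : iteratedDeriv 3 (fun y => ut (φ t) y) y₀
        = A * α^3 * iteratedDeriv 3 (fun y => u t y) x := by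
      rw [hfun, deriv3_affine_comp _ hw A B C α β y₀, harg2]
    -- temporal derivative
    have hy0x : ((c*t+d)*y₀ - e₁*t - e₀)/e₂ = x := by rw [harg y₀, harg2]
    have hCAt : ContDiffAt ℝ (⊤:ℕ∞) (fun p : ℝ × ℝ => u p.1 p.2) (t, x) :=
      hu.contDiffAt ((hI.prod isOpen_univ).mem_nhds (by simp [ht]))
    have hdAt : DifferentiableAt ℝ (fun p : ℝ × ℝ => u p.1 p.2) (t, x) :=
      hCAt.differentiableAt (by simp)
    set L := fderiv ℝ (fun p : ℝ × ℝ => u p.1 p.2) (t, x) with hLdef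
    have hF : HasFDerivAt (fun p : ℝ × ℝ => u p.1 p.2) L (t, x) := hdAt.hasFDerivAt
    have hUt : deriv (fun τ => u τ x) t = L (1, 0) := by
      have h := hF.comp_hasDerivAt t ((hasDerivAt_id t).prodMk (hasDerivAt_const t x))
      exact h.deriv
    have hUx : deriv (fun y => u t y) x = L (0, 1) := by
      have h := hF.comp_hasDerivAt x ((hasDerivAt_const x t).prodMk (hasDerivAt_id x))
      exact h.deriv
    set Xt : ℝ := (c * y₀ - e₁) / e₂ with hXtdef
    have hXaff : HasDerivAt (fun σ : ℝ => ((c*σ+d)*y₀ - e₁*σ - e₀)/e₂) Xt t := by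
      have h := (((((hasDerivAt_id t).const_mul c).add_const d).mul_const y₀).sub
        ((hasDerivAt_id t).const_mul e₁)).sub_const e₀ |>.div_const e₂
      refine h.congr_deriv ?_
      rw [hXtdef]; ring
    have hinner : HasDerivAt (fun σ : ℝ => (σ, ((c*σ+d)*y₀ - e₁*σ - e₀)/e₂))
        ((1 : ℝ), Xt) t := (hasDerivAt_id t).prodMk hXaff
    have hF' : HasFDerivAt (fun p : ℝ × ℝ => u p.1 p.2) L
        (t, ((c*t+d)*y₀ - e₁*t - e₀)/e₂) := by rw [hy0x]; exact hF
    have hucomp : HasDerivAt (fun σ => u σ (((c*σ+d)*y₀ - e₁*σ - e₀)/e₂)) (L (1, Xt)) t :=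
      by have h := hF'.comp_hasDerivAt t hinner; exact h
    have hL : L (1, Xt) = deriv (fun τ => u τ x) t + Xt * deriv (fun y => u t y) x := by
      have h1 : ((1:ℝ), Xt) = ((1:ℝ), (0:ℝ)) + Xt • ((0:ℝ), (1:ℝ)) := by
        simp [Prod.ext_iff]
      rw [h1, map_add, map_smul, hUt, hUx, smul_eq_mul]
    -- Hfun derivative
    have ha : HasDerivAt (fun σ : ℝ => e₂*(c*σ+d)) (e₂*c) t := by
      have h := (((hasDerivAt_id t).const_mul c).add_const d).const_mul e₂
      refine h.congr_deriv ?_; ring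
    have hHdA : HasDerivAt (fun σ => (e₂*(c*σ+d)*u σ (((c*σ+d)*y₀ - e₁*σ - e₀)/e₂)
        - e₂*c*(((c*σ+d)*y₀ - e₁*σ - e₀)/e₂) - e₀*c + e₁*d)/ε)
        ((e₂*c * u t x + e₂*(c*t+d) * (L (1, Xt)) - e₂*c*Xt)/ε) t := by
      have h := (((ha.mul hucomp).sub (hXaff.const_mul (e₂*c))).sub_const (e₀*c)).add_const
        (e₁*d) |>.div_const ε
      rw [hy0x] at h
      exact h
    have hψdA : HasDerivAt ψ ((c*t+d)^2/ε) (φ t) := by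
      have h1 : HasDerivAt (fun τ : ℝ => d*τ - b) (d*1) (φ t) :=
        ((hasDerivAt_id (φ t)).const_mul d).sub_const b
      have h2 : HasDerivAt (fun τ : ℝ => a - c*τ) (0 - c*1) (φ t) :=
        (hasDerivAt_const (φ t) a).sub ((hasDerivAt_id (φ t)).const_mul c)
      have h3 := h1.div h2 (hden0 t ht)
      rw [hψdef]
      refine h3.congr_deriv ?_
      rw [hnum t ht, hden t ht]
      field_simp
      ring
    have hHdA' : HasDerivAt (fun σ => (e₂*(c*σ+d)*u σ (((c*σ+d)*y₀ - e₁*σ - e₀)/e₂)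
        - e₂*c*(((c*σ+d)*y₀ - e₁*σ - e₀)/e₂) - e₀*c + e₁*d)/ε)
        ((e₂*c * u t x + e₂*(c*t+d) * (L (1, Xt)) - e₂*c*Xt)/ε) (ψ (φ t)) := by
      rw [hψφ t ht]; exact hHdA
    have hchain := hHdA'.comp (φ t) hψdA
    have hev : (fun τ => ut τ y₀) =ᶠ[nhds (φ t)]
        (fun τ => (e₂*(c*ψ τ+d)*u (ψ τ) (((c*ψ τ+d)*y₀ - e₁*ψ τ - e₀)/e₂)
          - e₂*c*(((c*ψ τ+d)*y₀ - e₁*ψ τ - e₀)/e₂) - e₀*c + e₁*d)/ε) := by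
      filter_upwards [hsopen.mem_nhds (hmem t ht)] with τ hτ
      exact hEq (Set.mk_mem_prod hτ (Set.mem_univ y₀))
    have hT1 : deriv (fun τ => ut τ y₀) (φ t)
        = (e₂*c * u t x + e₂*(c*t+d) * (L (1, Xt)) - e₂*c*Xt)/ε * ((c*t+d)^2/ε) := by
      rw [hev.deriv_eq]
      exact hchain.deriv
    -- assemble
    have hval : ut (φ t) y₀ = (e₂ * (c * t + d) * u t x - e₂ * c * x - e₀ * c + e₁ * d) / ε :=
      hut t ht x
    rw [hT1, hval, hderiv1, hderiv3, hgt t ht, hL]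
    have hUtval : deriv (fun τ => u τ x) t
        = -(u t x * deriv (fun y => u t y) x + g t * iteratedDeriv 3 (fun y => u t y) x) := by
      linarith [hpde t ht x]
    rw [hUtval, hAdef, hBdef, hαdef, hXtdef, hy₀def]
    field_simp [hP, hε0, he₂]
    ring
end

section
/- Let I be an open interval and let g : I → ℝ be smooth and everywhere positive, and set h = −g'/g. Let G be an antiderivative of g on I, and let u : I × ℝ → ℝ be a smooth solution of u_t + u u_x + g(t) u_{xxx} + h(t) u = 0. Define û on G(I) × ℝ by û(G(t), x) = u(t,x)/g(t) (well defined since G is a strictly increasing diffeomorphism onto its image). Then û is a smooth solution of the constant coefficient KdV equation û_{t̂} + û û_{x̂} + û_{x̂x̂x̂} = 0 on G(I) × ℝ. -/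
open Topology Filter


/-- For g smooth and positive and h = −g'/g, the transformation
t̂ = G(t) (G an antiderivative of g), x̂ = x, û = u/g maps smooth solutions of
u_t + u u_x + g(t) u_{xxx} + h(t) u = 0 to smooth solutions of the constant
coefficient KdV equation û_t̂ + û û_x̂ + û_x̂x̂x̂ = 0. -/
theorem stmt_4
    (I : Set ℝ) (hI : IsOpen I) (hIconv : Convex ℝ I)
    (g : ℝ → ℝ) (hg : ContDiffOn ℝ (⊤ : ℕ∞) g I) (hgpos : ∀ t ∈ I, 0 < g t)
    (h : ℝ → ℝ) (hh : ∀ t ∈ I, h t = -(deriv g t) / g t)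
    (G : ℝ → ℝ) (hG : ∀ t ∈ I, HasDerivAt G (g t) t)
    (u : ℝ → ℝ → ℝ)
    (hu : ContDiffOn ℝ (⊤ : ℕ∞) (fun p : ℝ × ℝ => u p.1 p.2) (I ×ˢ Set.univ))
    (hpde : ∀ t ∈ I, ∀ x : ℝ,
      deriv (fun τ => u τ x) t + u t x * deriv (fun y => u t y) x
        + g t * iteratedDeriv 3 (fun y => u t y) x + h t * u t x = 0)
    (uh : ℝ → ℝ → ℝ)
    (huh : ∀ t ∈ I, ∀ x : ℝ, uh (G t) x = u t x / g t) :
    ContDiffOn ℝ (⊤ : ℕ∞) (fun p : ℝ × ℝ => uh p.1 p.2) ((G '' I) ×ˢ Set.univ) ∧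
    ∀ t ∈ I, ∀ x : ℝ,
      deriv (fun τ => uh τ x) (G t) + uh (G t) x * deriv (fun y => uh (G t) y) x
        + iteratedDeriv 3 (fun y => uh (G t) y) x = 0 := by
  -- G is smooth on I
  have cGOn : ContDiffOn ℝ (⊤ : ℕ∞) G I := by
    rw [show ((⊤ : ℕ∞) : WithTop ℕ∞) = (⊤ : ℕ∞) from rfl]
    refine (contDiffOn_infty_iff_deriv_of_isOpen hI).2 ⟨?_, ?_⟩
    · exact fun t ht => ((hG t ht).differentiableAt).differentiableWithinAt
    · exact hg.congr fun t ht => (hG t ht).deriv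
  -- main pointwise statement
  have main : ∀ t₀ ∈ I, ∀ x₀ : ℝ,
      ContDiffAt ℝ (⊤ : ℕ∞) (fun p : ℝ × ℝ => uh p.1 p.2) (G t₀, x₀) ∧
      deriv (fun τ => uh τ x₀) (G t₀)
        + uh (G t₀) x₀ * deriv (fun y => uh (G t₀) y) x₀
        + iteratedDeriv 3 (fun y => uh (G t₀) y) x₀ = 0 := by
    intro t₀ ht₀ x₀
    have hgpos₀ := hgpos t₀ ht₀
    have hne : g t₀ ≠ 0 := hgpos₀.ne'
    have cG : ContDiffAt ℝ (⊤ : ℕ∞) G t₀ := cGOn.contDiffAt (hI.mem_nhds ht₀)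
    -- local inverse of G
    set f' : ℝ ≃L[ℝ] ℝ := ContinuousLinearEquiv.unitsEquivAut ℝ (Units.mk0 (g t₀) hne) with hf'def
    have h1top : ((⊤ : ℕ∞) : WithTop ℕ∞) ≠ 0 := by
      simp
    have hf' : HasFDerivAt G (f' : ℝ →L[ℝ] ℝ) t₀ := by
      have heq : (f' : ℝ →L[ℝ] ℝ) = ContinuousLinearMap.smulRight (1 : ℝ →L[ℝ] ℝ) (g t₀) := by
        ext x
        simp [hf'def, ContinuousLinearEquiv.unitsEquivAut_apply, mul_comm]
      rw [heq]
      exact (hG t₀ ht₀).hasFDerivAt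
    have hstrict : HasStrictFDerivAt G (f' : ℝ →L[ℝ] ℝ) t₀ :=
      cG.hasStrictFDerivAt' hf' h1top
    set Φ : ℝ → ℝ := hstrict.localInverse G f' t₀ with hΦdef
    have hΦGt : Φ (G t₀) = t₀ := hstrict.localInverse_apply_image
    have cΦ : ContDiffAt ℝ (⊤ : ℕ∞) Φ (G t₀) := cG.to_localInverse hf' h1top
    have hleft : ∀ᶠ x in 𝓝 t₀, Φ (G x) = x := hstrict.eventually_left_inverse
    have hright : ∀ᶠ s in 𝓝 (G t₀), G (Φ s) = s := hstrict.eventually_right_inverse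
    have hsdG : HasStrictDerivAt G (g t₀) t₀ := cG.hasStrictDerivAt' (hG t₀ ht₀) h1top
    have hΦd : HasDerivAt Φ (g t₀)⁻¹ (G t₀) :=
      (hsdG.to_local_left_inverse hne hleft).hasDerivAt
    have hΦI : ∀ᶠ s in 𝓝 (G t₀), Φ s ∈ I := by
      have : ContinuousAt Φ (G t₀) := cΦ.continuousAt
      have := this.preimage_mem_nhds (hI.mem_nhds (by rw [hΦGt]; exact ht₀))
      exact this
    -- eventual description of uh
    have hev2 : ∀ᶠ s in 𝓝 (G t₀), ∀ x : ℝ, uh s x = u (Φ s) x / g (Φ s) := by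
      filter_upwards [hΦI, hright] with s hsI hGs x
      have := huh (Φ s) hsI x
      rwa [hGs] at this
    -- smoothness of u at (t₀, x₀)
    have hP : ContDiffAt ℝ (⊤ : ℕ∞) (fun p : ℝ × ℝ => u p.1 p.2) (t₀, x₀) :=
      hu.contDiffAt ((hI.prod isOpen_univ).mem_nhds ⟨ht₀, trivial⟩)
    have hgc : ContDiffAt ℝ (⊤ : ℕ∞) g t₀ := hg.contDiffAt (hI.mem_nhds ht₀)
    -- ContDiffAt of uh at (G t₀, x₀)
    have hΦ1 : ContDiffAt ℝ (⊤ : ℕ∞) (fun p : ℝ × ℝ => (Φ p.1, p.2)) (G t₀, x₀) :=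
      ContDiffAt.prodMk (cΦ.comp ((G t₀, x₀) : ℝ × ℝ) contDiffAt_fst) contDiffAt_snd
    have hP2 : ContDiffAt ℝ (⊤ : ℕ∞) (fun p : ℝ × ℝ => u p.1 p.2) (Φ (G t₀), x₀) := by
      rw [hΦGt]; exact hP
    have hnum : ContDiffAt ℝ (⊤ : ℕ∞) (fun p : ℝ × ℝ => u (Φ p.1) p.2) (G t₀, x₀) :=
      by have := hP2.comp ((G t₀, x₀) : ℝ × ℝ) hΦ1; exact this
    have hgc2 : ContDiffAt ℝ (⊤ : ℕ∞) g (Φ (G t₀)) := by rw [hΦGt]; exact hgc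
    have hden : ContDiffAt ℝ (⊤ : ℕ∞) (fun p : ℝ × ℝ => g (Φ p.1)) (G t₀, x₀) :=
      hgc2.comp ((G t₀, x₀) : ℝ × ℝ) (cΦ.comp ((G t₀, x₀) : ℝ × ℝ) contDiffAt_fst)
    have hdenne : g (Φ (G t₀)) ≠ 0 := by rw [hΦGt]; exact hne
    have hev2d : (fun p : ℝ × ℝ => uh p.1 p.2)
        =ᶠ[𝓝 (G t₀, x₀)] (fun p : ℝ × ℝ => u (Φ p.1) p.2 / g (Φ p.1)) := by
      have h1 : (Prod.fst : ℝ × ℝ → ℝ) ⁻¹'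
          {s : ℝ | ∀ x : ℝ, uh s x = u (Φ s) x / g (Φ s)} ∈ 𝓝 ((G t₀, x₀) : ℝ × ℝ) :=
        continuous_fst.continuousAt.preimage_mem_nhds hev2
      filter_upwards [h1] with p hp using hp p.2
    have cuh : ContDiffAt ℝ (⊤ : ℕ∞) (fun p : ℝ × ℝ => uh p.1 p.2) (G t₀, x₀) :=
      ((hnum.div hden hdenne)).congr_of_eventuallyEq hev2d
    refine ⟨cuh, ?_⟩
    -- slice smoothness in x
    have hslice : ContDiff ℝ (⊤ : ℕ∞) (fun y => u t₀ y) := by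
      rw [← contDiffOn_univ]
      exact hu.comp ((contDiff_const.prodMk contDiff_id).contDiffOn)
        (fun y _ => ⟨ht₀, trivial⟩)
    -- slice smoothness in t
    have hsec_t : ContDiffAt ℝ (⊤ : ℕ∞) (fun τ => u τ x₀) t₀ :=
      hP.comp t₀ (contDiffAt_id.prodMk contDiffAt_const)
    -- time derivative computation
    have hut : HasDerivAt (fun τ => u τ x₀) (deriv (fun τ => u τ x₀) t₀) t₀ :=
      (hsec_t.differentiableAt h1top).hasDerivAt
    have hgt : HasDerivAt g (deriv g t₀) t₀ := (hgc.differentiableAt h1top).hasDerivAt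
    have hψ : HasDerivAt (fun τ => u τ x₀ / g τ)
        ((deriv (fun τ => u τ x₀) t₀ * g t₀ - u t₀ x₀ * deriv g t₀) / g t₀ ^ 2) t₀ :=
      hut.div hgt hne
    have hψ' : HasDerivAt (fun τ => u τ x₀ / g τ)
        ((deriv (fun τ => u τ x₀) t₀ * g t₀ - u t₀ x₀ * deriv g t₀) / g t₀ ^ 2) (Φ (G t₀)) := by
      rw [hΦGt]; exact hψ
    have hcomp : HasDerivAt (fun s => u (Φ s) x₀ / g (Φ s))
        ((deriv (fun τ => u τ x₀) t₀ * g t₀ - u t₀ x₀ * deriv g t₀) / g t₀ ^ 2 * (g t₀)⁻¹)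
        (G t₀) := HasDerivAt.comp _ hψ' hΦd
    have hev1d : (fun s => uh s x₀) =ᶠ[𝓝 (G t₀)] (fun s => u (Φ s) x₀ / g (Φ s)) :=
      hev2.mono fun s hs => hs x₀
    have hderiv_t : deriv (fun τ => uh τ x₀) (G t₀)
        = (deriv (fun τ => u τ x₀) t₀ * g t₀ - u t₀ x₀ * deriv g t₀) / g t₀ ^ 2 * (g t₀)⁻¹ :=
      (hcomp.congr_of_eventuallyEq hev1d).deriv
    -- spatial derivatives
    have hslicefun : (fun y => uh (G t₀) y) = fun y => (g t₀)⁻¹ * u t₀ y := by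
      funext y
      rw [huh t₀ ht₀ y, div_eq_inv_mul]
    have hderiv_x : deriv (fun y => uh (G t₀) y) x₀
        = (g t₀)⁻¹ * deriv (fun y => u t₀ y) x₀ := by
      rw [hslicefun, deriv_const_mul _ ((hslice.differentiable h1top) x₀)]
    have hderiv_x3 : iteratedDeriv 3 (fun y => uh (G t₀) y) x₀
        = (g t₀)⁻¹ * iteratedDeriv 3 (fun y => u t₀ y) x₀ := by
      have h3 : ContDiff ℝ (3 : ℕ) (fun y => u t₀ y) := hslice.of_le (WithTop.coe_le_coe.2 le_top)
      rw [hslicefun]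
      have : (fun y => (g t₀)⁻¹ * u t₀ y) = fun y => (g t₀)⁻¹ • u t₀ y := by
        funext y; rw [smul_eq_mul]
      rw [this, iteratedDeriv_eq_iteratedFDeriv, iteratedDeriv_eq_iteratedFDeriv,
        iteratedFDeriv_const_smul_apply' h3.contDiffAt]
      simp
    -- conclude using the PDE
    have hp := hpde t₀ ht₀ x₀
    rw [hh t₀ ht₀] at hp
    rw [hderiv_t, hderiv_x, hderiv_x3, huh t₀ ht₀ x₀]
    set A := deriv (fun τ => u τ x₀) t₀
    set B := deriv (fun y => u t₀ y) x₀
    set C := iteratedDeriv 3 (fun y => u t₀ y) x₀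
    set gv := g t₀
    set gd := deriv g t₀
    set uv := u t₀ x₀
    field_simp at hp ⊢
    linear_combination hp
  constructor
  · rintro ⟨s, x⟩ ⟨⟨t₀, ht₀, rfl⟩, -⟩
    exact (main t₀ ht₀ x).1.contDiffWithinAt
  · intro t ht x
    exact (main t ht x).2
end

section
/- Let I be an open interval and let g : I → ℝ be smooth and everywhere positive, let G be an antiderivative of g with G everywhere positive on I, and set h = g/(2G) − g'/g. Let u : I × ℝ → ℝ be a smooth solution of u_t + u u_x + g(t) u_{xxx} + h(t) u = 0. Define û on the image region by û(2√(G(t)), x) = (√(G(t))/g(t)) u(t,x). Then û is a smooth solution of û_{t̂} + û û_{x̂} + (t̂/2) û_{x̂x̂x̂} = 0, an equation of the class with coefficient linear in time. -/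
open Filter Topology Set

lemma loc_inv (I : Set ℝ) (hI : IsOpen I)
    (g G : ℝ → ℝ) (hg : ContDiffOn ℝ (⊤ : ℕ∞) g I) (hgpos : ∀ t ∈ I, 0 < g t)
    (hG : ∀ t ∈ I, HasDerivAt G (g t) t) (hGpos : ∀ t ∈ I, 0 < G t)
    (t₀ : ℝ) (ht₀ : t₀ ∈ I) :
    ∃ ψ : ℝ → ℝ, ContDiffAt ℝ (⊤ : ℕ∞) ψ (2 * Real.sqrt (G t₀)) ∧
      ψ (2 * Real.sqrt (G t₀)) = t₀ ∧
      HasDerivAt ψ (Real.sqrt (G t₀) / g t₀) (2 * Real.sqrt (G t₀)) ∧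
      (∀ᶠ s in 𝓝 (2 * Real.sqrt (G t₀)), ψ s ∈ I ∧ 2 * Real.sqrt (G (ψ s)) = s) := by
  have hGt : 0 < G t₀ := hGpos t₀ ht₀
  have hgt : 0 < g t₀ := hgpos t₀ ht₀
  have hsne : Real.sqrt (G t₀) ≠ 0 := ne_of_gt (Real.sqrt_pos.2 hGt)
  have hgne : g t₀ ≠ 0 := ne_of_gt hgt
  -- G is smooth on I
  have hGcd : ContDiffOn ℝ (⊤ : ℕ∞) G I := by
    refine (contDiffOn_infty_iff_deriv_of_isOpen hI).2 ⟨?_, ?_⟩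
    · exact fun t ht => (hG t ht).differentiableAt.differentiableWithinAt
    · exact hg.congr fun t ht => (hG t ht).deriv
  set T : ℝ → ℝ := fun t => 2 * Real.sqrt (G t) with hT
  have hTcd : ContDiffAt ℝ (⊤ : ℕ∞) T t₀ := by
    exact contDiffAt_const.mul ((Real.contDiffAt_sqrt (ne_of_gt hGt)).comp t₀
      (hGcd.contDiffAt (hI.mem_nhds ht₀)))
  set c : ℝ := g t₀ / Real.sqrt (G t₀) with hc
  have hcne : c ≠ 0 := div_ne_zero hgne hsne
  have hTd : HasDerivAt T c t₀ := by
    have h1 := ((hG t₀ ht₀).sqrt (ne_of_gt hGt)).const_mul 2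
    refine h1.congr_deriv ?_
    rw [hc]; field_simp
  have hFd : HasFDerivAt T
      (ContinuousLinearEquiv.unitsEquivAut ℝ (Units.mk0 c hcne) : ℝ →L[ℝ] ℝ) t₀ :=
    hTd.hasFDerivAt_equiv hcne
  have hn : ((⊤ : ℕ∞) : WithTop ℕ∞) ≠ 0 := by
    simp
  set ψ : ℝ → ℝ := hTcd.localInverse hFd hn with hψ
  have hsf := hTcd.hasStrictFDerivAt' hFd hn
  have hψcd : ContDiffAt ℝ (⊤ : ℕ∞) ψ (T t₀) := hTcd.to_localInverse hFd hn
  have hψ0 : ψ (T t₀) = t₀ := hTcd.localInverse_apply_image hFd hn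
  have hrinv : ∀ᶠ s in 𝓝 (T t₀), T (ψ s) = s := hsf.eventually_right_inverse
  have hcont : ContinuousAt ψ (T t₀) := hψcd.continuousAt
  have hmem : ∀ᶠ s in 𝓝 (T t₀), ψ s ∈ I := by
    have : I ∈ 𝓝 (ψ (T t₀)) := by rw [hψ0]; exact hI.mem_nhds ht₀
    exact hcont.eventually_mem this
  have hψd : HasDerivAt ψ (Real.sqrt (G t₀) / g t₀) (T t₀) := by
    have hTd' : HasDerivAt T c (ψ (T t₀)) := by rw [hψ0]; exact hTd
    have := HasDerivAt.of_local_left_inverse hcont hTd' hcne hrinv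
    rwa [hc, inv_div] at this
  exact ⟨ψ, hψcd, hψ0, hψd, hmem.and hrinv⟩


/-- For g smooth and positive, G a positive antiderivative of g, and
h = g/(2G) − g'/g, the transformation t̂ = 2√G(t), x̂ = x, û = (√G/g) u maps smooth
solutions of u_t + u u_x + g(t) u_{xxx} + h(t) u = 0 to smooth solutions of
û_t̂ + û û_x̂ + (t̂/2) û_x̂x̂x̂ = 0. -/
theorem stmt_5
    (I : Set ℝ) (hI : IsOpen I) (hIconv : Convex ℝ I)
    (g : ℝ → ℝ) (hg : ContDiffOn ℝ (⊤ : ℕ∞) g I) (hgpos : ∀ t ∈ I, 0 < g t)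
    (G : ℝ → ℝ) (hG : ∀ t ∈ I, HasDerivAt G (g t) t) (hGpos : ∀ t ∈ I, 0 < G t)
    (h : ℝ → ℝ) (hh : ∀ t ∈ I, h t = g t / (2 * G t) - deriv g t / g t)
    (u : ℝ → ℝ → ℝ)
    (hu : ContDiffOn ℝ (⊤ : ℕ∞) (fun p : ℝ × ℝ => u p.1 p.2) (I ×ˢ Set.univ))
    (hpde : ∀ t ∈ I, ∀ x : ℝ,
      deriv (fun τ => u τ x) t + u t x * deriv (fun y => u t y) x
        + g t * iteratedDeriv 3 (fun y => u t y) x + h t * u t x = 0)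
    (uh : ℝ → ℝ → ℝ)
    (huh : ∀ t ∈ I, ∀ x : ℝ,
      uh (2 * Real.sqrt (G t)) x = (Real.sqrt (G t) / g t) * u t x) :
    ContDiffOn ℝ (⊤ : ℕ∞) (fun p : ℝ × ℝ => uh p.1 p.2)
      (((fun t => 2 * Real.sqrt (G t)) '' I) ×ˢ Set.univ) ∧
    ∀ t ∈ I, ∀ x : ℝ,
      deriv (fun τ => uh τ x) (2 * Real.sqrt (G t))
        + uh (2 * Real.sqrt (G t)) x
          * deriv (fun y => uh (2 * Real.sqrt (G t)) y) x
        + (2 * Real.sqrt (G t) / 2)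
          * iteratedDeriv 3 (fun y => uh (2 * Real.sqrt (G t)) y) x = 0 := by
  constructor
  · -- smoothness
    rintro ⟨s₀, x₀⟩ ⟨⟨t₀, ht₀, rfl⟩, -⟩
    obtain ⟨ψ, hψcd, hψ0, hψd, hψev⟩ := loc_inv I hI g G hg hgpos hG hGpos t₀ ht₀
    have hgt : 0 < g t₀ := hgpos t₀ ht₀
    have hGt : 0 < G t₀ := hGpos t₀ ht₀
    have hucd : ContDiffAt ℝ (⊤ : ℕ∞) (fun p : ℝ × ℝ => u p.1 p.2) (t₀, x₀) :=
      hu.contDiffAt ((hI.prod isOpen_univ).mem_nhds ⟨ht₀, trivial⟩)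
    have hψp : ContDiffAt ℝ (⊤ : ℕ∞) (fun p : ℝ × ℝ => ψ p.1)
        (2 * Real.sqrt (G t₀), x₀) :=
      hψcd.comp (2 * Real.sqrt (G t₀), x₀) contDiff_fst.contDiffAt
    have hFt : ContDiffAt ℝ (⊤ : ℕ∞) (fun t => Real.sqrt (G t) / g t) t₀ := by
      have hGcd : ContDiffOn ℝ (⊤ : ℕ∞) G I := by
        refine (contDiffOn_infty_iff_deriv_of_isOpen hI).2 ⟨?_, ?_⟩
        · exact fun t ht => (hG t ht).differentiableAt.differentiableWithinAt
        · exact hg.congr fun t ht => (hG t ht).deriv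
      exact ((Real.contDiffAt_sqrt (ne_of_gt hGt)).comp t₀
        (hGcd.contDiffAt (hI.mem_nhds ht₀))).div (hg.contDiffAt (hI.mem_nhds ht₀))
        (ne_of_gt hgt)
    have hFt' : ContDiffAt ℝ (⊤ : ℕ∞) (fun t => Real.sqrt (G t) / g t)
        (ψ (2 * Real.sqrt (G t₀))) := by rw [hψ0]; exact hFt
    have hW1 : ContDiffAt ℝ (⊤ : ℕ∞)
        (fun p : ℝ × ℝ => Real.sqrt (G (ψ p.1)) / g (ψ p.1))
        (2 * Real.sqrt (G t₀), x₀) :=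
      by exact hFt'.comp (2 * Real.sqrt (G t₀), x₀) hψp
    have hpair : ContDiffAt ℝ (⊤ : ℕ∞) (fun p : ℝ × ℝ => (ψ p.1, p.2))
        (2 * Real.sqrt (G t₀), x₀) := hψp.prodMk contDiff_snd.contDiffAt
    have hucd' : ContDiffAt ℝ (⊤ : ℕ∞) (fun p : ℝ × ℝ => u p.1 p.2)
        (ψ (2 * Real.sqrt (G t₀)), x₀) := by rw [hψ0]; exact hucd
    have hW2 : ContDiffAt ℝ (⊤ : ℕ∞) (fun p : ℝ × ℝ => u (ψ p.1) p.2)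
        (2 * Real.sqrt (G t₀), x₀) :=
      by exact hucd'.comp (2 * Real.sqrt (G t₀), x₀) hpair
    have hW := hW1.mul hW2
    have hfst : Tendsto (Prod.fst : ℝ × ℝ → ℝ) (𝓝 (2 * Real.sqrt (G t₀), x₀))
        (𝓝 (2 * Real.sqrt (G t₀))) := continuousAt_fst
    have hev2 : (fun p : ℝ × ℝ => uh p.1 p.2) =ᶠ[𝓝 (2 * Real.sqrt (G t₀), x₀)]
        fun p : ℝ × ℝ => Real.sqrt (G (ψ p.1)) / g (ψ p.1) * u (ψ p.1) p.2 := by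
      refine (hfst.eventually hψev).mono fun p hp => ?_
      have := huh (ψ p.1) hp.1 p.2
      rwa [hp.2] at this
    exact (hW.congr_of_eventuallyEq hev2).contDiffWithinAt
  · -- the PDE
    intro t₀ ht₀ x
    obtain ⟨ψ, hψcd, hψ0, hψd, hψev⟩ := loc_inv I hI g G hg hgpos hG hGpos t₀ ht₀
    have hgt : 0 < g t₀ := hgpos t₀ ht₀
    have hGt : 0 < G t₀ := hGpos t₀ ht₀
    have hsp : 0 < Real.sqrt (G t₀) := Real.sqrt_pos.2 hGt
    have hsne : Real.sqrt (G t₀) ≠ 0 := ne_of_gt hsp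
    have hgne : g t₀ ≠ 0 := ne_of_gt hgt
    have hle : ((⊤ : ℕ∞) : WithTop ℕ∞) ≠ 0 := by
      simp
    have h3le : ((3 : ℕ) : WithTop ℕ∞) ≤ ((⊤ : ℕ∞) : WithTop ℕ∞) := by
      norm_cast
    -- t-derivative
    have hevx : (fun τ => uh τ x)
        =ᶠ[𝓝 (2 * Real.sqrt (G t₀))]
        (fun τ => Real.sqrt (G (ψ τ)) / g (ψ τ) * u (ψ τ) x) := by
      refine hψev.mono fun s hs => ?_
      have := huh (ψ s) hs.1 x
      rwa [hs.2] at this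
    have hsq : HasDerivAt (fun t => Real.sqrt (G t)) (g t₀ / (2 * Real.sqrt (G t₀))) t₀ :=
      (hG t₀ ht₀).sqrt (ne_of_gt hGt)
    have hgd : HasDerivAt g (deriv g t₀) t₀ :=
      ((hg.contDiffAt (hI.mem_nhds ht₀)).differentiableAt hle).hasDerivAt
    have hFd : HasDerivAt (fun t => Real.sqrt (G t) / g t)
        ((g t₀ / (2 * Real.sqrt (G t₀)) * g t₀ - Real.sqrt (G t₀) * deriv g t₀) / g t₀ ^ 2)
        t₀ := hsq.div hgd hgne
    have hutdiff : DifferentiableAt ℝ (fun t => u t x) t₀ := by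
      have hcd : ContDiffAt ℝ (⊤ : ℕ∞) (fun p : ℝ × ℝ => u p.1 p.2) (t₀, x) :=
        hu.contDiffAt ((hI.prod isOpen_univ).mem_nhds ⟨ht₀, trivial⟩)
      have h2 : ContDiffAt ℝ (⊤ : ℕ∞) (fun t => u t x) t₀ :=
        hcd.comp t₀ (contDiffAt_id.prodMk contDiffAt_const)
      exact h2.differentiableAt hle
    have hut : HasDerivAt (fun t => u t x) (deriv (fun τ => u τ x) t₀) t₀ :=
      hutdiff.hasDerivAt
    have hprod : HasDerivAt (fun t => Real.sqrt (G t) / g t * u t x)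
        ((g t₀ / (2 * Real.sqrt (G t₀)) * g t₀ - Real.sqrt (G t₀) * deriv g t₀) / g t₀ ^ 2
            * u t₀ x
          + Real.sqrt (G t₀) / g t₀ * deriv (fun τ => u τ x) t₀) t₀ := hFd.mul hut
    have hprod' : HasDerivAt (fun t => Real.sqrt (G t) / g t * u t x)
        ((g t₀ / (2 * Real.sqrt (G t₀)) * g t₀ - Real.sqrt (G t₀) * deriv g t₀) / g t₀ ^ 2
            * u t₀ x
          + Real.sqrt (G t₀) / g t₀ * deriv (fun τ => u τ x) t₀)
        (ψ (2 * Real.sqrt (G t₀))) := by rw [hψ0]; exact hprod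
    have hcomp := hprod'.comp (2 * Real.sqrt (G t₀)) hψd
    have h1 : deriv (fun τ => uh τ x) (2 * Real.sqrt (G t₀)) =
        (((g t₀ / (2 * Real.sqrt (G t₀)) * g t₀ - Real.sqrt (G t₀) * deriv g t₀) / g t₀ ^ 2
            * u t₀ x
          + Real.sqrt (G t₀) / g t₀ * deriv (fun τ => u τ x) t₀)
          * (Real.sqrt (G t₀) / g t₀)) := by
      rw [hevx.deriv_eq]
      exact hcomp.deriv
    -- x-derivatives
    have hfun : (fun y => uh (2 * Real.sqrt (G t₀)) y)
        = fun y => Real.sqrt (G t₀) / g t₀ * u t₀ y := funext fun y => huh t₀ ht₀ y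
    have hUc : ContDiff ℝ (⊤ : ℕ∞) (fun y => u t₀ y) := by
      rw [contDiff_iff_contDiffAt]
      intro y
      have hcd : ContDiffAt ℝ (⊤ : ℕ∞) (fun p : ℝ × ℝ => u p.1 p.2) (t₀, y) :=
        hu.contDiffAt ((hI.prod isOpen_univ).mem_nhds ⟨ht₀, trivial⟩)
      exact hcd.comp y (contDiffAt_const.prodMk contDiffAt_id)
    have hux : deriv (fun y => uh (2 * Real.sqrt (G t₀)) y) x
        = Real.sqrt (G t₀) / g t₀ * deriv (fun y => u t₀ y) x := by
      rw [hfun]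
      exact deriv_const_mul _ ((hUc.differentiable hle) x)
    have hu3 : iteratedDeriv 3 (fun y => uh (2 * Real.sqrt (G t₀)) y) x
        = Real.sqrt (G t₀) / g t₀ * iteratedDeriv 3 (fun y => u t₀ y) x := by
      rw [hfun]
      simp only [← iteratedDerivWithin_univ]
      rw [iteratedDerivWithin_const_mul (Set.mem_univ x) uniqueDiffOn_univ
        (Real.sqrt (G t₀) / g t₀) (hUc.of_le h3le).contDiffWithinAt]
    have huh0 : uh (2 * Real.sqrt (G t₀)) x = Real.sqrt (G t₀) / g t₀ * u t₀ x :=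
      huh t₀ ht₀ x
    rw [h1, hux, hu3, huh0]
    have hpde0 := hpde t₀ ht₀ x
    rw [hh t₀ ht₀] at hpde0
    set S := Real.sqrt (G t₀) with hS
    have hGts : G t₀ = S ^ 2 := (Real.sq_sqrt hGt.le).symm
    rw [hGts] at hpde0
    have hA : deriv (fun τ => u τ x) t₀ =
        -(u t₀ x * deriv (fun y => u t₀ y) x
          + g t₀ * iteratedDeriv 3 (fun y => u t₀ y) x
          + (g t₀ / (2 * S ^ 2) - deriv g t₀ / g t₀) * u t₀ x) := by linarith
    rw [hA]
    field_simp
    ring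
end

section
/- Let u : (0,∞) × ℝ → ℝ be a smooth solution of u_t + u u_x + t u_{xxx} = 0. Define ũ : (0,∞) × ℝ → ℝ by ũ(1/t, x/t) = x − t u(t,x) (equivalently ũ(s, y) = y/s − (1/s) u(1/s, y/s)). Then ũ is a smooth solution of ũ_s + ũ ũ_y − ũ_{yyy} = 0 on (0,∞) × ℝ. -/
open Set

private lemma deriv_helper (f : ℝ → ℝ) (hf : ContDiff ℝ (⊤ : ℕ∞) f) (b a c : ℝ) :
    deriv (fun z => b + a * f (c * z)) = fun z => a * c * deriv f (c * z) := by
  funext z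
  have h1 : HasDerivAt (fun z : ℝ => c * z) c z := by
    simpa using (hasDerivAt_id z).const_mul c
  have h2 : HasDerivAt (fun z => f (c * z)) (deriv f (c * z) * c) z :=
    ((hf.differentiable (by simp) (c * z)).hasDerivAt).comp z h1
  have h3 : HasDerivAt (fun z => b + a * f (c * z)) (a * (deriv f (c * z) * c)) z :=
    (h2.const_mul a).const_add b
  rw [h3.deriv]; ring

/-- If u solves u_t + u u_x + t u_{xxx} = 0 on (0,∞) × ℝ, then
ũ(s,y) = y/s − (1/s) u(1/s, y/s) solves ũ_s + ũ ũ_y − ũ_yyy = 0 on (0,∞) × ℝ.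
This realizes the equivalence transformation t̃ = 1/t, x̃ = x/t, ũ = x − tu. -/
theorem stmt_6
    (u : ℝ → ℝ → ℝ)
    (hu : ContDiffOn ℝ (⊤ : ℕ∞) (fun p : ℝ × ℝ => u p.1 p.2)
      (Set.Ioi (0 : ℝ) ×ˢ Set.univ))
    (hpde : ∀ t ∈ Set.Ioi (0 : ℝ), ∀ x : ℝ,
      deriv (fun τ => u τ x) t + u t x * deriv (fun y => u t y) x
        + t * iteratedDeriv 3 (fun y => u t y) x = 0)
    (ut : ℝ → ℝ → ℝ)
    (hut : ∀ s ∈ Set.Ioi (0 : ℝ), ∀ y : ℝ,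
      ut s y = y / s - (1 / s) * u (1 / s) (y / s)) :
    ContDiffOn ℝ (⊤ : ℕ∞) (fun p : ℝ × ℝ => ut p.1 p.2)
      (Set.Ioi (0 : ℝ) ×ˢ Set.univ) ∧
    ∀ s ∈ Set.Ioi (0 : ℝ), ∀ y : ℝ,
      deriv (fun σ => ut σ y) s + ut s y * deriv (fun z => ut s z) y
        - iteratedDeriv 3 (fun z => ut s z) y = 0 := by
  have hopen : IsOpen (Set.Ioi (0 : ℝ) ×ˢ (Set.univ : Set ℝ)) := isOpen_Ioi.prod isOpen_univ
  -- smoothness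
  have hsmooth : ContDiffOn ℝ (⊤ : ℕ∞) (fun p : ℝ × ℝ => ut p.1 p.2)
      (Set.Ioi (0 : ℝ) ×ˢ Set.univ) := by
    have hne : ∀ p : ℝ × ℝ, p ∈ Set.Ioi (0 : ℝ) ×ˢ (Set.univ : Set ℝ) → p.1 ≠ 0 :=
      fun p hp => ne_of_gt hp.1
    have hinv : ContDiffOn ℝ (⊤ : ℕ∞) (fun p : ℝ × ℝ => 1 / p.1)
        (Set.Ioi (0 : ℝ) ×ˢ Set.univ) :=
      contDiffOn_const.div contDiff_fst.contDiffOn hne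
    have hdiv : ContDiffOn ℝ (⊤ : ℕ∞) (fun p : ℝ × ℝ => p.2 / p.1)
        (Set.Ioi (0 : ℝ) ×ˢ Set.univ) :=
      contDiff_snd.contDiffOn.div contDiff_fst.contDiffOn hne
    have hψ : ContDiffOn ℝ (⊤ : ℕ∞) (fun p : ℝ × ℝ => ((1 / p.1, p.2 / p.1) : ℝ × ℝ))
        (Set.Ioi (0 : ℝ) ×ˢ Set.univ) := hinv.prodMk hdiv
    have hmaps : Set.MapsTo (fun p : ℝ × ℝ => ((1 / p.1, p.2 / p.1) : ℝ × ℝ))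
        (Set.Ioi (0 : ℝ) ×ˢ Set.univ) (Set.Ioi (0 : ℝ) ×ˢ Set.univ) := by
      intro p hp
      exact ⟨by simpa using one_div_pos.mpr (Set.mem_Ioi.mp hp.1), trivial⟩
    have hcomp : ContDiffOn ℝ (⊤ : ℕ∞) (fun p : ℝ × ℝ => u (1 / p.1) (p.2 / p.1))
        (Set.Ioi (0 : ℝ) ×ˢ Set.univ) := hu.comp hψ hmaps
    have : ContDiffOn ℝ (⊤ : ℕ∞)
        (fun p : ℝ × ℝ => p.2 / p.1 - (1 / p.1) * u (1 / p.1) (p.2 / p.1))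
        (Set.Ioi (0 : ℝ) ×ˢ Set.univ) := hdiv.sub (hinv.mul hcomp)
    exact this.congr fun p hp => hut p.1 hp.1 p.2
  refine ⟨hsmooth, ?_⟩
  intro s hs y
  have hs0 : s ≠ 0 := ne_of_gt hs
  set t : ℝ := s⁻¹ with ht_def
  set x : ℝ := s⁻¹ * y with hx_def
  have ht : t ∈ Set.Ioi (0 : ℝ) := Set.mem_Ioi.mpr (inv_pos.mpr hs)
  have hmem : ((t, x) : ℝ × ℝ) ∈ Set.Ioi (0 : ℝ) ×ˢ (Set.univ : Set ℝ) := ⟨ht, trivial⟩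
  have hFat : ContDiffAt ℝ (⊤ : ℕ∞) (fun p : ℝ × ℝ => u p.1 p.2) (t, x) :=
    hu.contDiffAt (hopen.mem_nhds hmem)
  -- slice smoothness in x
  have hslice : ∀ τ ∈ Set.Ioi (0 : ℝ), ContDiff ℝ (⊤ : ℕ∞) (fun ξ => u τ ξ) := by
    intro τ hτ
    rw [contDiff_iff_contDiffAt]
    intro ξ
    have h1 : ContDiffAt ℝ (⊤ : ℕ∞) (fun p : ℝ × ℝ => u p.1 p.2) (τ, ξ) :=
      hu.contDiffAt (hopen.mem_nhds ⟨hτ, trivial⟩)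
    exact h1.comp ξ (contDiffAt_const.prodMk contDiffAt_id)
  set f : ℝ → ℝ := fun ξ => u t ξ with hf_def
  have hf : ContDiff ℝ (⊤ : ℕ∞) f := hslice t ht
  -- full fderiv
  have hFd : HasFDerivAt (fun p : ℝ × ℝ => u p.1 p.2)
      (fderiv ℝ (fun p : ℝ × ℝ => u p.1 p.2) (t, x)) (t, x) :=
    (hFat.differentiableAt (by simp)).hasFDerivAt
  set L := fderiv ℝ (fun p : ℝ × ℝ => u p.1 p.2) (t, x) with hL_def
  have hL : ∀ p q : ℝ, L (p, q) = p * L (1, 0) + q * L (0, 1) := by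
    intro p q
    have h0 : ((p, q) : ℝ × ℝ) = p • ((1 : ℝ), (0 : ℝ)) + q • ((0 : ℝ), (1 : ℝ)) := by
      simp [Prod.ext_iff]
    rw [h0, map_add, map_smul, map_smul, smul_eq_mul, smul_eq_mul]
  -- partial derivatives
  have ha : deriv (fun τ => u τ x) t = L (1, 0) := by
    have hγ : HasDerivAt (fun τ : ℝ => ((τ, x) : ℝ × ℝ)) (1, 0) t :=
      (hasDerivAt_id t).prodMk (hasDerivAt_const t x)
    exact (hFd.comp_hasDerivAt t hγ).deriv
  have hb : deriv f x = L (0, 1) := by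
    have hγ : HasDerivAt (fun ξ : ℝ => ((t, ξ) : ℝ × ℝ)) (0, 1) x :=
      (hasDerivAt_const x t).prodMk (hasDerivAt_id x)
    exact (hFd.comp_hasDerivAt x hγ).deriv
  -- derivative in s
  have hds : deriv (fun σ => ut σ y) s =
      -(s ^ 2)⁻¹ * y - (-(s ^ 2)⁻¹ * u t x + s⁻¹ * L (-(s ^ 2)⁻¹, -(s ^ 2)⁻¹ * y)) := by
    have hev : (fun σ => ut σ y) =ᶠ[nhds s]
        (fun σ => σ⁻¹ * y - σ⁻¹ * u σ⁻¹ (σ⁻¹ * y)) := by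
      filter_upwards [isOpen_Ioi.mem_nhds hs] with σ hσ
      rw [hut σ hσ y]
      simp only [one_div, div_eq_mul_inv, one_mul, mul_comm y σ⁻¹]
    rw [hev.deriv_eq]
    have hinv : HasDerivAt (fun σ : ℝ => σ⁻¹) (-(s ^ 2)⁻¹) s := hasDerivAt_inv hs0
    have hγ : HasDerivAt (fun σ : ℝ => ((σ⁻¹, σ⁻¹ * y) : ℝ × ℝ))
        ((-(s ^ 2)⁻¹, -(s ^ 2)⁻¹ * y) : ℝ × ℝ) s := hinv.prodMk (hinv.mul_const y)
    have hU : HasDerivAt (fun σ : ℝ => u σ⁻¹ (σ⁻¹ * y))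
        (L (-(s ^ 2)⁻¹, -(s ^ 2)⁻¹ * y)) s :=
        hFd.comp_hasDerivAt (f := fun σ : ℝ => ((σ⁻¹, σ⁻¹ * y) : ℝ × ℝ)) s hγ
    have htot : HasDerivAt (fun σ : ℝ => σ⁻¹ * y - σ⁻¹ * u σ⁻¹ (σ⁻¹ * y))
        (-(s ^ 2)⁻¹ * y - (-(s ^ 2)⁻¹ * u t x + s⁻¹ * L (-(s ^ 2)⁻¹, -(s ^ 2)⁻¹ * y))) s :=
      (hinv.mul_const y).sub (hinv.mul hU)
    exact htot.deriv
  -- the y-slice of ut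
  have hg : (fun z => ut s z) = fun z => s⁻¹ * z - s⁻¹ * f (s⁻¹ * z) := by
    funext z
    rw [hut s hs z]
    simp only [hf_def, ht_def, one_div, div_eq_mul_inv, one_mul, mul_comm z s⁻¹]
  have hF1 : ContDiff ℝ (⊤ : ℕ∞) (deriv f) := (contDiff_infty_iff_deriv.mp hf).2
  have hF2 : ContDiff ℝ (⊤ : ℕ∞) (deriv (deriv f)) := (contDiff_infty_iff_deriv.mp hF1).2
  have hg' : deriv (fun z => ut s z) = fun z => s⁻¹ + -(s⁻¹ * s⁻¹) * deriv f (s⁻¹ * z) := by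
    rw [hg]
    funext z
    have h1 : HasDerivAt (fun z : ℝ => s⁻¹ * z) s⁻¹ z := by
      simpa using (hasDerivAt_id z).const_mul s⁻¹
    have h2 : HasDerivAt (fun z => f (s⁻¹ * z)) (deriv f (s⁻¹ * z) * s⁻¹) z :=
      ((hf.differentiable (by simp) (s⁻¹ * z)).hasDerivAt).comp z h1
    have h3 : HasDerivAt (fun z => s⁻¹ * z - s⁻¹ * f (s⁻¹ * z))
        (s⁻¹ - s⁻¹ * (deriv f (s⁻¹ * z) * s⁻¹)) z := h1.sub (h2.const_mul s⁻¹)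
    rw [h3.deriv]; ring
  have hg'' : deriv (deriv (fun z => ut s z)) =
      fun z => -(s⁻¹ * s⁻¹) * s⁻¹ * deriv (deriv f) (s⁻¹ * z) := by
    rw [hg']
    exact deriv_helper (deriv f) hF1 s⁻¹ (-(s⁻¹ * s⁻¹)) s⁻¹
  have hg''' : deriv (deriv (deriv (fun z => ut s z))) =
      fun z => -(s⁻¹ * s⁻¹) * s⁻¹ * s⁻¹ * deriv (deriv (deriv f)) (s⁻¹ * z) := by
    rw [hg'']
    have := deriv_helper (deriv (deriv f)) hF2 0 (-(s⁻¹ * s⁻¹) * s⁻¹) s⁻¹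
    simp only [zero_add] at this
    rw [this]
  have hit3 : ∀ h : ℝ → ℝ, iteratedDeriv 3 h = deriv (deriv (deriv h)) := by
    intro h
    rw [show (3 : ℕ) = 2 + 1 from rfl, iteratedDeriv_succ,
      show (2 : ℕ) = 1 + 1 from rfl, iteratedDeriv_succ, iteratedDeriv_one]
  -- plug in everything
  have e3 : iteratedDeriv 3 (fun z => ut s z) y =
      -(s⁻¹ * s⁻¹) * s⁻¹ * s⁻¹ * iteratedDeriv 3 f x := by
    rw [hit3, hg''', hit3 f]
  have e2 : deriv (fun z => ut s z) y = s⁻¹ + -(s⁻¹ * s⁻¹) * L (0, 1) := by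
    rw [hg', ← hb]
  have e4 : ut s y = s⁻¹ * y - s⁻¹ * u t x := by
    rw [hut s hs y]
    simp only [ht_def, hx_def, one_div, div_eq_mul_inv, one_mul, mul_comm y s⁻¹]
  have hp := hpde t ht x
  rw [ha, hb] at hp
  rw [hds, e2, e3, e4, hL]
  have hs2 : (s ^ 2)⁻¹ = s⁻¹ * s⁻¹ := by rw [sq, mul_inv]
  rw [hs2]
  have hts : t = s⁻¹ := rfl
  rw [hts] at hp
  linear_combination (s⁻¹ * s⁻¹ * s⁻¹) * hp
end

section
/- Let I be an open interval, let h, g : I → ℝ be smooth with g nowhere zero, let H be an antiderivative of h on I, and let T be an antiderivative of e^{-H} on I. Let u : I × ℝ → ℝ be a smooth solution of u_t + u u_x + g(t) u_{xxx} + h(t) u = 0, and let ε be any real constant. Then the function ũ(t,x) := u(t, x − ε T(t)) + ε e^{-H(t)} is also a smooth solution of u_t + u u_x + g(t) u_{xxx} + h(t) u = 0 on I × ℝ. -/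
open scoped ContDiff

lemma iter_add_const (n : ℕ) (f : ℝ → ℝ) (k : ℝ) :
    iteratedDeriv (n+1) (fun y => f y + k) = iteratedDeriv (n+1) f := by
  rw [iteratedDeriv_succ', iteratedDeriv_succ']
  have : (deriv fun y => f y + k) = deriv f := funext fun y => deriv_add_const (f := f) k
  rw [this]



/-- The finite symmetry transformation generated by the kernel Lie
symmetry T∂_x + T_t∂_u: if u solves u_t + u u_x + g(t) u_{xxx} + h(t) u = 0, so does
ũ(t,x) = u(t, x − εT(t)) + ε e^{−H(t)}, where H' = h and T' = e^{−H}. -/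
theorem stmt_7
    (I : Set ℝ) (hI : IsOpen I) (hIconv : Convex ℝ I)
    (h g : ℝ → ℝ)
    (hh : ContDiffOn ℝ (⊤ : ℕ∞) h I) (hg : ContDiffOn ℝ (⊤ : ℕ∞) g I)
    (hg0 : ∀ t ∈ I, g t ≠ 0)
    (H : ℝ → ℝ) (hH : ∀ t ∈ I, HasDerivAt H (h t) t)
    (T : ℝ → ℝ) (hT : ∀ t ∈ I, HasDerivAt T (Real.exp (-H t)) t)
    (u : ℝ → ℝ → ℝ)
    (hu : ContDiffOn ℝ (⊤ : ℕ∞) (fun p : ℝ × ℝ => u p.1 p.2) (I ×ˢ Set.univ))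
    (hpde : ∀ t ∈ I, ∀ x : ℝ,
      deriv (fun τ => u τ x) t + u t x * deriv (fun y => u t y) x
        + g t * iteratedDeriv 3 (fun y => u t y) x + h t * u t x = 0)
    (ε : ℝ)
    (ut : ℝ → ℝ → ℝ)
    (hut : ∀ t x : ℝ, ut t x = u t (x - ε * T t) + ε * Real.exp (-H t)) :
    ContDiffOn ℝ (⊤ : ℕ∞) (fun p : ℝ × ℝ => ut p.1 p.2) (I ×ˢ Set.univ) ∧
    ∀ t ∈ I, ∀ x : ℝ,
      deriv (fun τ => ut τ x) t + ut t x * deriv (fun y => ut t y) x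
        + g t * iteratedDeriv 3 (fun y => ut t y) x + h t * ut t x = 0 := by
  -- smoothness of H, E := exp∘(-H), T on I
  have hHsm : ContDiffOn ℝ (⊤ : ℕ∞) H I := by
    rw [contDiffOn_infty_iff_deriv_of_isOpen hI]
    refine ⟨fun t ht => ((hH t ht).differentiableAt).differentiableWithinAt, ?_⟩
    exact hh.congr fun t ht => (hH t ht).deriv
  have hEsm : ContDiffOn ℝ (⊤ : ℕ∞) (fun t => Real.exp (-H t)) I :=
    Real.contDiff_exp.comp_contDiffOn hHsm.neg
  have hTsm : ContDiffOn ℝ (⊤ : ℕ∞) T I := by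
    rw [contDiffOn_infty_iff_deriv_of_isOpen hI]
    refine ⟨fun t ht => ((hT t ht).differentiableAt).differentiableWithinAt, ?_⟩
    exact hEsm.congr fun t ht => (hT t ht).deriv
  have hSopen : IsOpen (I ×ˢ (Set.univ : Set ℝ)) := hI.prod isOpen_univ
  constructor
  · -- smoothness of ut
    have hψ : ContDiffOn ℝ (⊤ : ℕ∞) (fun p : ℝ × ℝ => (p.1, p.2 - ε * T p.1))
        (I ×ˢ Set.univ) := by
      refine ContDiffOn.prodMk contDiffOn_fst ?_
      exact contDiffOn_snd.sub (((hTsm.comp contDiffOn_fst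
        (fun p hp => hp.1)).const_smul ε).congr (fun p hp => by simp [smul_eq_mul]))
    have hcomp : ContDiffOn ℝ (⊤ : ℕ∞) (fun p : ℝ × ℝ => u p.1 (p.2 - ε * T p.1))
        (I ×ˢ Set.univ) := by
      have := hu.comp hψ (fun p hp => ⟨hp.1, Set.mem_univ _⟩)
      exact this
    have hadd : ContDiffOn ℝ (⊤ : ℕ∞)
        (fun p : ℝ × ℝ => u p.1 (p.2 - ε * T p.1) + ε * Real.exp (-H p.1))
        (I ×ˢ Set.univ) := by
      refine hcomp.add ?_
      exact ((hEsm.comp contDiffOn_fst (fun p hp => hp.1)).const_smul ε).congr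
        (fun p hp => by simp [smul_eq_mul])
    exact hadd.congr fun p hp => hut p.1 p.2
  · intro t ht x
    set c := ε * T t with hc
    set ξ := x - c with hξ
    set E := Real.exp (-H t) with hE
    -- joint derivative of u at (t, ξ)
    have hmem : (t, ξ) ∈ I ×ˢ (Set.univ : Set ℝ) := ⟨ht, Set.mem_univ _⟩
    have hUd : HasFDerivAt (fun p : ℝ × ℝ => u p.1 p.2)
        (fderiv ℝ (fun p : ℝ × ℝ => u p.1 p.2) (t, ξ)) (t, ξ) := by
      have := (hu.contDiffAt (hSopen.mem_nhds hmem)).differentiableAt (by norm_num)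
      exact this.hasFDerivAt
    set F := fderiv ℝ (fun p : ℝ × ℝ => u p.1 p.2) (t, ξ) with hF
    -- time-slice derivative
    have hDt : HasDerivAt (fun τ => u τ ξ) (F (1, 0)) t := by
      have hin : HasDerivAt (fun τ : ℝ => (τ, ξ)) ((1 : ℝ), (0 : ℝ)) t :=
        (hasDerivAt_id t).prodMk (hasDerivAt_const t ξ)
      exact hUd.comp_hasDerivAt t hin
    -- space-slice derivative
    have hDx : HasDerivAt (fun y => u t y) (F (0, 1)) ξ := by
      have hin : HasDerivAt (fun y : ℝ => (t, y)) ((0 : ℝ), (1 : ℝ)) ξ :=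
        (hasDerivAt_const ξ t).prodMk (hasDerivAt_id ξ)
      exact hUd.comp_hasDerivAt ξ hin
    -- derivative of τ ↦ u τ (x - ε T τ)
    have hmove : HasDerivAt (fun τ => u τ (x - ε * T τ)) (F (1, -(ε * E))) t := by
      have hin : HasDerivAt (fun τ : ℝ => (τ, x - ε * T τ)) ((1 : ℝ), -(ε * E)) t := by
        have h2 : HasDerivAt (fun τ => x - ε * T τ) (-(ε * E)) t := by
          simpa [Pi.sub_def] using (hasDerivAt_const t x).sub ((hT t ht).const_mul ε)
        exact (hasDerivAt_id t).prodMk (by simpa [hξ, hc] using h2)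
      have := hUd.comp_hasDerivAt t hin
      simpa [hξ, hc, Function.comp_def] using this
    have hFsplit : F (1, -(ε * E)) = F (1, 0) - (ε * E) * F (0, 1) := by
      have : ((1 : ℝ), -(ε * E)) = ((1 : ℝ), (0 : ℝ)) + (-(ε * E)) • ((0 : ℝ), (1 : ℝ)) := by
        simp [Prod.ext_iff]
      rw [this, map_add, map_smul]
      simp [smul_eq_mul]; ring
    -- derivative of t-slice of ut
    have hexp : HasDerivAt (fun τ => ε * Real.exp (-H τ)) (ε * (E * (-h t))) t := by
      have := ((hH t ht).neg).exp
      simpa [hE] using this.const_mul ε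
    have hDtut : deriv (fun τ => ut τ x) t
        = F (1, 0) - (ε * E) * F (0, 1) + ε * (E * (-h t)) := by
      have : HasDerivAt (fun τ => ut τ x)
          (F (1, -(ε * E)) + ε * (E * (-h t))) t := by
        have := hmove.add hexp
        refine HasDerivAt.congr_of_eventuallyEq this ?_
        filter_upwards with τ
        rw [hut, Pi.add_apply]
      rw [this.deriv, hFsplit]
    -- space derivatives of ut
    have hslice : (fun y => ut t y) = fun y => u t (y + (-c)) + ε * E := by
      funext y; rw [hut]; simp [hE, hc, sub_eq_add_neg]
    have hDxut : deriv (fun y => ut t y) x = F (0, 1) := by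
      rw [hslice, deriv_add_const, deriv_comp_add_const]
      have : x + -c = ξ := by rw [hξ]; ring
      rw [this, hDx.deriv]
    have hD3ut : iteratedDeriv 3 (fun y => ut t y) x
        = iteratedDeriv 3 (fun y => u t y) ξ := by
      rw [hslice, show (3 : ℕ) = 2 + 1 from rfl, iter_add_const,
        iteratedDeriv_comp_add_const]
      show iteratedDeriv (2+1) (u t) (x + -c) = iteratedDeriv (2+1) (fun y => u t y) ξ
      simp [hξ, sub_eq_add_neg]
    -- PDE at shifted point
    have hp := hpde t ht ξ
    rw [hDx.deriv] at hp
    have hval : ut t x = u t ξ + ε * E := by rw [hut]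
    rw [hDt.deriv] at hp
    rw [hDtut, hDxut, hD3ut, hval]
    linarith [hp]
end

section
/- Let n be a real constant, let u : (0,∞) × ℝ → ℝ be a smooth solution of u_t + u u_x + tⁿ u_{xxx} = 0, and let ε be any real constant. Then the function ũ(t,x) := e^{(n−2)ε} u(e^{−3ε} t, e^{−(n+1)ε} x) is also a smooth solution of u_t + u u_x + tⁿ u_{xxx} = 0 on (0,∞) × ℝ. -/
open Real Set

lemma scale_iter (g : ℝ → ℝ) (hg : ContDiff ℝ (⊤ : ℕ∞) g) (c b : ℝ) (k : ℕ) (x : ℝ) :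
    iteratedDeriv k (fun y => c * g (b * y)) x = c * (b ^ k * iteratedDeriv k g (b * x)) := by
  have h1 : iteratedDeriv k (fun y => g (b * y)) = fun x => b ^ k * iteratedDeriv k g (b * x) := by
    simpa [smul_eq_mul] using iteratedDeriv_comp_const_smul (n := k)
      (hg.of_le (by exact_mod_cast le_top)) b
  have h2 : iteratedDeriv k (fun y => c * g (b * y)) x
      = c * iteratedDeriv k (fun y => g (b * y)) x := by
    have hgb : ContDiffOn ℝ (k : ℕ∞) (fun y => g (b * y)) Set.univ :=
      ((hg.comp (contDiff_const.mul contDiff_id)).of_le (by exact_mod_cast le_top)).contDiffOn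
    have := iteratedDerivWithin_const_mul (s := Set.univ) (x := x) (n := k)
      (Set.mem_univ x) uniqueDiffOn_univ c (hgb x (Set.mem_univ x))
    simpa [iteratedDerivWithin_univ] using this
  rw [h2, h1]

/-- The finite symmetry generated by 3t∂_t + (n+1)x∂_x + (n−2)u∂_u for
g(t) = tⁿ: if u solves u_t + u u_x + tⁿ u_{xxx} = 0 on (0,∞) × ℝ, so does
ũ(t,x) = e^{(n−2)ε} u(e^{−3ε}t, e^{−(n+1)ε}x). -/
theorem stmt_8
    (n : ℝ)
    (u : ℝ → ℝ → ℝ)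
    (hu : ContDiffOn ℝ (⊤ : ℕ∞) (fun p : ℝ × ℝ => u p.1 p.2)
      (Set.Ioi (0 : ℝ) ×ˢ Set.univ))
    (hpde : ∀ t ∈ Set.Ioi (0 : ℝ), ∀ x : ℝ,
      deriv (fun τ => u τ x) t + u t x * deriv (fun y => u t y) x
        + t ^ n * iteratedDeriv 3 (fun y => u t y) x = 0)
    (ε : ℝ)
    (ut : ℝ → ℝ → ℝ)
    (hut : ∀ t x : ℝ,
      ut t x = Real.exp ((n - 2) * ε)
        * u (Real.exp (-3 * ε) * t) (Real.exp (-(n + 1) * ε) * x)) :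
    ContDiffOn ℝ (⊤ : ℕ∞) (fun p : ℝ × ℝ => ut p.1 p.2)
      (Set.Ioi (0 : ℝ) ×ˢ Set.univ) ∧
    ∀ t ∈ Set.Ioi (0 : ℝ), ∀ x : ℝ,
      deriv (fun τ => ut τ x) t + ut t x * deriv (fun y => ut t y) x
        + t ^ n * iteratedDeriv 3 (fun y => ut t y) x = 0 := by
  set a := Real.exp (-3 * ε) with ha
  set b := Real.exp (-(n + 1) * ε) with hb
  set c := Real.exp ((n - 2) * ε) with hc
  have ha0 : 0 < a := Real.exp_pos _
  have hb0 : 0 < b := Real.exp_pos _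
  have hS : IsOpen (Set.Ioi (0 : ℝ) ×ˢ (Set.univ : Set ℝ)) := isOpen_Ioi.prod isOpen_univ
  -- the scaling map
  have hL : ContDiff ℝ (⊤ : ℕ∞) (fun p : ℝ × ℝ => ((a * p.1, b * p.2) : ℝ × ℝ)) :=
    (contDiff_const.mul contDiff_fst).prodMk (contDiff_const.mul contDiff_snd)
  have hmaps : Set.MapsTo (fun p : ℝ × ℝ => ((a * p.1, b * p.2) : ℝ × ℝ))
      (Set.Ioi (0 : ℝ) ×ˢ Set.univ) (Set.Ioi (0 : ℝ) ×ˢ Set.univ) := by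
    rintro ⟨t, x⟩ ⟨ht, -⟩
    exact ⟨mul_pos ha0 ht, Set.mem_univ _⟩
  have hsmooth : ContDiffOn ℝ (⊤ : ℕ∞) (fun p : ℝ × ℝ => ut p.1 p.2)
      (Set.Ioi (0 : ℝ) ×ˢ Set.univ) := by
    have : ContDiffOn ℝ (⊤ : ℕ∞)
        (fun p : ℝ × ℝ => c * u (a * p.1) (b * p.2)) (Set.Ioi (0 : ℝ) ×ˢ Set.univ) :=
      contDiffOn_const.mul (hu.comp hL.contDiffOn hmaps)
    exact this.congr fun p _ => by rw [hut]
  refine ⟨hsmooth, ?_⟩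
  intro t ht x
  set t' := a * t with ht'
  set x' := b * x with hx'
  have ht'0 : t' ∈ Set.Ioi (0 : ℝ) := mul_pos ha0 ht
  -- smoothness of the slice y ↦ u t' y
  have hg : ContDiff ℝ (⊤ : ℕ∞) (fun y => u t' y) := by
    rw [← contDiffOn_univ]
    exact hu.comp ((contDiff_const.prodMk contDiff_id).contDiffOn)
      (fun y _ => ⟨ht'0, Set.mem_univ _⟩)
  -- x-slice of ut
  have hslice : (fun y => ut t y) = fun y => c * u t' (b * y) := funext fun y => hut t y
  have hDx : deriv (fun y => ut t y) x = c * (b * deriv (fun y => u t' y) x') := by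
    rw [← iteratedDeriv_one, hslice, scale_iter _ hg, pow_one, iteratedDeriv_one]
  have hD3 : iteratedDeriv 3 (fun y => ut t y) x
      = c * (b ^ 3 * iteratedDeriv 3 (fun y => u t' y) x') := by
    rw [hslice, scale_iter _ hg]
  -- t derivative
  have hFdiff : DifferentiableAt ℝ (fun p : ℝ × ℝ => u p.1 p.2) (t', x') :=
    (hu.differentiableOn (by simp)).differentiableAt
      (hS.mem_nhds ⟨ht'0, Set.mem_univ _⟩)
  have hhdiff : DifferentiableAt ℝ (fun τ => u τ x') t' := by
    have : DifferentiableAt ℝ (fun τ : ℝ => ((τ, x') : ℝ × ℝ)) t' :=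
      differentiableAt_id.prodMk (differentiableAt_const _)
    exact hFdiff.comp t' this
  have hDt : HasDerivAt (fun τ => ut τ x)
      (c * (deriv (fun τ => u τ x') t' * (a * 1))) t := by
    have h1 : HasDerivAt (fun τ => u τ x') (deriv (fun τ => u τ x') t') t' :=
      hhdiff.hasDerivAt
    have h2 : HasDerivAt (fun τ : ℝ => a * τ) (a * 1) t := (hasDerivAt_id t).const_mul a
    have h3 : HasDerivAt (fun τ => u (a * τ) x')
        (deriv (fun τ => u τ x') t' * (a * 1)) t := h1.comp t h2
    have h4 := h3.const_mul c
    have : (fun τ => ut τ x) = fun τ => c * u (a * τ) x' := funext fun τ => hut τ x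
    rw [this]
    exact h4
  have hut0 : ut t x = c * u t' x' := hut t x
  -- the pde at the rescaled point
  have hp := hpde t' ht'0 x'
  -- rewrite (a*t)^n
  have hrp : t' ^ n = a ^ n * t ^ n := Real.mul_rpow ha0.le (le_of_lt ht)
  -- exponential identities
  have E1 : c * c * b = c * a := by
    rw [hc, ha, hb, ← Real.exp_add, ← Real.exp_add, ← Real.exp_add]
    congr 1; ring
  have E2 : c * b ^ 3 = c * a * a ^ n := by
    rw [hc, ha, hb, ← Real.exp_nat_mul, ← Real.exp_mul, ← Real.exp_add, ← Real.exp_add,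
      ← Real.exp_add]
    congr 1; ring
  rw [hDt.deriv, hDx, hD3, hut0]
  rw [hrp] at hp
  linear_combination (c * a) * hp
    + (u t' x' * deriv (fun y => u t' y) x') * E1
    + (t ^ n * iteratedDeriv 3 (fun y => u t' y) x') * E2
end

section
/- Let u : ℝ × ℝ → ℝ be a smooth solution of u_t + u u_x + e^t u_{xxx} = 0, and let ε be any real constant. Then the function ũ(t,x) := e^{ε} u(t − 3ε, e^{−ε} x) is also a smooth solution of u_t + u u_x + e^t u_{xxx} = 0 on ℝ × ℝ. -/
/-- The finite symmetry generated by 3∂_t + x∂_x + u∂_u for g(t) = eᵗ: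
if u solves u_t + u u_x + eᵗ u_{xxx} = 0 on ℝ × ℝ, so does
ũ(t,x) = e^ε u(t − 3ε, e^{−ε}x). -/
theorem stmt_9
    (u : ℝ → ℝ → ℝ)
    (hu : ContDiff ℝ (⊤ : ℕ∞) (fun p : ℝ × ℝ => u p.1 p.2))
    (hpde : ∀ t x : ℝ,
      deriv (fun τ => u τ x) t + u t x * deriv (fun y => u t y) x
        + Real.exp t * iteratedDeriv 3 (fun y => u t y) x = 0)
    (ε : ℝ)
    (ut : ℝ → ℝ → ℝ)
    (hut : ∀ t x : ℝ, ut t x = Real.exp ε * u (t - 3 * ε) (Real.exp (-ε) * x)) :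
    ContDiff ℝ (⊤ : ℕ∞) (fun p : ℝ × ℝ => ut p.1 p.2) ∧
    ∀ t x : ℝ,
      deriv (fun τ => ut τ x) t + ut t x * deriv (fun y => ut t y) x
        + Real.exp t * iteratedDeriv 3 (fun y => ut t y) x = 0 := by
  have husmooth : ∀ s : ℝ, ContDiff ℝ (⊤ : ℕ∞) (fun y => u s y) := fun s =>
    hu.comp (contDiff_const.prodMk contDiff_id)
  have hut_fun : (fun p : ℝ × ℝ => ut p.1 p.2) =
      fun p : ℝ × ℝ => Real.exp ε * u (p.1 - 3 * ε) (Real.exp (-ε) * p.2) :=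
    funext fun p => hut p.1 p.2
  constructor
  · rw [hut_fun]
    exact contDiff_const.mul (hu.comp ((contDiff_fst.sub contDiff_const).prodMk
      (contDiff_const.mul contDiff_snd)))
  · intro t x
    set s : ℝ := t - 3 * ε with hs
    set y : ℝ := Real.exp (-ε) * x with hy
    -- time derivative
    have e1 : (fun τ => ut τ x) = fun τ => Real.exp ε * u (τ - 3 * ε) y :=
      funext fun τ => hut τ x
    have d1 : deriv (fun τ => ut τ x) t = Real.exp ε * deriv (fun τ => u τ y) s := by
      rw [e1, deriv_const_mul_field]
      congr 1
      exact deriv_comp_sub_const (fun σ => u σ y) (3 * ε) t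
    -- spatial derivatives
    have e2 : (fun z => ut t z) = fun z => Real.exp ε * u s (Real.exp (-ε) * z) :=
      funext fun z => hut t z
    have key : ∀ n : ℕ, iteratedDeriv n (fun z => ut t z) x =
        Real.exp ε * (Real.exp (-ε)) ^ n * iteratedDeriv n (fun w => u s w) y := by
      intro n
      rw [e2]
      have h1 : iteratedDeriv n (fun z => Real.exp ε * u s (Real.exp (-ε) * z)) x
          = Real.exp ε * iteratedDeriv n (fun z => u s (Real.exp (-ε) * z)) x := by
        rw [← iteratedDerivWithin_univ, ← iteratedDerivWithin_univ]
        exact iteratedDerivWithin_const_mul (Set.mem_univ x) uniqueDiffOn_univ _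
          ((((husmooth s).of_le (by exact_mod_cast le_top)).comp (contDiff_const.mul contDiff_id)).contDiffWithinAt)
      have h2 : iteratedDeriv n (fun z => u s (Real.exp (-ε) * z)) x
          = (Real.exp (-ε)) ^ n * iteratedDeriv n (fun w => u s w) (Real.exp (-ε) * x) :=
        congrFun (iteratedDeriv_comp_const_mul ((husmooth s).of_le (by exact_mod_cast le_top)) _) x
      rw [h1, h2, ← hy]
      ring
    have k1 : deriv (fun z => ut t z) x =
        Real.exp ε * (Real.exp (-ε)) ^ 1 * deriv (fun w => u s w) y := by
      rw [← iteratedDeriv_one, key 1, iteratedDeriv_one]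
    have hAc : Real.exp ε * (Real.exp (-ε)) ^ 1 = 1 := by
      rw [pow_one, ← Real.exp_add]; simp
    have h3 : Real.exp t * (Real.exp ε * (Real.exp (-ε)) ^ 3) = Real.exp ε * Real.exp s := by
      rw [← Real.exp_nat_mul, ← Real.exp_add, ← Real.exp_add, ← Real.exp_add, hs]
      congr 1
      push_cast
      ring
    have hp := hpde s y
    rw [hut t x, d1, k1, key 3]
    linear_combination Real.exp ε * hp +
      (Real.exp ε * u s y * deriv (fun w => u s w) y) * hAc +
      iteratedDeriv 3 (fun w => u s w) y * h3
end

section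
/- Let δ and θ be real constants, and let u : ℝ × ℝ → ℝ be a smooth solution of u_t + u u_x + e^{δ arctan t} √(t²+1) u_{xxx} = 0. Let I_θ = { t ∈ ℝ : arctan t + θ ∈ (−π/2, π/2) }, and for t ∈ I_θ set D(t) = cos θ − t sin θ (which is positive on I_θ) and t̃ = (t cos θ + sin θ)/D(t). Let ũ be the smooth function on the image region determined by ũ(t̃, e^{δθ/3} x / D(t)) = e^{δθ/3} (D(t) u(t,x) + x sin θ). Then ũ is a smooth solution of ũ_{t̃} + ũ ũ_{x̃} + e^{δ arctan t̃} √(t̃²+1) ũ_{x̃x̃x̃} = 0 on the image region. -/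
open Real Set Topology


private lemma aux_comp2 (u : ℝ → ℝ → ℝ)
    (hu : ContDiff ℝ (⊤ : ℕ∞) (fun p : ℝ × ℝ => u p.1 p.2))
    {T X : ℝ → ℝ} {s T' X' : ℝ} (hT : HasDerivAt T T' s) (hX : HasDerivAt X X' s) :
    HasDerivAt (fun τ => u (T τ) (X τ))
      (T' * deriv (fun τ => u τ (X s)) (T s) + X' * deriv (fun y => u (T s) y) (X s)) s := by
  have hd : DifferentiableAt ℝ (fun p : ℝ × ℝ => u p.1 p.2) (T s, X s) :=
    (hu.differentiable (by simp)).differentiableAt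
  set L := fderiv ℝ (fun p : ℝ × ℝ => u p.1 p.2) (T s, X s) with hL
  have h1 : HasDerivAt (fun τ => u τ (X s)) (L ((1:ℝ), (0:ℝ))) (T s) :=
    by
      have := hd.hasFDerivAt.comp_hasDerivAt_of_eq (x := T s)
        ((hasDerivAt_id (T s)).prodMk (hasDerivAt_const (T s) (X s))) rfl
      exact this
  have h2 : HasDerivAt (fun y => u (T s) y) (L ((0:ℝ), (1:ℝ))) (X s) :=
    by
      have := hd.hasFDerivAt.comp_hasDerivAt_of_eq (x := X s)
        ((hasDerivAt_const (X s) (T s)).prodMk (hasDerivAt_id (X s))) rfl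
      exact this
  have hmain : HasDerivAt (fun τ => u (T τ) (X τ)) (L (T', X')) s :=
    by have := hd.hasFDerivAt.comp_hasDerivAt_of_eq (x := s) (hT.prodMk hX) rfl; exact this
  rw [h1.deriv, h2.deriv]
  have hsplit : L (T', X') = T' * L (1, 0) + X' * L (0, 1) := by
    have h : ((T', X') : ℝ × ℝ) = T' • ((1:ℝ), (0:ℝ)) + X' • ((0:ℝ), (1:ℝ)) := by
      simp [Prod.ext_iff]
    rw [h, map_add, map_smul, map_smul, smul_eq_mul, smul_eq_mul]
  exact hsplit ▸ hmain

private lemma aux_itd_add {n : ℕ} {f g : ℝ → ℝ} (hf : ContDiff ℝ (⊤ : ℕ∞) f)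
    (hg : ContDiff ℝ (⊤ : ℕ∞) g) (x : ℝ) :
    iteratedDeriv n (fun y => f y + g y) x = iteratedDeriv n f x + iteratedDeriv n g x := by
  simp only [← iteratedDerivWithin_univ]
  exact iteratedDerivWithin_add (mem_univ x) uniqueDiffOn_univ
    (hf.of_le (m := n) (by exact_mod_cast (le_top : (n:ℕ∞) ≤ ⊤))).contDiffWithinAt (hg.of_le (m := n) (by exact_mod_cast (le_top : (n:ℕ∞) ≤ ⊤))).contDiffWithinAt

private lemma aux_itd_cmul {n : ℕ} {f : ℝ → ℝ} (hf : ContDiff ℝ (⊤ : ℕ∞) f) (c x : ℝ) :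
    iteratedDeriv n (fun y => c * f y) x = c * iteratedDeriv n f x := by
  simp only [← iteratedDerivWithin_univ]
  exact iteratedDerivWithin_const_mul (mem_univ x) uniqueDiffOn_univ c
    (hf.of_le (m := n) (by exact_mod_cast (le_top : (n:ℕ∞) ≤ ⊤))).contDiffWithinAt

private lemma aux_itd3_linear (c x : ℝ) : iteratedDeriv 3 (fun y : ℝ => c * y) x = 0 := by
  have h1 : deriv (fun y : ℝ => c * y) = fun _ => c := by
    funext y; simpa using ((hasDerivAt_id y).const_mul c).deriv
  rw [show (3:ℕ) = 2 + 1 from rfl, iteratedDeriv_succ', h1]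
  rw [show (2:ℕ) = 1 + 1 from rfl, iteratedDeriv_succ', deriv_const']
  rw [show (1:ℕ) = 0 + 1 from rfl, iteratedDeriv_succ', deriv_const']
  simp


private noncomputable def auxDh (θ : ℝ) (s : ℝ) : ℝ := Real.cos θ + s * Real.sin θ
private noncomputable def auxTb (θ : ℝ) (s : ℝ) : ℝ :=
  (s * Real.cos θ - Real.sin θ) * (auxDh θ s)⁻¹

private lemma l_tcos (t : ℝ) : t * Real.cos (Real.arctan t) = Real.sin (Real.arctan t) := by
  have h := Real.tan_arctan t
  rw [Real.tan_eq_sin_div_cos] at h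
  field_simp [(Real.cos_arctan_pos t).ne'] at h
  linarith

private lemma l_Dcos {θ t : ℝ} (ht : Real.arctan t + θ ∈ Set.Ioo (-(π/2)) (π/2)) :
    Real.cos θ - t * Real.sin θ = Real.cos (Real.arctan t + θ) / Real.cos (Real.arctan t) := by
  have hca : Real.cos (Real.arctan t) ≠ 0 := (Real.cos_arctan_pos t).ne'
  have ht' := l_tcos t
  rw [Real.cos_add]
  field_simp
  linear_combination (-Real.sin θ) * ht'

private lemma l_Dpos {θ t : ℝ} (ht : Real.arctan t + θ ∈ Set.Ioo (-(π/2)) (π/2)) :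
    0 < Real.cos θ - t * Real.sin θ := by
  rw [l_Dcos ht]
  exact div_pos (Real.cos_pos_of_mem_Ioo ht) (Real.cos_arctan_pos t)

private lemma l_tan {θ t : ℝ} (ht : Real.arctan t + θ ∈ Set.Ioo (-(π/2)) (π/2)) :
    (t * Real.cos θ + Real.sin θ) / (Real.cos θ - t * Real.sin θ)
      = Real.tan (Real.arctan t + θ) := by
  have hcb : Real.cos (Real.arctan t + θ) ≠ 0 := (Real.cos_pos_of_mem_Ioo ht).ne'
  have hd : Real.cos θ - t * Real.sin θ ≠ 0 := (l_Dpos ht).ne'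
  have ht' := l_tcos t
  rw [Real.tan_eq_sin_div_cos, div_eq_div_iff hd hcb, Real.sin_add, Real.cos_add]
  linear_combination (Real.sin θ ^ 2 + Real.cos θ ^ 2) * ht'

private lemma l_arctan {θ t : ℝ} (ht : Real.arctan t + θ ∈ Set.Ioo (-(π/2)) (π/2)) :
    Real.arctan ((t * Real.cos θ + Real.sin θ) / (Real.cos θ - t * Real.sin θ))
      = Real.arctan t + θ := by
  rw [l_tan ht]; exact Real.arctan_tan ht.1 ht.2

private lemma l_sqrt {θ t : ℝ} (ht : Real.arctan t + θ ∈ Set.Ioo (-(π/2)) (π/2)) :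
    Real.sqrt (((t * Real.cos θ + Real.sin θ) / (Real.cos θ - t * Real.sin θ)) ^ 2 + 1)
      = Real.sqrt (t ^ 2 + 1) / (Real.cos θ - t * Real.sin θ) := by
  have hca : 0 < Real.cos (Real.arctan t) := Real.cos_arctan_pos t
  have hcb : 0 < Real.cos (Real.arctan t + θ) := Real.cos_pos_of_mem_Ioo ht
  have e1 : Real.tan (Real.arctan t + θ) ^ 2 + 1 = ((Real.cos (Real.arctan t + θ))⁻¹) ^ 2 := by
    have h := Real.inv_one_add_tan_sq hcb.ne'
    rw [inv_pow, ← h, inv_inv]; ring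
  have e2 : t ^ 2 + 1 = ((Real.cos (Real.arctan t))⁻¹) ^ 2 := by
    have h := Real.inv_one_add_tan_sq hca.ne'
    rw [Real.tan_arctan] at h
    rw [inv_pow, ← h, inv_inv]; ring
  rw [l_tan ht, e1, e2, Real.sqrt_sq (by positivity), Real.sqrt_sq (by positivity), l_Dcos ht]
  field_simp

private lemma l_Dh_fwd {θ t : ℝ} (hd : Real.cos θ - t * Real.sin θ ≠ 0) :
    auxDh θ ((t * Real.cos θ + Real.sin θ) / (Real.cos θ - t * Real.sin θ))
      = (Real.cos θ - t * Real.sin θ)⁻¹ := by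
  unfold auxDh
  field_simp
  linear_combination Real.sin_sq_add_cos_sq θ

private lemma l_Tb_fwd {θ t : ℝ} (hd : Real.cos θ - t * Real.sin θ ≠ 0) :
    auxTb θ ((t * Real.cos θ + Real.sin θ) / (Real.cos θ - t * Real.sin θ)) = t := by
  unfold auxTb
  rw [l_Dh_fwd hd, inv_inv]
  field_simp
  linear_combination t * Real.sin_sq_add_cos_sq θ

private lemma l_bwd {θ s : ℝ} (hs : 0 < auxDh θ s) :
    Real.cos θ - auxTb θ s * Real.sin θ = (auxDh θ s)⁻¹ ∧
    (auxTb θ s * Real.cos θ + Real.sin θ) / (Real.cos θ - auxTb θ s * Real.sin θ) = s := by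
  have hne : auxDh θ s ≠ 0 := hs.ne'
  have h1 : Real.cos θ - auxTb θ s * Real.sin θ = (auxDh θ s)⁻¹ := by
    unfold auxTb auxDh at *
    field_simp
    linear_combination Real.sin_sq_add_cos_sq θ
  refine ⟨h1, ?_⟩
  rw [h1]
  unfold auxTb auxDh at *
  field_simp
  linear_combination s * Real.sin_sq_add_cos_sq θ

section
variable {δ θ : ℝ} {u ut : ℝ → ℝ → ℝ} {Iθ : Set ℝ} {D : ℝ → ℝ}

private noncomputable def auxF (δ θ : ℝ) (u : ℝ → ℝ → ℝ) (s y : ℝ) : ℝ :=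
  Real.exp (δ*θ/3) * (auxDh θ s)⁻¹ *
    u (auxTb θ s) ((Real.exp (δ*θ/3))⁻¹ * y * (auxDh θ s)⁻¹) + y * Real.sin θ * (auxDh θ s)⁻¹
private def auxJ (θ : ℝ) (Iθ : Set ℝ) : Set ℝ := {s | 0 < auxDh θ s ∧ auxTb θ s ∈ Iθ}

private lemma l_image (hIθ : Iθ = {t : ℝ | Real.arctan t + θ ∈ Set.Ioo (-(π/2)) (π/2)}) :
    (fun t => (t * Real.cos θ + Real.sin θ) / (Real.cos θ - t * Real.sin θ)) '' Iθ
      = auxJ θ Iθ := by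
  ext s
  constructor
  · rintro ⟨t, ht, rfl⟩
    have ht' : Real.arctan t + θ ∈ Set.Ioo (-(π/2)) (π/2) := by rwa [hIθ] at ht
    have hd := (l_Dpos ht').ne'
    exact ⟨by rw [l_Dh_fwd hd]; exact inv_pos.mpr (l_Dpos ht'), by rw [l_Tb_fwd hd]; exact ht⟩
  · rintro ⟨hpos, hmem⟩
    exact ⟨auxTb θ s, hmem, (l_bwd hpos).2⟩

private lemma l_Jopen (hIθ : Iθ = {t : ℝ | Real.arctan t + θ ∈ Set.Ioo (-(π/2)) (π/2)}) :
    IsOpen (auxJ θ Iθ) := by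
  have hIo : IsOpen Iθ := by
    rw [hIθ]
    exact isOpen_Ioo.preimage (Real.continuous_arctan.add continuous_const)
  have hcDh : Continuous (auxDh θ) := by unfold auxDh; continuity
  have hU : IsOpen {s : ℝ | 0 < auxDh θ s} := isOpen_lt continuous_const hcDh
  have hTb : ContinuousOn (auxTb θ) {s | 0 < auxDh θ s} := by
    unfold auxTb
    exact ((continuous_id.mul continuous_const).sub continuous_const).continuousOn.mul
      (ContinuousOn.inv₀ hcDh.continuousOn (fun s hs => ne_of_gt hs))
  have he : auxJ θ Iθ = {s | 0 < auxDh θ s} ∩ auxTb θ ⁻¹' Iθ := rfl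
  rw [he]
  exact hTb.isOpen_inter_preimage hU hIo

private lemma l_keyF (hIθ : Iθ = {t : ℝ | Real.arctan t + θ ∈ Set.Ioo (-(π/2)) (π/2)})
    (hD : ∀ t, D t = Real.cos θ - t * Real.sin θ)
    (hut : ∀ t ∈ Iθ, ∀ x : ℝ,
      ut ((t * Real.cos θ + Real.sin θ) / D t) (Real.exp (δ * θ / 3) * x / D t)
        = Real.exp (δ * θ / 3) * (D t * u t x + x * Real.sin θ)) :
    ∀ s ∈ auxJ θ Iθ, ∀ y, ut s y = auxF δ θ u s y := by
  intro s hs y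
  obtain ⟨hpos, hmem⟩ := hs
  have hne : auxDh θ s ≠ 0 := hpos.ne'
  have hE : Real.exp (δ*θ/3) ≠ 0 := Real.exp_ne_zero _
  obtain ⟨h1, h2⟩ := l_bwd (θ := θ) (s := s) hpos
  have hdne : Real.cos θ - auxTb θ s * Real.sin θ ≠ 0 := by
    rw [h1]; exact inv_ne_zero hne
  have key := hut (auxTb θ s) hmem ((Real.exp (δ*θ/3))⁻¹ * y * (auxDh θ s)⁻¹)
  rw [hD] at key
  rw [h2] at key
  have harg : Real.exp (δ*θ/3) * ((Real.exp (δ*θ/3))⁻¹ * y * (auxDh θ s)⁻¹)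
      / (Real.cos θ - auxTb θ s * Real.sin θ) = y := by
    rw [h1]; field_simp
  rw [harg] at key
  rw [key]
  unfold auxF
  rw [h1]
  field_simp

private lemma l_smooth (hu : ContDiff ℝ (⊤ : ℕ∞) (fun p : ℝ × ℝ => u p.1 p.2)) :
    ContDiffOn ℝ (⊤ : ℕ∞) (fun p : ℝ × ℝ => auxF δ θ u p.1 p.2)
      ((auxJ θ Iθ) ×ˢ Set.univ) := by
  have hDh : ContDiff ℝ (⊤:ℕ∞) (fun p : ℝ × ℝ => auxDh θ p.1) := by
    unfold auxDh
    exact contDiff_const.add (contDiff_fst.mul contDiff_const)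
  have hne : ∀ p ∈ (auxJ θ Iθ) ×ˢ (Set.univ : Set ℝ), auxDh θ p.1 ≠ 0 :=
    fun p hp => hp.1.1.ne'
  have hinv : ContDiffOn ℝ (⊤:ℕ∞) (fun p : ℝ × ℝ => (auxDh θ p.1)⁻¹)
      ((auxJ θ Iθ) ×ˢ Set.univ) := hDh.contDiffOn.inv hne
  have hTb : ContDiffOn ℝ (⊤:ℕ∞) (fun p : ℝ × ℝ => auxTb θ p.1) ((auxJ θ Iθ) ×ˢ Set.univ) := by
    unfold auxTb auxDh
    refine ContDiffOn.mul ?_ ?_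
    · exact ((contDiff_fst.mul contDiff_const).sub contDiff_const).contDiffOn
    · exact hinv
  have hX : ContDiffOn ℝ (⊤:ℕ∞)
      (fun p : ℝ × ℝ => (Real.exp (δ*θ/3))⁻¹ * p.2 * (auxDh θ p.1)⁻¹)
      ((auxJ θ Iθ) ×ˢ Set.univ) :=
    ((contDiff_const.mul contDiff_snd).contDiffOn).mul hinv
  have hcomp : ContDiffOn ℝ (⊤:ℕ∞)
      (fun p : ℝ × ℝ => u (auxTb θ p.1) ((Real.exp (δ*θ/3))⁻¹ * p.2 * (auxDh θ p.1)⁻¹))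
      ((auxJ θ Iθ) ×ˢ Set.univ) :=
    hu.comp_contDiffOn (hTb.prodMk hX)
  unfold auxF
  exact ((contDiffOn_const.mul hinv).mul hcomp).add
    ((contDiff_snd.mul contDiff_const).contDiffOn.mul hinv)
end

set_option maxHeartbeats 1000000 in
open Real in
/-- The finite symmetry transformation of Case 3 of Table 1
(g(t) = e^{δ arctan t}√(t²+1)), realized inside G∼₀ by the rotation
a = d = cos θ, b = −c = sin θ, e₂ = e^{δθ/3}: with D(t) = cos θ − t sin θ and
t̃ = (t cos θ + sin θ)/D(t), the function ũ determined by
ũ(t̃, e^{δθ/3}x/D(t)) = e^{δθ/3}(D(t)u(t,x) + x sin θ) is a smooth solution of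
the same equation on the image region. -/
theorem stmt_10
    (δ θ : ℝ)
    (u : ℝ → ℝ → ℝ)
    (hu : ContDiff ℝ (⊤ : ℕ∞) (fun p : ℝ × ℝ => u p.1 p.2))
    (hpde : ∀ t x : ℝ,
      deriv (fun τ => u τ x) t + u t x * deriv (fun y => u t y) x
        + Real.exp (δ * Real.arctan t) * Real.sqrt (t ^ 2 + 1)
          * iteratedDeriv 3 (fun y => u t y) x = 0)
    (Iθ : Set ℝ)
    (hIθ : Iθ = {t : ℝ | Real.arctan t + θ ∈ Set.Ioo (-(π / 2)) (π / 2)})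
    (D : ℝ → ℝ) (hD : ∀ t, D t = Real.cos θ - t * Real.sin θ)
    (ut : ℝ → ℝ → ℝ)
    (hut : ∀ t ∈ Iθ, ∀ x : ℝ,
      ut ((t * Real.cos θ + Real.sin θ) / D t) (Real.exp (δ * θ / 3) * x / D t)
        = Real.exp (δ * θ / 3) * (D t * u t x + x * Real.sin θ)) :
    ContDiffOn ℝ (⊤ : ℕ∞) (fun p : ℝ × ℝ => ut p.1 p.2)
      (((fun t => (t * Real.cos θ + Real.sin θ) / D t) '' Iθ) ×ˢ Set.univ) ∧
    ∀ t ∈ Iθ, ∀ x : ℝ,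
      deriv (fun τ => ut τ (Real.exp (δ * θ / 3) * x / D t))
          ((t * Real.cos θ + Real.sin θ) / D t)
        + ut ((t * Real.cos θ + Real.sin θ) / D t)
            (Real.exp (δ * θ / 3) * x / D t)
          * deriv (fun y => ut ((t * Real.cos θ + Real.sin θ) / D t) y)
            (Real.exp (δ * θ / 3) * x / D t)
        + Real.exp (δ * Real.arctan ((t * Real.cos θ + Real.sin θ) / D t))
          * Real.sqrt (((t * Real.cos θ + Real.sin θ) / D t) ^ 2 + 1)
          * iteratedDeriv 3 (fun y => ut ((t * Real.cos θ + Real.sin θ) / D t) y)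
            (Real.exp (δ * θ / 3) * x / D t) = 0 := by
  subst hIθ
  have hkeyF := l_keyF (δ := δ) (u := u) (ut := ut) rfl hD hut
  constructor
  · have him : (fun t => (t * Real.cos θ + Real.sin θ) / D t)
        = (fun t => (t * Real.cos θ + Real.sin θ) / (Real.cos θ - t * Real.sin θ)) := by
      funext t; rw [hD]
    rw [him, l_image rfl]
    exact (l_smooth hu).congr (fun p hp => hkeyF p.1 hp.1 p.2)
  · intro t ht x
    have ht' : Real.arctan t + θ ∈ Set.Ioo (-(π/2)) (π/2) := ht
    have hdpos : 0 < Real.cos θ - t * Real.sin θ := l_Dpos ht'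
    have hdne : Real.cos θ - t * Real.sin θ ≠ 0 := hdpos.ne'
    have hE : Real.exp (δ * θ / 3) ≠ 0 := Real.exp_ne_zero _
    simp only [hD]
    set E := Real.exp (δ * θ / 3) with hEdef
    set s := (t * Real.cos θ + Real.sin θ) / (Real.cos θ - t * Real.sin θ) with hs
    set y0 := E * x / (Real.cos θ - t * Real.sin θ) with hy0
    have hsJ : s ∈ auxJ θ {t : ℝ | Real.arctan t + θ ∈ Set.Ioo (-(π/2)) (π/2)} := by
      constructor
      · rw [hs, l_Dh_fwd hdne]; exact inv_pos.mpr hdpos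
      · rw [hs, l_Tb_fwd hdne]; exact ht
    have hDhs : auxDh θ s = (Real.cos θ - t * Real.sin θ)⁻¹ := by rw [hs]; exact l_Dh_fwd hdne
    have hTbs : auxTb θ s = t := by rw [hs]; exact l_Tb_fwd hdne
    have hDhne : auxDh θ s ≠ 0 := by rw [hDhs]; exact inv_ne_zero hdne
    have hXs : E⁻¹ * y0 * (auxDh θ s)⁻¹ = x := by
      rw [hDhs, hy0, inv_inv]; field_simp
    have hu_t : ContDiff ℝ (⊤:ℕ∞) (fun y => u t y) :=
      hu.comp (contDiff_const.prodMk contDiff_id)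
    -- value of ut at (s, y0)
    have hval : ut s y0 = E * ((Real.cos θ - t * Real.sin θ) * u t x + x * Real.sin θ) := by
      have h := hut t ht x
      rw [hD] at h
      exact h
    -- y-slice equality and normal form
    have hslice : (fun y => ut s y) = fun y => auxF δ θ u s y := funext (hkeyF s hsJ)
    have hF2 : (fun y => auxF δ θ u s y)
        = fun y => (E * (auxDh θ s)⁻¹) * u t ((E⁻¹ * (auxDh θ s)⁻¹) * y)
            + (Real.sin θ * (auxDh θ s)⁻¹) * y := by
      funext y
      unfold auxF
      rw [← hEdef, hTbs, show E⁻¹ * y * (auxDh θ s)⁻¹ = (E⁻¹ * (auxDh θ s)⁻¹) * y by ring]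
      ring
    have hc2 : (E⁻¹ * (auxDh θ s)⁻¹) * y0 = x := by rw [← hXs]; ring
    -- first y-derivative
    have hux : HasDerivAt (fun y => u t y) (deriv (fun y => u t y) x)
        ((E⁻¹ * (auxDh θ s)⁻¹) * y0) := by
      rw [hc2]
      exact ((hu_t.differentiable (by simp)) x).hasDerivAt
    have hderiv_y : deriv (fun y => ut s y) y0
        = (Real.cos θ - t * Real.sin θ) ^ 2 * deriv (fun y => u t y) x
          + Real.sin θ * (Real.cos θ - t * Real.sin θ) := by
      rw [hslice, hF2]
      have hb : HasDerivAt (fun y : ℝ => (E⁻¹ * (auxDh θ s)⁻¹) * y)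
          (E⁻¹ * (auxDh θ s)⁻¹) y0 := by
        simpa using (hasDerivAt_id y0).const_mul (E⁻¹ * (auxDh θ s)⁻¹)
      have h1 : HasDerivAt (fun y => u t ((E⁻¹ * (auxDh θ s)⁻¹) * y))
          (deriv (fun y => u t y) x * (E⁻¹ * (auxDh θ s)⁻¹)) y0 := hux.comp y0 hb
      have h2 : HasDerivAt (fun y : ℝ => (Real.sin θ * (auxDh θ s)⁻¹) * y)
          (Real.sin θ * (auxDh θ s)⁻¹) y0 := by
        simpa using (hasDerivAt_id y0).const_mul (Real.sin θ * (auxDh θ s)⁻¹)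
      have hsum : HasDerivAt (fun y => E * (auxDh θ s)⁻¹ * u t (E⁻¹ * (auxDh θ s)⁻¹ * y)
          + Real.sin θ * (auxDh θ s)⁻¹ * y) _ y0 := (h1.const_mul (E * (auxDh θ s)⁻¹)).add h2
      rw [hsum.deriv, hDhs, inv_inv]
      field_simp
    -- third y-derivative
    have hcd1 : ContDiff ℝ (⊤:ℕ∞) (fun y => u t ((E⁻¹ * (auxDh θ s)⁻¹) * y)) :=
      hu_t.comp (contDiff_const.mul contDiff_id)
    have hitd : iteratedDeriv 3 (fun y => ut s y) y0
        = (Real.cos θ - t * Real.sin θ) ^ 4 / E ^ 2 * iteratedDeriv 3 (fun y => u t y) x := by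
      rw [hslice, hF2]
      have hadd := aux_itd_add (n := 3)
        (f := fun y => (E * (auxDh θ s)⁻¹) * u t ((E⁻¹ * (auxDh θ s)⁻¹) * y))
        (g := fun y => (Real.sin θ * (auxDh θ s)⁻¹) * y)
        (contDiff_const.mul hcd1) (contDiff_const.mul contDiff_id) y0
      rw [hadd, aux_itd3_linear, add_zero, aux_itd_cmul hcd1 (E * (auxDh θ s)⁻¹) y0]
      have hu_t3 : ContDiff ℝ (3:ℕ) (fun y => u t y) :=
        hu_t.of_le (by norm_cast)
      have h3 := iteratedDeriv_comp_const_mul hu_t3 (E⁻¹ * (auxDh θ s)⁻¹)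
      have h3' : iteratedDeriv 3 (fun y => u t ((E⁻¹ * (auxDh θ s)⁻¹) * y)) y0
          = (E⁻¹ * (auxDh θ s)⁻¹) ^ 3
            * iteratedDeriv 3 (fun y => u t y) ((E⁻¹ * (auxDh θ s)⁻¹) * y0) :=
        congrFun h3 y0
      rw [h3', hc2, hDhs, inv_inv]
      field_simp
    -- time derivative
    have hDh' : HasDerivAt (fun τ => Real.cos θ + τ * Real.sin θ) (Real.sin θ) s := by
      simpa using ((hasDerivAt_id s).mul_const (Real.sin θ)).const_add (Real.cos θ)
    have hinv : HasDerivAt (fun τ => (auxDh θ τ)⁻¹) (-Real.sin θ / (auxDh θ s) ^ 2) s :=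
      hDh'.inv hDhne
    have hTb' : HasDerivAt (auxTb θ)
        (1 * Real.cos θ * (auxDh θ s)⁻¹
          + (s * Real.cos θ - Real.sin θ) * (-Real.sin θ / (auxDh θ s) ^ 2)) s :=
      (((hasDerivAt_id s).mul_const (Real.cos θ)).sub_const (Real.sin θ)).mul hinv
    have hX' : HasDerivAt (fun τ => E⁻¹ * y0 * (auxDh θ τ)⁻¹)
        (E⁻¹ * y0 * (-Real.sin θ / (auxDh θ s) ^ 2)) s :=
      HasDerivAt.const_mul (E⁻¹ * y0) hinv
    -- clean values of the two inner derivatives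
    have hT'val : 1 * Real.cos θ * (auxDh θ s)⁻¹
          + (s * Real.cos θ - Real.sin θ) * (-Real.sin θ / (auxDh θ s) ^ 2)
        = (Real.cos θ - t * Real.sin θ) ^ 2 := by
      rw [hDhs, hs, inv_inv]
      field_simp
      ring_nf
      linear_combination (-(Real.sin θ * t) * (Real.cos θ - t * Real.sin θ) ^ 2 + Real.sin θ ^ 3 * t ^ 3 - 2 * Real.cos θ * Real.sin θ ^ 2 * t ^ 2 + Real.sin θ * (Real.cos θ ^ 2 - 1) * t) * Real.sin_sq_add_cos_sq θ
    have hX'val : E⁻¹ * y0 * (-Real.sin θ / (auxDh θ s) ^ 2)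
        = -(x * Real.sin θ * (Real.cos θ - t * Real.sin θ)) := by
      rw [hDhs, hy0]
      field_simp
    have hcomp0 : HasDerivAt (fun τ => u (auxTb θ τ) (E⁻¹ * y0 * (auxDh θ τ)⁻¹))
        ((1 * Real.cos θ * (auxDh θ s)⁻¹
            + (s * Real.cos θ - Real.sin θ) * (-Real.sin θ / (auxDh θ s) ^ 2))
            * deriv (fun τ => u τ (E⁻¹ * y0 * (auxDh θ s)⁻¹)) (auxTb θ s)
          + (E⁻¹ * y0 * (-Real.sin θ / (auxDh θ s) ^ 2))
            * deriv (fun y => u (auxTb θ s) y) (E⁻¹ * y0 * (auxDh θ s)⁻¹)) s :=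
      aux_comp2 u hu hTb' hX'
    rw [hTbs, hXs, hT'val, hX'val] at hcomp0
    have houter : HasDerivAt (fun τ => auxF δ θ u τ y0)
        (E * (-Real.sin θ / (auxDh θ s) ^ 2)
            * u (auxTb θ s) (E⁻¹ * y0 * (auxDh θ s)⁻¹)
          + E * (auxDh θ s)⁻¹
            * ((Real.cos θ - t * Real.sin θ) ^ 2 * deriv (fun τ => u τ x) t
              + -(x * Real.sin θ * (Real.cos θ - t * Real.sin θ)) * deriv (fun y => u t y) x)
          + (y0 * Real.sin θ) * (-Real.sin θ / (auxDh θ s) ^ 2)) s :=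
      ((HasDerivAt.const_mul E hinv).mul hcomp0).add
        (HasDerivAt.const_mul (y0 * Real.sin θ) hinv)
    have hEq : (fun τ => ut τ y0) =ᶠ[nhds s] (fun τ => auxF δ θ u τ y0) := by
      filter_upwards [(l_Jopen (θ := θ) rfl).mem_nhds hsJ] with τ hτ
      exact hkeyF τ hτ y0
    have hderiv_t : deriv (fun τ => ut τ y0) s
        = E * (-Real.sin θ / (auxDh θ s) ^ 2) * u (auxTb θ s) (E⁻¹ * y0 * (auxDh θ s)⁻¹)
          + E * (auxDh θ s)⁻¹
            * ((Real.cos θ - t * Real.sin θ) ^ 2 * deriv (fun τ => u τ x) t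
              + -(x * Real.sin θ * (Real.cos θ - t * Real.sin θ)) * deriv (fun y => u t y) x)
          + (y0 * Real.sin θ) * (-Real.sin θ / (auxDh θ s) ^ 2) := by
      rw [hEq.deriv_eq]
      exact houter.deriv
    rw [hTbs, hXs] at hderiv_t
    -- rewrite goal
    have ha2 : Real.arctan s = Real.arctan t + θ := by rw [hs]; exact l_arctan ht'
    have hq2 : Real.sqrt (s ^ 2 + 1)
        = Real.sqrt (t ^ 2 + 1) / (Real.cos θ - t * Real.sin θ) := by
      rw [hs]; exact l_sqrt ht'
    have hexp3 : Real.exp (δ * (Real.arctan t + θ)) = Real.exp (δ * Real.arctan t) * E ^ 3 := by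
      rw [hEdef, show δ * (Real.arctan t + θ) = δ * Real.arctan t + (3:ℕ) * (δ*θ/3) by
        push_cast; ring, Real.exp_add, Real.exp_nat_mul]
    rw [hderiv_t, hval, hderiv_y, ha2, hq2, hexp3, hitd, hDhs, inv_inv, hy0]
    have hp := hpde t x
    field_simp
    linear_combination (E * (Real.cos θ - t * Real.sin θ) ^ 3) * hp
end

section
/- Let I be an open interval, let h : I → ℝ be smooth, let H be an antiderivative of h on I, and let T be an antiderivative of e^{-H} on I. Let U : ℝ × ℝ → ℝ be a smooth solution of the KdV equation in canonical form U_t − 6 U U_x + U_{xxx} = 0. Then the function u(t,x) := −6 e^{−H(t)} U(T(t), x) is a smooth solution of u_t + u u_x + e^{−H(t)} u_{xxx} + h(t) u = 0 on I × ℝ. -/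
private lemma iterDeriv_cmul (c : ℝ) (f : ℝ → ℝ) (hf : ContDiff ℝ (⊤ : ℕ∞) f) :
    ∀ n : ℕ, iteratedDeriv n (fun y => c * f y) = fun y => c * iteratedDeriv n f y := by
  intro n
  induction n with
  | zero => simp
  | succ n ih =>
    funext x
    rw [iteratedDeriv_succ, ih, iteratedDeriv_succ]
    exact deriv_const_mul c
      ((hf.differentiable_iteratedDeriv n (by exact_mod_cast lt_top_iff_ne_top.2 (by simp))).differentiableAt)

/-- If U solves the canonical KdV equation U_t − 6UU_x + U_{xxx} = 0,
then u(t,x) = −6 e^{−H(t)} U(T(t), x), with H' = h and T' = e^{−H}, solves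
u_t + u u_x + e^{−H(t)} u_{xxx} + h(t) u = 0 on I × ℝ. -/
theorem stmt_13
    (I : Set ℝ) (hI : IsOpen I) (hIconv : Convex ℝ I)
    (h : ℝ → ℝ) (hh : ContDiffOn ℝ (⊤ : ℕ∞) h I)
    (H : ℝ → ℝ) (hH : ∀ t ∈ I, HasDerivAt H (h t) t)
    (T : ℝ → ℝ) (hT : ∀ t ∈ I, HasDerivAt T (Real.exp (-H t)) t)
    (U : ℝ → ℝ → ℝ)
    (hU : ContDiff ℝ (⊤ : ℕ∞) (fun p : ℝ × ℝ => U p.1 p.2))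
    (hUpde : ∀ t x : ℝ,
      deriv (fun τ => U τ x) t - 6 * U t x * deriv (fun y => U t y) x
        + iteratedDeriv 3 (fun y => U t y) x = 0)
    (u : ℝ → ℝ → ℝ)
    (hu : ∀ t x : ℝ, u t x = -6 * Real.exp (-H t) * U (T t) x) :
    ContDiffOn ℝ (⊤ : ℕ∞) (fun p : ℝ × ℝ => u p.1 p.2) (I ×ˢ Set.univ) ∧
    ∀ t ∈ I, ∀ x : ℝ,
      deriv (fun τ => u τ x) t + u t x * deriv (fun y => u t y) x
        + Real.exp (-H t) * iteratedDeriv 3 (fun y => u t y) x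
        + h t * u t x = 0 := by
  -- smoothness of H and T on I
  have hHs : ContDiffOn ℝ (⊤ : ℕ∞) H I := by
    rw [contDiffOn_infty_iff_deriv_of_isOpen hI]
    exact ⟨fun t ht => (hH t ht).differentiableAt.differentiableWithinAt,
      hh.congr fun t ht => (hH t ht).deriv⟩
  have hEs : ContDiffOn ℝ (⊤ : ℕ∞) (fun t => Real.exp (-H t)) I :=
    Real.contDiff_exp.comp_contDiffOn hHs.neg
  have hTs : ContDiffOn ℝ (⊤ : ℕ∞) T I := by
    rw [contDiffOn_infty_iff_deriv_of_isOpen hI]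
    exact ⟨fun t ht => (hT t ht).differentiableAt.differentiableWithinAt,
      hEs.congr fun t ht => (hT t ht).deriv⟩
  constructor
  · have : ContDiffOn ℝ (⊤ : ℕ∞)
        (fun p : ℝ × ℝ => -6 * Real.exp (-H p.1) * U (T p.1) p.2) (I ×ˢ Set.univ) := by
      apply ContDiffOn.mul
      · exact (contDiffOn_const.mul
          (hEs.comp contDiff_fst.contDiffOn (fun p hp => hp.1)))
      · exact hU.comp_contDiffOn
          (((hTs.comp contDiff_fst.contDiffOn (fun p hp => hp.1)).prodMk
            contDiff_snd.contDiffOn))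
    exact this.congr fun p _ => hu p.1 p.2
  · intro t ht x
    set E := Real.exp (-H t) with hE
    -- x-differentiability facts for U at time T t
    have hUx : ContDiff ℝ (⊤ : ℕ∞) (fun y => U (T t) y) :=
      hU.comp (contDiff_const.prodMk contDiff_id)
    have hUxd : DifferentiableAt ℝ (fun y => U (T t) y) x :=
      (hUx.differentiable (by simp)).differentiableAt
    -- x-derivative of u
    have hux : deriv (fun y => u t y) x = -6 * E * deriv (fun y => U (T t) y) x := by
      have : (fun y => u t y) = fun y => (-6 * E) * U (T t) y := funext fun y => hu t y
      rw [this, deriv_const_mul _ hUxd]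
    -- third x-derivative of u
    have huxxx : iteratedDeriv 3 (fun y => u t y) x
        = -6 * E * iteratedDeriv 3 (fun y => U (T t) y) x := by
      have : (fun y => u t y) = fun y => (-6 * E) * U (T t) y := funext fun y => hu t y
      rw [this, iterDeriv_cmul (-6 * E) _ hUx 3]
    -- t-derivative of u
    have hEd : HasDerivAt (fun τ => Real.exp (-H τ)) (E * -(h t)) t := (hH t ht).neg.exp
    have hUt : HasDerivAt (fun s => U s x) (deriv (fun s => U s x) (T t)) (T t) :=
      (((hU.comp (contDiff_id.prodMk contDiff_const)).differentiable (by simp)) (T t)).hasDerivAt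
    have hchain : HasDerivAt (fun τ => U (T τ) x)
        (deriv (fun s => U s x) (T t) * E) t := hUt.comp t (hT t ht)
    have hut : deriv (fun τ => u τ x) t
        = -6 * (E * -(h t)) * U (T t) x + -6 * E * (deriv (fun s => U s x) (T t) * E) := by
      have heq : (fun τ => u τ x) = fun τ => (-6 * Real.exp (-H τ)) * U (T τ) x :=
        funext fun τ => hu τ x
      rw [heq]
      exact ((hEd.const_mul (-6)).mul hchain).deriv
    rw [hut, hux, huxxx, hu t x]
    have hpde := hUpde (T t) x
    nlinarith [hpde, sq_nonneg E]
end

section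
/- Let I be an open interval, let h : I → ℝ be smooth, let H be an antiderivative of h on I, and let T be an antiderivative of e^{-H} on I. Let a₁, a₂ be real constants with a₁ + a₂ ≠ 0, let b₁, b₂ be positive real constants, and set A = ((a₁ − a₂)/(a₁ + a₂))², θᵢ(t,x) = aᵢ x − aᵢ³ T(t) for i = 1, 2. Then the function u(t,x) = 12 e^{−H(t)} ∂²/∂x² [ ln(1 + b₁ e^{θ₁(t,x)} + b₂ e^{θ₂(t,x)} + A b₁ b₂ e^{θ₁(t,x)+θ₂(t,x)}) ] is a smooth solution of u_t + u u_x + e^{−H(t)} u_{xxx} + h(t) u = 0 on I × ℝ. -/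
set_option maxHeartbeats 1000000

noncomputable def PP (a₁ a₂ b₁ b₂ A : ℝ) (n : ℕ) (s x : ℝ) : ℝ :=
  b₁ * a₁ ^ n * Real.exp (a₁ * x - a₁ ^ 3 * s) + b₂ * a₂ ^ n * Real.exp (a₂ * x - a₂ ^ 3 * s)
    + A * b₁ * b₂ * (a₁ + a₂) ^ n * Real.exp ((a₁ + a₂) * x - (a₁ ^ 3 + a₂ ^ 3) * s)

noncomputable def QQ (a₁ a₂ b₁ b₂ A : ℝ) (n : ℕ) (s x : ℝ) : ℝ :=
  b₁ * a₁ ^ (n + 3) * Real.exp (a₁ * x - a₁ ^ 3 * s)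
    + b₂ * a₂ ^ (n + 3) * Real.exp (a₂ * x - a₂ ^ 3 * s)
    + A * b₁ * b₂ * (a₁ + a₂) ^ n * (a₁ ^ 3 + a₂ ^ 3)
        * Real.exp ((a₁ + a₂) * x - (a₁ ^ 3 + a₂ ^ 3) * s)

noncomputable def FF (a₁ a₂ b₁ b₂ A : ℝ) (s x : ℝ) : ℝ := 1 + PP a₁ a₂ b₁ b₂ A 0 s x

noncomputable def GG (a₁ a₂ b₁ b₂ A : ℝ) (s x : ℝ) : ℝ :=
  PP a₁ a₂ b₁ b₂ A 2 s x / FF a₁ a₂ b₁ b₂ A s x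
    - (PP a₁ a₂ b₁ b₂ A 1 s x / FF a₁ a₂ b₁ b₂ A s x) ^ 2

noncomputable def GX (a₁ a₂ b₁ b₂ A : ℝ) (s x : ℝ) : ℝ :=
  PP a₁ a₂ b₁ b₂ A 3 s x / FF a₁ a₂ b₁ b₂ A s x
    - 3 * (PP a₁ a₂ b₁ b₂ A 1 s x * PP a₁ a₂ b₁ b₂ A 2 s x) / FF a₁ a₂ b₁ b₂ A s x ^ 2
    + 2 * PP a₁ a₂ b₁ b₂ A 1 s x ^ 3 / FF a₁ a₂ b₁ b₂ A s x ^ 3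

noncomputable def GXX (a₁ a₂ b₁ b₂ A : ℝ) (s x : ℝ) : ℝ :=
  PP a₁ a₂ b₁ b₂ A 4 s x / FF a₁ a₂ b₁ b₂ A s x
    - (4 * (PP a₁ a₂ b₁ b₂ A 1 s x * PP a₁ a₂ b₁ b₂ A 3 s x)
        + 3 * PP a₁ a₂ b₁ b₂ A 2 s x ^ 2) / FF a₁ a₂ b₁ b₂ A s x ^ 2
    + 12 * (PP a₁ a₂ b₁ b₂ A 1 s x ^ 2 * PP a₁ a₂ b₁ b₂ A 2 s x) / FF a₁ a₂ b₁ b₂ A s x ^ 3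
    - 6 * PP a₁ a₂ b₁ b₂ A 1 s x ^ 4 / FF a₁ a₂ b₁ b₂ A s x ^ 4

noncomputable def GXXX (a₁ a₂ b₁ b₂ A : ℝ) (s x : ℝ) : ℝ :=
  PP a₁ a₂ b₁ b₂ A 5 s x / FF a₁ a₂ b₁ b₂ A s x
    - (5 * (PP a₁ a₂ b₁ b₂ A 1 s x * PP a₁ a₂ b₁ b₂ A 4 s x)
        + 10 * (PP a₁ a₂ b₁ b₂ A 2 s x * PP a₁ a₂ b₁ b₂ A 3 s x)) / FF a₁ a₂ b₁ b₂ A s x ^ 2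
    + (20 * (PP a₁ a₂ b₁ b₂ A 1 s x ^ 2 * PP a₁ a₂ b₁ b₂ A 3 s x)
        + 30 * (PP a₁ a₂ b₁ b₂ A 1 s x * PP a₁ a₂ b₁ b₂ A 2 s x ^ 2)) / FF a₁ a₂ b₁ b₂ A s x ^ 3
    - 60 * (PP a₁ a₂ b₁ b₂ A 1 s x ^ 3 * PP a₁ a₂ b₁ b₂ A 2 s x) / FF a₁ a₂ b₁ b₂ A s x ^ 4
    + 24 * PP a₁ a₂ b₁ b₂ A 1 s x ^ 5 / FF a₁ a₂ b₁ b₂ A s x ^ 5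

noncomputable def GS (a₁ a₂ b₁ b₂ A : ℝ) (s x : ℝ) : ℝ :=
  -QQ a₁ a₂ b₁ b₂ A 2 s x / FF a₁ a₂ b₁ b₂ A s x
    + (PP a₁ a₂ b₁ b₂ A 2 s x * QQ a₁ a₂ b₁ b₂ A 0 s x
        + 2 * PP a₁ a₂ b₁ b₂ A 1 s x * QQ a₁ a₂ b₁ b₂ A 1 s x) / FF a₁ a₂ b₁ b₂ A s x ^ 2
    - 2 * PP a₁ a₂ b₁ b₂ A 1 s x ^ 2 * QQ a₁ a₂ b₁ b₂ A 0 s x / FF a₁ a₂ b₁ b₂ A s x ^ 3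

lemma master (F P₁ P₂ P₃ P₄ P₅ Q₀ Q₁ Q₂ : ℝ) (hF : F ≠ 0) :
    (-Q₂ / F + (P₂ * Q₀ + 2 * P₁ * Q₁) / F ^ 2 - 2 * P₁ ^ 2 * Q₀ / F ^ 3)
      + 12 * (P₂ / F - (P₁ / F) ^ 2) * (P₃ / F - 3 * (P₁ * P₂) / F ^ 2 + 2 * P₁ ^ 3 / F ^ 3)
      + (P₅ / F - (5 * (P₁ * P₄) + 10 * (P₂ * P₃)) / F ^ 2
          + (20 * (P₁ ^ 2 * P₃) + 30 * (P₁ * P₂ ^ 2)) / F ^ 3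
          - 60 * (P₁ ^ 3 * P₂) / F ^ 4 + 24 * P₁ ^ 5 / F ^ 5)
    = ((F * (P₅ - Q₂) + P₂ * Q₀ - 3 * P₁ * P₄ + 2 * P₂ * P₃) * F
        - 2 * P₁ * (-F * Q₁ + P₁ * Q₀ + F * P₄ - 4 * P₁ * P₃ + 3 * P₂ ^ 2)) / F ^ 3 := by
  field_simp
  ring

lemma hasDerivAt_explin (c d x : ℝ) :
    HasDerivAt (fun y => Real.exp (c * y - d)) (c * Real.exp (c * x - d)) x := by
  have h : HasDerivAt (fun y : ℝ => c * y - d) c x := by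
    simpa using ((hasDerivAt_id x).const_mul c).sub_const d
  simpa [mul_comm] using h.exp

lemma hasDerivAt_explin_s (c d s : ℝ) :
    HasDerivAt (fun σ => Real.exp (c - d * σ)) (-(d * Real.exp (c - d * s))) s := by
  have h : HasDerivAt (fun σ : ℝ => c - d * σ) (-d) s := by
    simpa using ((hasDerivAt_id s).const_mul d).const_sub c
  have h2 := h.exp
  convert h2 using 1
  ring

lemma hasDerivAt_PP_x (a₁ a₂ b₁ b₂ A : ℝ) (n : ℕ) (s x : ℝ) :
    HasDerivAt (fun y => PP a₁ a₂ b₁ b₂ A n s y) (PP a₁ a₂ b₁ b₂ A (n + 1) s x) x := by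
  have h1 := (hasDerivAt_explin a₁ (a₁ ^ 3 * s) x).const_mul (b₁ * a₁ ^ n)
  have h2 := (hasDerivAt_explin a₂ (a₂ ^ 3 * s) x).const_mul (b₂ * a₂ ^ n)
  have h3 := (hasDerivAt_explin (a₁ + a₂) ((a₁ ^ 3 + a₂ ^ 3) * s) x).const_mul
    (A * b₁ * b₂ * (a₁ + a₂) ^ n)
  have h := (h1.add h2).add h3
  simp only [PP]
  refine h.congr_deriv ?_
  ring

lemma hasDerivAt_FF_x (a₁ a₂ b₁ b₂ A : ℝ) (s x : ℝ) :
    HasDerivAt (fun y => FF a₁ a₂ b₁ b₂ A s y) (PP a₁ a₂ b₁ b₂ A 1 s x) x := by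
  simp only [FF]
  simpa using (hasDerivAt_PP_x a₁ a₂ b₁ b₂ A 0 s x).const_add 1

lemma hasDerivAt_PP_s (a₁ a₂ b₁ b₂ A : ℝ) (n : ℕ) (s x : ℝ) :
    HasDerivAt (fun σ => PP a₁ a₂ b₁ b₂ A n σ x) (-QQ a₁ a₂ b₁ b₂ A n s x) s := by
  have h1 := (hasDerivAt_explin_s (a₁ * x) (a₁ ^ 3) s).const_mul (b₁ * a₁ ^ n)
  have h2 := (hasDerivAt_explin_s (a₂ * x) (a₂ ^ 3) s).const_mul (b₂ * a₂ ^ n)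
  have h3 := (hasDerivAt_explin_s ((a₁ + a₂) * x) (a₁ ^ 3 + a₂ ^ 3) s).const_mul
    (A * b₁ * b₂ * (a₁ + a₂) ^ n)
  have h := (h1.add h2).add h3
  simp only [PP, QQ]
  refine h.congr_deriv ?_
  ring

lemma hasDerivAt_FF_s (a₁ a₂ b₁ b₂ A : ℝ) (s x : ℝ) :
    HasDerivAt (fun σ => FF a₁ a₂ b₁ b₂ A σ x) (-QQ a₁ a₂ b₁ b₂ A 0 s x) s := by
  simp only [FF]
  exact (hasDerivAt_PP_s a₁ a₂ b₁ b₂ A 0 s x).const_add 1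

lemma FF_pos (a₁ a₂ b₁ b₂ A : ℝ) (hA : 0 ≤ A) (hb₁ : 0 < b₁) (hb₂ : 0 < b₂) (s x : ℝ) :
    0 < FF a₁ a₂ b₁ b₂ A s x := by
  simp only [FF, PP, pow_zero, mul_one, one_mul]
  positivity

lemma hasDerivAt_GG_x (a₁ a₂ b₁ b₂ A : ℝ) (s x : ℝ) (hF : FF a₁ a₂ b₁ b₂ A s x ≠ 0) :
    HasDerivAt (fun y => GG a₁ a₂ b₁ b₂ A s y) (GX a₁ a₂ b₁ b₂ A s x) x := by
  have h2 := (hasDerivAt_PP_x a₁ a₂ b₁ b₂ A 2 s x).div (hasDerivAt_FF_x a₁ a₂ b₁ b₂ A s x) hF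
  have h1 := (hasDerivAt_PP_x a₁ a₂ b₁ b₂ A 1 s x).div (hasDerivAt_FF_x a₁ a₂ b₁ b₂ A s x) hF
  have h := h2.sub (h1.pow 2)
  norm_num at h
  simp only [GG, GX]
  refine h.congr_deriv ?_
  field_simp
  ring

lemma hasDerivAt_GX_x (a₁ a₂ b₁ b₂ A : ℝ) (s x : ℝ) (hF : FF a₁ a₂ b₁ b₂ A s x ≠ 0) :
    HasDerivAt (fun y => GX a₁ a₂ b₁ b₂ A s y) (GXX a₁ a₂ b₁ b₂ A s x) x := by
  have t1 := (hasDerivAt_PP_x a₁ a₂ b₁ b₂ A 3 s x).div (hasDerivAt_FF_x a₁ a₂ b₁ b₂ A s x) hF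
  have t2 := (((hasDerivAt_PP_x a₁ a₂ b₁ b₂ A 1 s x).mul
      (hasDerivAt_PP_x a₁ a₂ b₁ b₂ A 2 s x)).const_mul (3 : ℝ)).div
      ((hasDerivAt_FF_x a₁ a₂ b₁ b₂ A s x).pow 2) (pow_ne_zero 2 hF)
  have t3 := (((hasDerivAt_PP_x a₁ a₂ b₁ b₂ A 1 s x).pow 3).const_mul (2 : ℝ)).div
      ((hasDerivAt_FF_x a₁ a₂ b₁ b₂ A s x).pow 3) (pow_ne_zero 3 hF)
  have h := (t1.sub t2).add t3
  norm_num at h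
  simp only [GX, GXX]
  refine h.congr_deriv ?_
  field_simp
  ring

lemma hasDerivAt_GXX_x (a₁ a₂ b₁ b₂ A : ℝ) (s x : ℝ) (hF : FF a₁ a₂ b₁ b₂ A s x ≠ 0) :
    HasDerivAt (fun y => GXX a₁ a₂ b₁ b₂ A s y) (GXXX a₁ a₂ b₁ b₂ A s x) x := by
  have t1 := (hasDerivAt_PP_x a₁ a₂ b₁ b₂ A 4 s x).div (hasDerivAt_FF_x a₁ a₂ b₁ b₂ A s x) hF
  have t2 := ((((hasDerivAt_PP_x a₁ a₂ b₁ b₂ A 1 s x).mul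
      (hasDerivAt_PP_x a₁ a₂ b₁ b₂ A 3 s x)).const_mul (4 : ℝ)).add
      (((hasDerivAt_PP_x a₁ a₂ b₁ b₂ A 2 s x).pow 2).const_mul (3 : ℝ))).div
      ((hasDerivAt_FF_x a₁ a₂ b₁ b₂ A s x).pow 2) (pow_ne_zero 2 hF)
  have t3 := ((((hasDerivAt_PP_x a₁ a₂ b₁ b₂ A 1 s x).pow 2).mul
      (hasDerivAt_PP_x a₁ a₂ b₁ b₂ A 2 s x)).const_mul (12 : ℝ)).div
      ((hasDerivAt_FF_x a₁ a₂ b₁ b₂ A s x).pow 3) (pow_ne_zero 3 hF)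
  have t4 := (((hasDerivAt_PP_x a₁ a₂ b₁ b₂ A 1 s x).pow 4).const_mul (6 : ℝ)).div
      ((hasDerivAt_FF_x a₁ a₂ b₁ b₂ A s x).pow 4) (pow_ne_zero 4 hF)
  have h := ((t1.sub t2).add t3).sub t4
  norm_num at h
  simp only [GXX, GXXX]
  refine h.congr_deriv ?_
  field_simp
  ring

lemma hasDerivAt_GG_s (a₁ a₂ b₁ b₂ A : ℝ) (s x : ℝ) (hF : FF a₁ a₂ b₁ b₂ A s x ≠ 0) :
    HasDerivAt (fun σ => GG a₁ a₂ b₁ b₂ A σ x) (GS a₁ a₂ b₁ b₂ A s x) s := by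
  have h2 := (hasDerivAt_PP_s a₁ a₂ b₁ b₂ A 2 s x).div (hasDerivAt_FF_s a₁ a₂ b₁ b₂ A s x) hF
  have h1 := (hasDerivAt_PP_s a₁ a₂ b₁ b₂ A 1 s x).div (hasDerivAt_FF_s a₁ a₂ b₁ b₂ A s x) hF
  have h := h2.sub (h1.pow 2)
  norm_num at h
  simp only [GG, GS]
  refine h.congr_deriv ?_
  field_simp
  ring

lemma key (a₁ a₂ b₁ b₂ A : ℝ) (ha : a₁ + a₂ ≠ 0) (hA : A = ((a₁ - a₂) / (a₁ + a₂)) ^ 2)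
    (hb₁ : 0 < b₁) (hb₂ : 0 < b₂) (s x : ℝ) :
    GS a₁ a₂ b₁ b₂ A s x + 12 * GG a₁ a₂ b₁ b₂ A s x * GX a₁ a₂ b₁ b₂ A s x
      + GXXX a₁ a₂ b₁ b₂ A s x = 0 := by
  have hA0 : 0 ≤ A := by rw [hA]; positivity
  have hF := (FF_pos a₁ a₂ b₁ b₂ A hA0 hb₁ hb₂ s x).ne'
  have hcross : Real.exp ((a₁ + a₂) * x - (a₁ ^ 3 + a₂ ^ 3) * s)
      = Real.exp (a₁ * x - a₁ ^ 3 * s) * Real.exp (a₂ * x - a₂ ^ 3 * s) := by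
    rw [← Real.exp_add]; ring_nf
  have hR : -FF a₁ a₂ b₁ b₂ A s x * QQ a₁ a₂ b₁ b₂ A 1 s x
      + PP a₁ a₂ b₁ b₂ A 1 s x * QQ a₁ a₂ b₁ b₂ A 0 s x
      + FF a₁ a₂ b₁ b₂ A s x * PP a₁ a₂ b₁ b₂ A 4 s x
      - 4 * PP a₁ a₂ b₁ b₂ A 1 s x * PP a₁ a₂ b₁ b₂ A 3 s x
      + 3 * PP a₁ a₂ b₁ b₂ A 2 s x ^ 2 = 0 := by
    simp only [FF, PP, QQ]
    rw [hcross, hA]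
    field_simp
    ring
  have hRX : FF a₁ a₂ b₁ b₂ A s x * (PP a₁ a₂ b₁ b₂ A 5 s x - QQ a₁ a₂ b₁ b₂ A 2 s x)
      + PP a₁ a₂ b₁ b₂ A 2 s x * QQ a₁ a₂ b₁ b₂ A 0 s x
      - 3 * PP a₁ a₂ b₁ b₂ A 1 s x * PP a₁ a₂ b₁ b₂ A 4 s x
      + 2 * PP a₁ a₂ b₁ b₂ A 2 s x * PP a₁ a₂ b₁ b₂ A 3 s x = 0 := by
    simp only [FF, PP, QQ]
    rw [hcross, hA]
    field_simp
    ring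
  have hM := master (FF a₁ a₂ b₁ b₂ A s x) (PP a₁ a₂ b₁ b₂ A 1 s x) (PP a₁ a₂ b₁ b₂ A 2 s x)
    (PP a₁ a₂ b₁ b₂ A 3 s x) (PP a₁ a₂ b₁ b₂ A 4 s x) (PP a₁ a₂ b₁ b₂ A 5 s x)
    (QQ a₁ a₂ b₁ b₂ A 0 s x) (QQ a₁ a₂ b₁ b₂ A 1 s x) (QQ a₁ a₂ b₁ b₂ A 2 s x) hF
  simp only [GS, GG, GX, GXXX]
  rw [hM, hRX, hR]
  simp

/-- The two-soliton type solution
u = 12 e^{−H(t)} ∂²ₓ ln(1 + b₁e^{θ₁} + b₂e^{θ₂} + A b₁b₂ e^{θ₁+θ₂}), with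
θᵢ = aᵢx − aᵢ³T(t), A = ((a₁−a₂)/(a₁+a₂))², H' = h, T' = e^{−H}, is a smooth
solution of u_t + u u_x + e^{−H(t)} u_{xxx} + h(t) u = 0 on I × ℝ. -/
theorem stmt_14
    (I : Set ℝ) (hI : IsOpen I) (hIconv : Convex ℝ I)
    (h : ℝ → ℝ) (hh : ContDiffOn ℝ (⊤ : ℕ∞) h I)
    (H : ℝ → ℝ) (hH : ∀ t ∈ I, HasDerivAt H (h t) t)
    (T : ℝ → ℝ) (hT : ∀ t ∈ I, HasDerivAt T (Real.exp (-H t)) t)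
    (a₁ a₂ : ℝ) (ha : a₁ + a₂ ≠ 0)
    (b₁ b₂ : ℝ) (hb₁ : 0 < b₁) (hb₂ : 0 < b₂)
    (A : ℝ) (hA : A = ((a₁ - a₂) / (a₁ + a₂)) ^ 2)
    (θ₁ θ₂ : ℝ → ℝ → ℝ)
    (hθ₁ : ∀ t x : ℝ, θ₁ t x = a₁ * x - a₁ ^ 3 * T t)
    (hθ₂ : ∀ t x : ℝ, θ₂ t x = a₂ * x - a₂ ^ 3 * T t)
    (u : ℝ → ℝ → ℝ)
    (hu : ∀ t x : ℝ,
      u t x = 12 * Real.exp (-H t) * iteratedDeriv 2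
        (fun y => Real.log (1 + b₁ * Real.exp (θ₁ t y) + b₂ * Real.exp (θ₂ t y)
          + A * b₁ * b₂ * Real.exp (θ₁ t y + θ₂ t y))) x) :
    ContDiffOn ℝ (⊤ : ℕ∞) (fun p : ℝ × ℝ => u p.1 p.2) (I ×ˢ Set.univ) ∧
    ∀ t ∈ I, ∀ x : ℝ,
      deriv (fun τ => u τ x) t + u t x * deriv (fun y => u t y) x
        + Real.exp (-H t) * iteratedDeriv 3 (fun y => u t y) x
        + h t * u t x = 0 := by
  have hA0 : 0 ≤ A := by rw [hA]; positivity
  have hFpos : ∀ s x : ℝ, 0 < FF a₁ a₂ b₁ b₂ A s x :=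
    fun s x => FF_pos a₁ a₂ b₁ b₂ A hA0 hb₁ hb₂ s x
  -- u in closed form
  have hueq : ∀ t x : ℝ, u t x = 12 * Real.exp (-H t) * GG a₁ a₂ b₁ b₂ A (T t) x := by
    intro t x
    rw [hu]
    congr 1
    have hfun : (fun y => Real.log (1 + b₁ * Real.exp (θ₁ t y) + b₂ * Real.exp (θ₂ t y)
        + A * b₁ * b₂ * Real.exp (θ₁ t y + θ₂ t y)))
        = fun y => Real.log (FF a₁ a₂ b₁ b₂ A (T t) y) := by
      funext y
      rw [hθ₁, hθ₂, show a₁ * y - a₁ ^ 3 * T t + (a₂ * y - a₂ ^ 3 * T t)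
        = (a₁ + a₂) * y - (a₁ ^ 3 + a₂ ^ 3) * T t from by ring]
      congr 1
      simp only [FF, PP]
      ring
    rw [hfun]
    rw [show (2 : ℕ) = 1 + 1 from rfl, iteratedDeriv_succ, iteratedDeriv_one]
    have hd1 : deriv (fun y => Real.log (FF a₁ a₂ b₁ b₂ A (T t) y))
        = fun y => PP a₁ a₂ b₁ b₂ A 1 (T t) y / FF a₁ a₂ b₁ b₂ A (T t) y := by
      funext y
      exact ((hasDerivAt_FF_x a₁ a₂ b₁ b₂ A (T t) y).log (hFpos (T t) y).ne').deriv
    rw [hd1]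
    have hd2 := ((hasDerivAt_PP_x a₁ a₂ b₁ b₂ A 1 (T t) x).div
      (hasDerivAt_FF_x a₁ a₂ b₁ b₂ A (T t) x) (hFpos (T t) x).ne')
    norm_num at hd2
    rw [show (fun y => PP a₁ a₂ b₁ b₂ A 1 (T t) y / FF a₁ a₂ b₁ b₂ A (T t) y) = ((fun y => PP a₁ a₂ b₁ b₂ A 1 (T t) y) / fun y => FF a₁ a₂ b₁ b₂ A (T t) y) from rfl, hd2.deriv]
    simp only [GG]
    field_simp [(hFpos (T t) x).ne']
  constructor
  · -- smoothness
    have hHsm : ContDiffOn ℝ (⊤ : ℕ∞) H I := by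
      rw [contDiffOn_infty_iff_deriv_of_isOpen hI]
      exact ⟨fun t ht => (hH t ht).differentiableAt.differentiableWithinAt,
        hh.congr fun t ht => (hH t ht).deriv⟩
    have hTsm : ContDiffOn ℝ (⊤ : ℕ∞) T I := by
      rw [contDiffOn_infty_iff_deriv_of_isOpen hI]
      refine ⟨fun t ht => (hT t ht).differentiableAt.differentiableWithinAt, ?_⟩
      exact (Real.contDiff_exp.comp_contDiffOn hHsm.neg).congr fun t ht => (hT t ht).deriv
    have hPc : ∀ n : ℕ, ContDiff ℝ (⊤ : ℕ∞) (fun p : ℝ × ℝ => PP a₁ a₂ b₁ b₂ A n p.1 p.2) := by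
      intro n
      have he : ∀ c d : ℝ, ContDiff ℝ (⊤ : ℕ∞) (fun p : ℝ × ℝ => Real.exp (c * p.2 - d * p.1)) :=
        fun c d => Real.contDiff_exp.comp (by fun_prop)
      simp only [PP]
      exact ((contDiff_const.mul (he a₁ (a₁ ^ 3))).add
        (contDiff_const.mul (he a₂ (a₂ ^ 3)))).add
        (contDiff_const.mul (he (a₁ + a₂) (a₁ ^ 3 + a₂ ^ 3)))
    have hFc : ContDiff ℝ (⊤ : ℕ∞) (fun p : ℝ × ℝ => FF a₁ a₂ b₁ b₂ A p.1 p.2) := by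
      simp only [FF]
      exact contDiff_const.add (hPc 0)
    have hGGc : ContDiff ℝ (⊤ : ℕ∞) (fun p : ℝ × ℝ => GG a₁ a₂ b₁ b₂ A p.1 p.2) := by
      have hg1 : ContDiff ℝ (⊤ : ℕ∞) (fun p : ℝ × ℝ => PP a₁ a₂ b₁ b₂ A 2 p.1 p.2
          / FF a₁ a₂ b₁ b₂ A p.1 p.2) :=
        (hPc 2).div hFc fun p => (hFpos p.1 p.2).ne'
      have hg2 : ContDiff ℝ (⊤ : ℕ∞) (fun p : ℝ × ℝ => (PP a₁ a₂ b₁ b₂ A 1 p.1 p.2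
          / FF a₁ a₂ b₁ b₂ A p.1 p.2) ^ 2) :=
        ((hPc 1).div hFc fun p => (hFpos p.1 p.2).ne').pow 2
      have := hg1.sub hg2
      simp only [GG]
      exact this
    have h1 : ContDiffOn ℝ (⊤ : ℕ∞) (fun p : ℝ × ℝ => Real.exp (-H p.1)) (I ×ˢ Set.univ) :=
      Real.contDiff_exp.comp_contDiffOn
        ((hHsm.comp contDiff_fst.contDiffOn fun p hp => hp.1).neg)
    have hinner : ContDiffOn ℝ (⊤ : ℕ∞) (fun p : ℝ × ℝ => ((T p.1, p.2) : ℝ × ℝ))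
        (I ×ˢ Set.univ) :=
      (hTsm.comp contDiff_fst.contDiffOn fun p hp => hp.1).prodMk contDiff_snd.contDiffOn
    have h2' := hGGc.comp_contDiffOn hinner
    have h2 : ContDiffOn ℝ (⊤ : ℕ∞) (fun p : ℝ × ℝ => GG a₁ a₂ b₁ b₂ A (T p.1) p.2)
        (I ×ˢ Set.univ) := h2'.congr fun p _ => rfl
    have hmodel : ContDiffOn ℝ (⊤ : ℕ∞)
        (fun p : ℝ × ℝ => 12 * Real.exp (-H p.1) * GG a₁ a₂ b₁ b₂ A (T p.1) p.2)
        (I ×ˢ Set.univ) := (contDiffOn_const.mul h1).mul h2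
    exact hmodel.congr fun p _ => hueq p.1 p.2
  · -- the PDE
    intro t ht x
    have hne : ∀ x' : ℝ, FF a₁ a₂ b₁ b₂ A (T t) x' ≠ 0 := fun x' => (hFpos _ _).ne'
    have hx_fun : (fun y => u t y) = fun y => 12 * Real.exp (-H t) * GG a₁ a₂ b₁ b₂ A (T t) y :=
      funext fun y => hueq t y
    have hdu1 : deriv (fun y => u t y) x
        = 12 * Real.exp (-H t) * GX a₁ a₂ b₁ b₂ A (T t) x := by
      rw [hx_fun]
      exact ((hasDerivAt_GG_x a₁ a₂ b₁ b₂ A (T t) x (hne x)).const_mul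
        (12 * Real.exp (-H t))).deriv
    have hderiv1 : deriv (fun y => 12 * Real.exp (-H t) * GG a₁ a₂ b₁ b₂ A (T t) y)
        = fun y => 12 * Real.exp (-H t) * GX a₁ a₂ b₁ b₂ A (T t) y :=
      funext fun y => ((hasDerivAt_GG_x a₁ a₂ b₁ b₂ A (T t) y (hne y)).const_mul
        (12 * Real.exp (-H t))).deriv
    have hderiv2 : deriv (fun y => 12 * Real.exp (-H t) * GX a₁ a₂ b₁ b₂ A (T t) y)
        = fun y => 12 * Real.exp (-H t) * GXX a₁ a₂ b₁ b₂ A (T t) y :=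
      funext fun y => ((hasDerivAt_GX_x a₁ a₂ b₁ b₂ A (T t) y (hne y)).const_mul
        (12 * Real.exp (-H t))).deriv
    have hdu3 : iteratedDeriv 3 (fun y => u t y) x
        = 12 * Real.exp (-H t) * GXXX a₁ a₂ b₁ b₂ A (T t) x := by
      rw [hx_fun, show (3 : ℕ) = 1 + 1 + 1 from rfl, iteratedDeriv_succ, iteratedDeriv_succ,
        iteratedDeriv_one, hderiv1, hderiv2]
      exact ((hasDerivAt_GXX_x a₁ a₂ b₁ b₂ A (T t) x (hne x)).const_mul
        (12 * Real.exp (-H t))).deriv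
    have ht_fun : (fun τ => u τ x) = fun τ => 12 * Real.exp (-H τ) * GG a₁ a₂ b₁ b₂ A (T τ) x :=
      funext fun τ => hueq τ x
    have hexp : HasDerivAt (fun τ => Real.exp (-H τ)) (Real.exp (-H t) * -h t) t :=
      ((hH t ht).neg).exp
    have hGs : HasDerivAt (fun τ => GG a₁ a₂ b₁ b₂ A (T τ) x)
        (GS a₁ a₂ b₁ b₂ A (T t) x * Real.exp (-H t)) t := by
      have := (hasDerivAt_GG_s a₁ a₂ b₁ b₂ A (T t) x (hne x)).comp t (hT t ht)
      exact this
    have hprod := (hexp.const_mul (12 : ℝ)).mul hGs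
    have hdut : deriv (fun τ => u τ x) t
        = 12 * (Real.exp (-H t) * -h t) * GG a₁ a₂ b₁ b₂ A (T t) x
          + 12 * Real.exp (-H t) * (GS a₁ a₂ b₁ b₂ A (T t) x * Real.exp (-H t)) := by
      rw [ht_fun]
      exact hprod.deriv
    rw [hdut, hdu1, hdu3, hueq t x]
    have hk := key a₁ a₂ b₁ b₂ A ha hA hb₁ hb₂ (T t) x
    linear_combination (12 * Real.exp (-H t) ^ 2) * hk
end
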